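/- arXiv:2409.09142 — 9 statements merged into one kernel-verified Lean document; each statement's English description precedes it below -/
import Mathlib

section
/- Let W be a finite-dimensional real vector space with a symmetric bilinear form q of signature (2, m−2), where m = dim W ≥ 2. Then the set {y ∈ W_ℂ : q(y,y) = 0 and q(y,ȳ) > 0} has exactly two connected components. -/
open Complex

/-- `q` has signature `(p, m)`: `V` admits a `q`-orthogonal direct sum decomposition
`V = P ⊕ N` with `dim P = p`, `dim N = m`, `q` positive definite on `P` and
negative definite on `N`. -/
def HasSignature {V : Type*} [AddCommGroup V] [Module ℝ V]
    (q : LinearMap.BilinForm ℝ V) (p m : ℕ) : Prop :=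
  ∃ P N : Submodule ℝ V, IsCompl P N ∧
    (∀ x ∈ P, ∀ y ∈ N, q x y = 0) ∧
    Module.finrank ℝ ↥P = p ∧ Module.finrank ℝ ↥N = m ∧
    (∀ x ∈ P, x ≠ 0 → 0 < q x x) ∧
    (∀ y ∈ N, y ≠ 0 → q y y < 0)

set_option maxHeartbeats 1000000 in
/-- if `q` has signature `(2, m-2)` on `W` with `m = dim W ≥ 2`, then the set
`{y ∈ W_ℂ : q(y,y) = 0, q(y,ȳ) > 0}` has exactly two connected components.
Here `WC` is the complexification of `W`, with real points `j`, conjugation `cj`,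
and `Q` the ℂ-bilinear extension of `q`. -/
theorem two_connected_components_of_period_cone
    {W : Type*} [AddCommGroup W] [Module ℝ W] [FiniteDimensional ℝ W]
    (q : LinearMap.BilinForm ℝ W) (hsymm : ∀ x y : W, q x y = q y x)
    (m : ℕ) (hm : Module.finrank ℝ W = m) (hm2 : 2 ≤ m)
    (hsig : HasSignature q 2 (m - 2))
    {WC : Type*} [NormedAddCommGroup WC] [NormedSpace ℂ WC]
    (j : W →ₗ[ℝ] WC)
    (hspan : ∀ z : WC, ∃ a b : W, z = j a + I • j b)
    (hindep : ∀ a b : W, j a + I • j b = 0 → a = 0 ∧ b = 0)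
    (cj : WC →ₗ[ℝ] WC)
    (hcj : ∀ a b : W, cj (j a + I • j b) = j a - I • j b)
    (Q : LinearMap.BilinForm ℂ WC)
    (hQ : ∀ a b : W, Q (j a) (j b) = (q a b : ℂ)) :
    Nonempty (ConnectedComponents
      {y : WC // Q y y = 0 ∧ 0 < (Q y (cj y)).re ∧ (Q y (cj y)).im = 0} ≃ Fin 2) := by

  classical
  obtain ⟨P, N, hcompl, horth, hP2, hNm, hpos, hneg⟩ := hsig
  have horth' : ∀ x ∈ N, ∀ y ∈ P, q x y = 0 := fun x hx y hy => (hsymm x y).trans (horth y hy x hx)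
  have hdec : ∀ w : W, ∃ wp wn, wp ∈ P ∧ wn ∈ N ∧ w = wp + wn := by
    intro w
    obtain ⟨p, n, hp, hn, h⟩ := Submodule.codisjoint_iff_exists_add_eq.mp hcompl.codisjoint w
    exact ⟨p, n, hp, hn, h.symm⟩
  have hposle : ∀ x ∈ P, 0 ≤ q x x := by
    intro x hx
    rcases eq_or_ne x 0 with h | h
    · simp [h]
    · exact (hpos x hx h).le
  have hnegle : ∀ x ∈ N, q x x ≤ 0 := by
    intro x hx
    rcases eq_or_ne x 0 with h | h
    · simp [h]
    · exact (hneg x hx h).le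
  have hnorm : ∀ w : W, 0 < q w w →
      q ((Real.sqrt (q w w))⁻¹ • w) ((Real.sqrt (q w w))⁻¹ • w) = 1 := by
    intro w hw
    have h1 : Real.sqrt (q w w) * Real.sqrt (q w w) = q w w := Real.mul_self_sqrt hw.le
    have h2 : q w w ≠ 0 := ne_of_gt hw
    simp only [map_smul, LinearMap.smul_apply, smul_eq_mul]
    rw [← mul_assoc, ← mul_inv, h1, inv_mul_cancel₀ h2]
  -- orthonormal basis of P
  obtain ⟨e1, e2, he1, he2, h11, h22, h12, hrep⟩ :
      ∃ e1 e2 : W, e1 ∈ P ∧ e2 ∈ P ∧ q e1 e1 = 1 ∧ q e2 e2 = 1 ∧ q e1 e2 = 0 ∧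
        ∀ p ∈ P, p = q e1 p • e1 + q e2 p • e2 := by
    classical
    set bP := Module.finBasisOfFinrankEq ℝ ↥P hP2 with hbP
    set v1 : W := (bP 0 : W) with hv1def
    set v2 : W := (bP 1 : W) with hv2def
    have hv1P : v1 ∈ P := (bP 0).2
    have hv2P : v2 ∈ P := (bP 1).2
    have hindep12 : ∀ s t : ℝ, s • v1 + t • v2 = 0 → s = 0 ∧ t = 0 := by
      intro s t hst
      have hli := bP.linearIndependent
      rw [Fintype.linearIndependent_iff] at hli
      have h0 : (s • bP 0 + t • bP 1 : ↥P) = 0 := by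
        apply Subtype.ext
        simpa [hv1def, hv2def] using hst
      have := hli ![s, t] (by simpa [Fin.sum_univ_two] using h0)
      exact ⟨this 0, this 1⟩
    have hv1ne : v1 ≠ 0 := by
      intro h
      exact one_ne_zero (hindep12 1 0 (by simp [h])).1
    have q1 : 0 < q v1 v1 := hpos v1 hv1P hv1ne
    set r1 : ℝ := (Real.sqrt (q v1 v1))⁻¹ with hr1
    set e1 : W := r1 • v1 with he1def
    have he1P : e1 ∈ P := P.smul_mem _ hv1P
    have h11 : q e1 e1 = 1 := hnorm v1 q1
    have hr1ne : r1 ≠ 0 := by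
      rw [hr1]
      exact inv_ne_zero (ne_of_gt (Real.sqrt_pos.mpr q1))
    set c : ℝ := q e1 v2 with hc
    set w2 : W := v2 - c • e1 with hw2def
    have hw2P : w2 ∈ P := P.sub_mem hv2P (P.smul_mem _ he1P)
    have hw2ne : w2 ≠ 0 := by
      intro h
      have : (c * r1) • v1 + (-1 : ℝ) • v2 = 0 := by
        rw [hw2def, he1def] at h
        rw [sub_eq_zero] at h
        rw [h]
        module
      exact one_ne_zero (neg_eq_zero.mp (hindep12 _ _ this).2)
    have q2 : 0 < q w2 w2 := hpos w2 hw2P hw2ne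
    set r2 : ℝ := (Real.sqrt (q w2 w2))⁻¹ with hr2
    set e2 : W := r2 • w2 with he2def
    have he2P : e2 ∈ P := P.smul_mem _ hw2P
    have h22 : q e2 e2 = 1 := hnorm w2 q2
    have h1w2 : q e1 w2 = 0 := by
      rw [hw2def]
      simp only [map_sub, map_smul, smul_eq_mul]
      rw [h11, hc]
      ring
    have h12 : q e1 e2 = 0 := by
      rw [he2def]
      simp only [map_smul, smul_eq_mul]
      rw [h1w2, mul_zero]
    -- linear independence of e1 e2
    have hli : LinearIndependent ℝ ![e1, e2] := by
      rw [LinearIndependent.pair_iff]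
      intro s t hst
      have hq1 : q e1 (s • e1 + t • e2) = s := by
        simp only [map_add, map_smul, smul_eq_mul, h11, h12]
        ring
      have hq2 : q e2 (s • e1 + t • e2) = t := by
        simp only [map_add, map_smul, smul_eq_mul, h22]
        rw [(hsymm e2 e1).trans h12]
        ring
      rw [hst] at hq1 hq2
      simp only [map_zero] at hq1 hq2
      exact ⟨hq1.symm, hq2.symm⟩
    have hspan : Submodule.span ℝ {e1, e2} = P := by
      apply Submodule.eq_of_le_of_finrank_le
      · rw [Submodule.span_le]
        intro x hx
        rcases hx with h | h
        · rw [h]; exact he1P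
        · rw [Set.mem_singleton_iff] at h; rw [h]; exact he2P
      · rw [hP2]
        have hr : ({e1, e2} : Set W) = Set.range ![e1, e2] := by
          simp [Matrix.range_cons, Matrix.range_empty, Set.pair_comm e1 e2]
        rw [hr, finrank_span_eq_card hli]
        simp
    refine ⟨e1, e2, he1P, he2P, h11, h22, h12, ?_⟩
    intro p hp
    rw [← hspan] at hp
    obtain ⟨s, t, hst⟩ := Submodule.mem_span_pair.mp hp
    have hs : q e1 p = s := by
      rw [← hst]
      simp only [map_add, map_smul, smul_eq_mul, h11, h12]
      ring
    have ht : q e2 p = t := by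
      rw [← hst]
      simp only [map_add, map_smul, smul_eq_mul, h22]
      rw [(hsymm e2 e1).trans h12]
      ring
    rw [hs, ht, hst]

  have h21 : q e2 e1 = 0 := (hsymm e2 e1).trans h12
  have hfinR : FiniteDimensional ℝ WC := by
    let L : W × W →ₗ[ℝ] WC :=
      { toFun := fun p => j p.1 + I • j p.2
        map_add' := by
          intro p p'
          simp only [Prod.fst_add, Prod.snd_add, map_add, smul_add]
          abel
        map_smul' := by
          intro c p
          simp only [Prod.smul_fst, Prod.smul_snd, map_smul, RingHom.id_apply, smul_add]
          rw [smul_comm c I] }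
    exact Module.Finite.of_surjective L (fun z => by
      obtain ⟨a, b, h⟩ := hspan z
      exact ⟨(a, b), h.symm⟩)
  have hfinC : FiniteDimensional ℂ WC := Module.Finite.of_restrictScalars_finite ℝ ℂ WC
  have key : ∀ a b a' b' : W, Q (j a + I • j b) (j a' + I • j b')
      = ((q a a' - q b b' : ℝ) : ℂ) + ((q a b' + q b a' : ℝ) : ℂ) * I := by
    intro a b a' b'
    simp only [map_add, map_smul, LinearMap.add_apply, LinearMap.smul_apply, smul_eq_mul, hQ]
    push_cast
    ring_nf
    rw [Complex.I_sq]
    ring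
  set Sset : Set WC := {y | Q y y = 0 ∧ 0 < (Q y (cj y)).re ∧ (Q y (cj y)).im = 0} with hSset
  have memS : ∀ a b : W, (j a + I • j b) ∈ Sset ↔ (q a a = q b b ∧ q a b = 0 ∧ 0 < q a a) := by
    intro a b
    have h2 : cj (j a + I • j b) = j a + I • j (-b) := by
      rw [hcj, map_neg, smul_neg, sub_eq_add_neg]
    have h3 : Q (j a + I • j b) (cj (j a + I • j b)) = ((q a a + q b b : ℝ) : ℂ) := by
      rw [h2, key]
      simp only [map_neg, LinearMap.neg_apply]
      rw [hsymm b a]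
      push_cast
      ring
    have h1 : Q (j a + I • j b) (j a + I • j b)
        = ((q a a - q b b : ℝ) : ℂ) + ((2 * q a b : ℝ) : ℂ) * I := by
      rw [key, hsymm b a]
      push_cast
      ring
    simp only [hSset, Set.mem_setOf_eq, h1, h3]
    constructor
    · rintro ⟨hz, hre, _⟩
      rw [Complex.ext_iff] at hz
      simp only [Complex.add_re, Complex.add_im, Complex.ofReal_re, Complex.ofReal_im,
        Complex.mul_re, Complex.mul_im, Complex.I_re, Complex.I_im, Complex.zero_re,
        Complex.zero_im] at hz hre
      obtain ⟨hz1, hz2⟩ := hz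
      refine ⟨by linarith, by linarith, by linarith⟩
    · rintro ⟨hab, hob, hl⟩
      refine ⟨?_, ?_, ?_⟩
      · rw [Complex.ext_iff]
        simp only [Complex.add_re, Complex.add_im, Complex.ofReal_re, Complex.ofReal_im,
          Complex.mul_re, Complex.mul_im, Complex.I_re, Complex.I_im, Complex.zero_re,
          Complex.zero_im]
        constructor <;> simp [hab, hob]
      · simp only [Complex.ofReal_re]
        linarith
      · simp only [Complex.ofReal_im]
  set om : WC → ℝ := fun y => ((starRingEnd ℂ) (Q (j e1) y) * Q (j e2) y).im with homdef
  have omcont : Continuous om := by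
    have c1 : Continuous fun y : WC => Q (j e1) y := (Q (j e1)).continuous_of_finiteDimensional
    have c2 : Continuous fun y : WC => Q (j e2) y := (Q (j e2)).continuous_of_finiteDimensional
    exact Complex.continuous_im.comp ((continuous_conj.comp c1).mul c2)
  have omval : ∀ a b : W, om (j a + I • j b) = q e1 a * q e2 b - q e1 b * q e2 a := by
    intro a b
    have t : ∀ v : W, Q (j v) (j a + I • j b) = ((q v a : ℝ) : ℂ) + ((q v b : ℝ) : ℂ) * I := by
      intro v
      simp only [map_add, map_smul, smul_eq_mul, hQ]
      ring
    simp only [homdef, t]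
    simp only [Complex.mul_im, Complex.conj_re, Complex.conj_im, Complex.add_re, Complex.add_im,
      Complex.ofReal_re, Complex.ofReal_im, Complex.mul_re, Complex.I_re, Complex.I_im]
    ring
  have wN : ∀ w : W, q e1 w = 0 → q e2 w = 0 → w ∈ N := by
    intro w h1 h2
    obtain ⟨wp, wn, hwp, hwn, rfl⟩ := hdec w
    have hq1 : q e1 wp = 0 := by
      have h := horth e1 he1 wn hwn
      simp only [map_add] at h1
      linarith
    have hq2 : q e2 wp = 0 := by
      have h := horth e2 he2 wn hwn
      simp only [map_add] at h2
      linarith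
    have hw0 : wp = 0 := by
      have := hrep wp hwp
      rwa [hq1, hq2, zero_smul, zero_smul, add_zero] at this
    rw [hw0, zero_add]
    exact hwn
  have omne : ∀ a b : W, q a a = q b b → q a b = 0 → 0 < q a a →
      q e1 a * q e2 b - q e1 b * q e2 a ≠ 0 := by
    intro a b hab hob hl h0
    set x1 := q e1 a with hx1
    set x2 := q e2 a with hx2
    set y1 := q e1 b with hy1
    set y2 := q e2 b with hy2
    have hba : q b a = 0 := (hsymm b a).trans hob
    have main : ∀ s t : ℝ, ¬(s = 0 ∧ t = 0) → s * x1 + t * y1 = 0 → s * x2 + t * y2 = 0 → False := by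
      intro s t hst h1 h2
      have hwmem : (s • a + t • b) ∈ N := by
        apply wN
        · simp only [map_add, map_smul, smul_eq_mul, ← hx1, ← hy1]
          linarith
        · simp only [map_add, map_smul, smul_eq_mul, ← hx2, ← hy2]
          linarith
      have hq : q (s • a + t • b) (s • a + t • b) = (s ^ 2 + t ^ 2) * q a a := by
        simp only [map_add, map_smul, LinearMap.add_apply, LinearMap.smul_apply, smul_eq_mul,
          hob, hba]
        rw [← hab]
        ring
      have hle : q (s • a + t • b) (s • a + t • b) ≤ 0 := by
        rcases eq_or_ne (s • a + t • b) 0 with h | h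
        · simp [h]
        · exact (hneg _ hwmem h).le
      have hst' : 0 < s ^ 2 + t ^ 2 := by
        rcases not_and_or.mp hst with h | h
        · nlinarith [mul_self_pos.mpr h, sq_nonneg t]
        · nlinarith [mul_self_pos.mpr h, sq_nonneg s]
      nlinarith
    by_cases h2 : x2 = 0 ∧ y2 = 0
    · by_cases h1 : x1 = 0 ∧ y1 = 0
      · exact main 1 0 (by norm_num) (by rw [h1.1]; ring) (by rw [h2.1]; ring)
      · refine main y1 (-x1) ?_ (by ring) ?_
        · rintro ⟨ha, hb⟩
          exact h1 ⟨neg_eq_zero.mp hb, ha⟩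
        · rw [h2.1, h2.2]; ring
    · refine main y2 (-x2) ?_ ?_ (by ring)
      · rintro ⟨ha, hb⟩
        exact h2 ⟨neg_eq_zero.mp hb, ha⟩
      · nlinarith [h0]
  -- Path 1 : scaling
  have path1 : ∀ a b : W, q a a = q b b → q a b = 0 → 0 < q a a →
      JoinedIn Sset (j a + I • j b)
        (j ((Real.sqrt (q a a))⁻¹ • a) + I • j ((Real.sqrt (q a a))⁻¹ • b)) ∧
      q ((Real.sqrt (q a a))⁻¹ • a) ((Real.sqrt (q a a))⁻¹ • a) = 1 ∧
      q ((Real.sqrt (q a a))⁻¹ • b) ((Real.sqrt (q a a))⁻¹ • b) = 1 ∧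
      q ((Real.sqrt (q a a))⁻¹ • a) ((Real.sqrt (q a a))⁻¹ • b) = 0 := by
    intro a b hab hob hl
    set r : ℝ := (Real.sqrt (q a a))⁻¹ with hr
    have hrpos : 0 < r := inv_pos.mpr (Real.sqrt_pos.mpr hl)
    have hna : q (r • a) (r • a) = 1 := hnorm a hl
    have hnb : q (r • b) (r • b) = 1 := by
      have : q (r • b) (r • b) = r * (r * q b b) := by
        simp [map_smul, smul_eq_mul]
      have ha' : q (r • a) (r • a) = r * (r * q a a) := by
        simp [map_smul, smul_eq_mul]
      rw [this, ← hab, ← ha', hna]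
    have hnab : q (r • a) (r • b) = 0 := by
      simp [map_smul, smul_eq_mul, hob]
    refine ⟨?_, hna, hnb, hnab⟩
    -- the path
    have hc : ∀ t : unitInterval, 0 < 1 + (t : ℝ) * (r - 1) := by
      intro t
      rcases eq_or_lt_of_le t.2.1 with h | h
      · rw [← h]; norm_num
      · nlinarith [t.2.2, hrpos]
    refine ⟨⟨⟨fun t => (1 + (t : ℝ) * (r - 1)) • (j a + I • j b), ?_⟩, ?_, ?_⟩, ?_⟩
    · exact ((continuous_const.add ((continuous_subtype_val).mul continuous_const)).smul
        continuous_const)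
    · show (1 + ((0 : unitInterval) : ℝ) * (r - 1)) • (j a + I • j b) = j a + I • j b
      rw [Set.Icc.coe_zero]
      norm_num
    · show (1 + ((1 : unitInterval) : ℝ) * (r - 1)) • (j a + I • j b)
        = j (r • a) + I • j (r • b)
      rw [Set.Icc.coe_one]
      have hc1 : 1 + (1:ℝ) * (r - 1) = r := by ring
      rw [hc1, smul_add, map_smul, map_smul, smul_comm r I]
    · intro t
      show (1 + (t : ℝ) * (r - 1)) • (j a + I • j b) ∈ Sset
      set c : ℝ := 1 + (t : ℝ) * (r - 1) with hcdef
      have hcpos : 0 < c := hc t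
      have hrw : c • (j a + I • j b) = j (c • a) + I • j (c • b) := by
        rw [smul_add, map_smul, map_smul, smul_comm c I]
      rw [hrw, memS]
      refine ⟨?_, ?_, ?_⟩
      · simp only [map_smul, LinearMap.smul_apply, smul_eq_mul]
        rw [hab]
      · simp [map_smul, smul_eq_mul, hob]
      · simp only [map_smul, LinearMap.smul_apply, smul_eq_mul]
        positivity
  -- Path 2 : retraction to P
  have path2 : ∀ a b : W, q a a = 1 → q b b = 1 → q a b = 0 →
      ∃ a' b' : W, a' ∈ P ∧ b' ∈ P ∧ q a' a' = 1 ∧ q b' b' = 1 ∧ q a' b' = 0 ∧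
        JoinedIn Sset (j a + I • j b) (j a' + I • j b') := by
    intro a b haa hbb hab
    have hba : q b a = 0 := (hsymm b a).trans hab
    obtain ⟨aP, aN, haP, haN, hadec⟩ := hdec a
    obtain ⟨bP, bN, hbP, hbN, hbdec⟩ := hdec b
    have o1 : q aP aN = 0 := horth _ haP _ haN
    have o2 : q aN aP = 0 := horth' _ haN _ haP
    have o3 : q aP bN = 0 := horth _ haP _ hbN
    have o4 : q aN bP = 0 := horth' _ haN _ hbP
    have o5 : q bP bN = 0 := horth _ hbP _ hbN
    have o6 : q bN bP = 0 := horth' _ hbN _ hbP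
    have o7 : q bP aN = 0 := horth _ hbP _ haN
    have o8 : q bN aP = 0 := horth' _ hbN _ haP
    -- the positivity lemma
    have E : ∀ s : ℝ, 0 ≤ s → s ≤ 1 → ∀ x y : ℝ, ¬(x = 0 ∧ y = 0) →
        0 < q (x • (aP + s • aN) + y • (bP + s • bN))
            (x • (aP + s • aN) + y • (bP + s • bN)) := by
      intro s hs0 hs1 x y hxy
      set cP := x • aP + y • bP with hcP
      set cN := x • aN + y • bN with hcN
      have hcPmem : cP ∈ P := P.add_mem (P.smul_mem _ haP) (P.smul_mem _ hbP)
      have hcNmem : cN ∈ N := N.add_mem (N.smul_mem _ haN) (N.smul_mem _ hbN)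
      have hrw : x • (aP + s • aN) + y • (bP + s • bN) = cP + s • cN := by
        rw [hcP, hcN]; module
      have hc1 : x • a + y • b = cP + cN := by
        rw [hadec, hbdec, hcP, hcN]; module
      have hPN : q cP cN = 0 := horth _ hcPmem _ hcNmem
      have hNP : q cN cP = 0 := horth' _ hcNmem _ hcPmem
      clear_value cP cN
      rw [hrw]
      have hq1 : q (cP + s • cN) (cP + s • cN) = q cP cP + s ^ 2 * q cN cN := by
        simp only [map_add, map_smul, LinearMap.add_apply, LinearMap.smul_apply, smul_eq_mul,
          hPN, hNP]
        ring
      have h2 : q (x • a + y • b) (x • a + y • b) = x ^ 2 + y ^ 2 := by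
        simp only [map_add, map_smul, LinearMap.add_apply, LinearMap.smul_apply, smul_eq_mul,
          haa, hbb, hab, hba]
        ring
      have hsum : q cP cP + q cN cN = x ^ 2 + y ^ 2 := by
        have h3 : q (cP + cN) (cP + cN) = q cP cP + q cN cN := by
          simp only [map_add, LinearMap.add_apply, hPN, hNP]
          ring
        rw [← hc1, h2] at h3
        linarith
      have hxy' : 0 < x ^ 2 + y ^ 2 := by
        rcases not_and_or.mp hxy with h | h
        · nlinarith [mul_self_pos.mpr h, sq_nonneg y]
        · nlinarith [mul_self_pos.mpr h, sq_nonneg x]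
      have hcP0 : 0 ≤ q cP cP := hposle _ hcPmem
      rw [hq1]
      rcases eq_or_ne s 0 with h | h
      · have hcPne : cP ≠ 0 := by
          intro h0
          have hcmem : x • a + y • b ∈ N := by
            rw [hc1, h0, zero_add]; exact hcNmem
          have hle : q (x • a + y • b) (x • a + y • b) ≤ 0 := hnegle _ hcmem
          linarith [h2]
        have hp := hpos _ hcPmem hcPne
        rw [h]
        norm_num
        exact hp
      · have hs2 : 0 < s ^ 2 := by
          have := mul_self_pos.mpr h
          nlinarith
        have h1 : 0 ≤ q cP cP * ((1 - s) * (1 + s)) :=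
          mul_nonneg hcP0 (mul_nonneg (by linarith) (by linarith))
        have h2' : 0 < s ^ 2 * (x ^ 2 + y ^ 2) := mul_pos hs2 hxy'
        have h3 : s ^ 2 * q cN cN = s ^ 2 * (x ^ 2 + y ^ 2) - s ^ 2 * q cP cP := by
          have hq : q cN cN = x ^ 2 + y ^ 2 - q cP cP := by linarith
          rw [hq]; ring
        nlinarith [h1, h2', h3]
    -- scalar functions
    set G : ℝ → ℝ := fun s => q aP aP + s ^ 2 * q aN aN with hGdef
    set C : ℝ → ℝ := fun s => q aP bP + s ^ 2 * q aN bN with hCdef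
    set V : ℝ → ℝ := fun s => q bP bP + s ^ 2 * q bN bN with hVdef
    set H : ℝ → ℝ := fun s => V s - (C s) ^ 2 / G s with hHdef
    have hGu : ∀ s : ℝ, q (aP + s • aN) (aP + s • aN) = G s := by
      intro s
      simp only [hGdef, map_add, map_smul, LinearMap.add_apply, LinearMap.smul_apply,
        smul_eq_mul, o1, o2]
      ring
    have hCuv : ∀ s : ℝ, q (aP + s • aN) (bP + s • bN) = C s := by
      intro s
      simp only [hCdef, map_add, map_smul, LinearMap.add_apply, LinearMap.smul_apply,
        smul_eq_mul, o3, o4]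
      ring
    have hVv : ∀ s : ℝ, q (bP + s • bN) (bP + s • bN) = V s := by
      intro s
      simp only [hVdef, map_add, map_smul, LinearMap.add_apply, LinearMap.smul_apply,
        smul_eq_mul, o5, o6]
      ring
    have hVu : ∀ s : ℝ, q (bP + s • bN) (aP + s • aN) = C s := by
      intro s
      rw [hsymm, hCuv]
    have hGpos : ∀ s : ℝ, 0 ≤ s → s ≤ 1 → 0 < G s := by
      intro s h0 h1
      rw [← hGu]
      have := E s h0 h1 1 0 (by norm_num)
      simpa using this
    -- B' function
    set Bf : ℝ → W := fun s => (bP + s • bN) - (C s / G s) • (aP + s • aN) with hBfdef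
    have huB : ∀ s : ℝ, 0 ≤ s → s ≤ 1 → q (aP + s • aN) (Bf s) = 0 := by
      intro s h0 h1
      have hGne : G s ≠ 0 := ne_of_gt (hGpos s h0 h1)
      simp only [hBfdef, map_sub, map_smul, smul_eq_mul, hGu, hCuv]
      rw [div_mul_cancel₀ _ hGne]
      ring
    have hBq : ∀ s : ℝ, 0 ≤ s → s ≤ 1 → q (Bf s) (Bf s) = H s := by
      intro s h0 h1
      have hGne : G s ≠ 0 := ne_of_gt (hGpos s h0 h1)
      simp only [hBfdef, hHdef, map_sub, map_smul, LinearMap.sub_apply, LinearMap.smul_apply,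
        smul_eq_mul, hGu, hCuv, hVv, hVu]
      field_simp
      ring
    have hHpos : ∀ s : ℝ, 0 ≤ s → s ≤ 1 → 0 < H s := by
      intro s h0 h1
      rw [← hBq s h0 h1]
      have hrwB : Bf s = (-(C s / G s)) • (aP + s • aN) + (1 : ℝ) • (bP + s • bN) := by
        rw [hBfdef]; module
      rw [hrwB]
      exact E s h0 h1 _ _ (by rintro ⟨-, h⟩; exact one_ne_zero h)
    -- normalized frames
    set Af : ℝ → W := fun s => (Real.sqrt (G s))⁻¹ • (aP + s • aN) with hAfdef
    set Bn : ℝ → W := fun s => (Real.sqrt (H s))⁻¹ • Bf s with hBndef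
    have hAq : ∀ s : ℝ, 0 ≤ s → s ≤ 1 → q (Af s) (Af s) = 1 := by
      intro s h0 h1
      have h := hnorm (aP + s • aN) (by rw [hGu]; exact hGpos s h0 h1)
      rw [hGu] at h
      rw [hAfdef]
      exact h
    have hBnq : ∀ s : ℝ, 0 ≤ s → s ≤ 1 → q (Bn s) (Bn s) = 1 := by
      intro s h0 h1
      have h := hnorm (Bf s) (by rw [hBq s h0 h1]; exact hHpos s h0 h1)
      rw [hBq s h0 h1] at h
      rw [hBndef]
      exact h
    have hABq : ∀ s : ℝ, 0 ≤ s → s ≤ 1 → q (Af s) (Bn s) = 0 := by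
      intro s h0 h1
      simp only [hAfdef, hBndef, map_smul, LinearMap.smul_apply, smul_eq_mul]
      rw [huB s h0 h1]
      ring
    have hmem : ∀ s : ℝ, 0 ≤ s → s ≤ 1 → (j (Af s) + I • j (Bn s)) ∈ Sset := by
      intro s h0 h1
      rw [memS]
      exact ⟨by rw [hAq s h0 h1, hBnq s h0 h1], hABq s h0 h1, by rw [hAq s h0 h1]; norm_num⟩
    -- endpoint values
    have hua : aP + (1 : ℝ) • aN = a := by rw [hadec]; module
    have hvb : bP + (1 : ℝ) • bN = b := by rw [hbdec]; module
    have hG1 : G 1 = 1 := by rw [← hGu 1, hua, haa]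
    have hC1 : C 1 = 0 := by rw [← hCuv 1, hua, hvb, hab]
    have hH1 : H 1 = 1 := by
      rw [hHdef]
      show V 1 - C 1 ^ 2 / G 1 = 1
      rw [hC1, hG1, ← hVv 1, hvb, hbb]
      norm_num
    have hAf1 : Af 1 = a := by
      rw [hAfdef]
      show (Real.sqrt (G 1))⁻¹ • (aP + (1:ℝ) • aN) = a
      rw [hG1, hua, Real.sqrt_one, inv_one, one_smul]
    have hBf1 : Bf 1 = b := by
      rw [hBfdef]
      show (bP + (1:ℝ) • bN) - (C 1 / G 1) • (aP + (1:ℝ) • aN) = b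
      rw [hC1, hvb, zero_div, zero_smul, sub_zero]
    have hBn1 : Bn 1 = b := by
      rw [hBndef]
      show (Real.sqrt (H 1))⁻¹ • Bf 1 = b
      rw [hH1, hBf1, Real.sqrt_one, inv_one, one_smul]
    -- s = 0 endpoint is in P
    have hu0 : aP + (0 : ℝ) • aN = aP := by module
    have hAf0P : Af 0 ∈ P := by
      rw [hAfdef]
      show (Real.sqrt (G 0))⁻¹ • (aP + (0:ℝ) • aN) ∈ P
      rw [hu0]
      exact P.smul_mem _ haP
    have hBn0P : Bn 0 ∈ P := by
      rw [hBndef]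
      show (Real.sqrt (H 0))⁻¹ • Bf 0 ∈ P
      apply P.smul_mem
      rw [hBfdef]
      show (bP + (0:ℝ) • bN) - (C 0 / G 0) • (aP + (0:ℝ) • aN) ∈ P
      rw [hu0]
      exact P.sub_mem (by rw [show bP + (0:ℝ) • bN = bP by module]; exact hbP)
        (P.smul_mem _ haP)
    refine ⟨Af 0, Bn 0, hAf0P, hBn0P, hAq 0 le_rfl zero_le_one, hBnq 0 le_rfl zero_le_one,
      hABq 0 le_rfl zero_le_one, ?_⟩
    -- the path
    have hs0 : ∀ t : unitInterval, (0:ℝ) ≤ 1 - (t : ℝ) := fun t => by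
      have := t.2.2; linarith
    have hs1 : ∀ t : unitInterval, (1 : ℝ) - (t : ℝ) ≤ 1 := fun t => by
      have := t.2.1; linarith
    set γf : unitInterval → WC := fun t =>
      j (Af (1 - (t : ℝ))) + I • j (Bn (1 - (t : ℝ))) with hγfdef
    have hcont : Continuous γf := by
      have hct : Continuous fun t : unitInterval => 1 - (t : ℝ) :=
        continuous_const.sub continuous_subtype_val
      have hGc : Continuous fun t : unitInterval => G (1 - (t : ℝ)) := by
        simp only [hGdef]
        exact continuous_const.add ((hct.pow 2).mul continuous_const)
      have hCc : Continuous fun t : unitInterval => C (1 - (t : ℝ)) := by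
        simp only [hCdef]
        exact continuous_const.add ((hct.pow 2).mul continuous_const)
      have hVc : Continuous fun t : unitInterval => V (1 - (t : ℝ)) := by
        simp only [hVdef]
        exact continuous_const.add ((hct.pow 2).mul continuous_const)
      have hGne : ∀ t : unitInterval, G (1 - (t : ℝ)) ≠ 0 :=
        fun t => ne_of_gt (hGpos _ (hs0 t) (hs1 t))
      have hHc : Continuous fun t : unitInterval => H (1 - (t : ℝ)) := by
        simp only [hHdef]
        exact hVc.sub ((hCc.pow 2).div hGc hGne)
      have hsqGc : Continuous fun t : unitInterval => (Real.sqrt (G (1 - (t : ℝ))))⁻¹ :=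
        Continuous.inv₀ (Real.continuous_sqrt.comp hGc)
          (fun t => ne_of_gt (Real.sqrt_pos.mpr (hGpos _ (hs0 t) (hs1 t))))
      have hsqHc : Continuous fun t : unitInterval => (Real.sqrt (H (1 - (t : ℝ))))⁻¹ :=
        Continuous.inv₀ (Real.continuous_sqrt.comp hHc)
          (fun t => ne_of_gt (Real.sqrt_pos.mpr (hHpos _ (hs0 t) (hs1 t))))
      have hjuC : Continuous fun t : unitInterval => j aP + (1 - (t : ℝ)) • j aN :=
        continuous_const.add (hct.smul continuous_const)
      have hjvC : Continuous fun t : unitInterval => j bP + (1 - (t : ℝ)) • j bN :=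
        continuous_const.add (hct.smul continuous_const)
      have hexp : γf = fun t : unitInterval =>
          (Real.sqrt (G (1 - (t : ℝ))))⁻¹ • (j aP + (1 - (t : ℝ)) • j aN)
          + I • ((Real.sqrt (H (1 - (t : ℝ))))⁻¹ •
            ((j bP + (1 - (t : ℝ)) • j bN)
              - (C (1 - (t : ℝ)) / G (1 - (t : ℝ))) • (j aP + (1 - (t : ℝ)) • j aN))) := by
        funext t
        simp only [hγfdef, hAfdef, hBndef, hBfdef, map_add, map_smul, map_sub]
      rw [hexp]
      exact (hsqGc.smul hjuC).add (continuous_const.smul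
        (hsqHc.smul (hjvC.sub ((hCc.div hGc hGne).smul hjuC))))
    refine ⟨⟨⟨γf, hcont⟩, ?_, ?_⟩, ?_⟩
    · show γf 0 = j a + I • j b
      rw [hγfdef]
      show j (Af (1 - ((0 : unitInterval) : ℝ))) + I • j (Bn (1 - ((0 : unitInterval) : ℝ)))
        = j a + I • j b
      rw [Set.Icc.coe_zero, sub_zero, hAf1, hBn1]
    · show γf 1 = j (Af 0) + I • j (Bn 0)
      rw [hγfdef]
      show j (Af (1 - ((1 : unitInterval) : ℝ))) + I • j (Bn (1 - ((1 : unitInterval) : ℝ)))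
        = j (Af 0) + I • j (Bn 0)
      rw [Set.Icc.coe_one, sub_self]
    · intro t
      show γf t ∈ Sset
      rw [hγfdef]
      exact hmem _ (hs0 t) (hs1 t)
  -- Path 3 : rotation inside P
  have path3 : ∀ a b : W, a ∈ P → b ∈ P → q a a = 1 → q b b = 1 → q a b = 0 →
      ∃ ε : ℝ, (ε = 1 ∨ ε = -1) ∧
        JoinedIn Sset (j a + I • j b) (j e1 + I • j (ε • e2)) := by
    intro a b haP hbP haa hbb hab0
    set x1 := q e1 a with hx1
    set x2 := q e2 a with hx2
    set y1 := q e1 b with hy1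
    set y2 := q e2 b with hy2
    have ha : a = x1 • e1 + x2 • e2 := hrep a haP
    have hb : b = y1 • e1 + y2 • e2 := hrep b hbP
    clear_value x1 x2 y1 y2
    have hqaa : q a a = x1 ^ 2 + x2 ^ 2 := by
      conv_lhs => rw [ha]
      simp only [map_add, map_smul, LinearMap.add_apply, LinearMap.smul_apply, smul_eq_mul,
        h11, h22, h12, h21]
      ring
    have hqbb : q b b = y1 ^ 2 + y2 ^ 2 := by
      conv_lhs => rw [hb]
      simp only [map_add, map_smul, LinearMap.add_apply, LinearMap.smul_apply, smul_eq_mul,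
        h11, h22, h12, h21]
      ring
    have hqab : q a b = x1 * y1 + x2 * y2 := by
      conv_lhs => rw [ha, hb]
      simp only [map_add, map_smul, LinearMap.add_apply, LinearMap.smul_apply, smul_eq_mul,
        h11, h22, h12, h21]
      ring
    have hx : x1 ^ 2 + x2 ^ 2 = 1 := by rw [← hqaa]; exact haa
    have hy : y1 ^ 2 + y2 ^ 2 = 1 := by rw [← hqbb]; exact hbb
    have hxy : x1 * y1 + x2 * y2 = 0 := by rw [← hqab]; exact hab0
    set ε := x1 * y2 - x2 * y1 with hεdef
    clear_value ε
    have hε2 : ε ^ 2 = 1 := by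
      have h : ε ^ 2 = (x1 ^ 2 + x2 ^ 2) * (y1 ^ 2 + y2 ^ 2) - (x1 * y1 + x2 * y2) ^ 2 := by
        rw [hεdef]; ring
      rw [hx, hy, hxy] at h
      rw [h]; norm_num
    have hεor : ε = 1 ∨ ε = -1 := by
      have h := mul_eq_zero.mp (show (ε - 1) * (ε + 1) = (0 : ℝ) by linear_combination hε2)
      rcases h with h | h
      · left; linarith
      · right; linarith
    have hby1 : y1 = -ε * x2 := by
      rw [hεdef]
      linear_combination (-y1) * hx + x1 * hxy
    have hby2 : y2 = ε * x1 := by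
      rw [hεdef]
      linear_combination (-y2) * hx + x2 * hxy
    -- complex angle
    set z : ℂ := (x1 : ℂ) + (x2 : ℂ) * I with hzdef
    clear_value z
    have hzre : z.re = x1 := by simp [hzdef]
    have hzim : z.im = x2 := by simp [hzdef]
    have habs : ‖z‖ = 1 := by
      have h1 : ‖z‖ ^ 2 = 1 := by
        rw [Complex.sq_norm, Complex.normSq_apply, hzre, hzim]
        linear_combination hx
      have h2 : 0 ≤ ‖z‖ := norm_nonneg z
      nlinarith [h1, h2, sq_nonneg (‖z‖ - 1)]
    have hzne : z ≠ 0 := by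
      intro h
      rw [h] at habs
      simp at habs
    set θ := Complex.arg z with hθ
    clear_value θ
    have hcos : Real.cos θ = x1 := by
      rw [hθ, Complex.cos_arg hzne, habs, hzre, div_one]
    have hsin : Real.sin θ = x2 := by
      rw [hθ, Complex.sin_arg, habs, hzim, div_one]
    refine ⟨ε, hεor, ?_⟩
    -- the path: τ = (1 - t) θ
    have hmem : ∀ τ : ℝ,
        (j (Real.cos τ • e1 + Real.sin τ • e2)
          + I • j ((-(ε * Real.sin τ)) • e1 + (ε * Real.cos τ) • e2)) ∈ Sset := by
      intro τ
      rw [memS]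
      have hs := Real.sin_sq_add_cos_sq τ
      have hA1 : q (Real.cos τ • e1 + Real.sin τ • e2) (Real.cos τ • e1 + Real.sin τ • e2)
          = 1 := by
        simp only [map_add, map_smul, LinearMap.add_apply, LinearMap.smul_apply, smul_eq_mul,
          h11, h22, h12, h21]
        linear_combination hs
      have hB1 : q ((-(ε * Real.sin τ)) • e1 + (ε * Real.cos τ) • e2)
          ((-(ε * Real.sin τ)) • e1 + (ε * Real.cos τ) • e2) = 1 := by
        simp only [map_add, map_smul, LinearMap.add_apply, LinearMap.smul_apply, smul_eq_mul,
          h11, h22, h12, h21]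
        linear_combination ε ^ 2 * hs + hε2
      have hAB : q (Real.cos τ • e1 + Real.sin τ • e2)
          ((-(ε * Real.sin τ)) • e1 + (ε * Real.cos τ) • e2) = 0 := by
        simp only [map_add, map_smul, LinearMap.add_apply, LinearMap.smul_apply, smul_eq_mul,
          h11, h22, h12, h21]
        ring
      exact ⟨by rw [hA1, hB1], hAB, by rw [hA1]; norm_num⟩
    set A : ℝ → W := fun τ => Real.cos τ • e1 + Real.sin τ • e2 with hA
    set B : ℝ → W := fun τ => (-(ε * Real.sin τ)) • e1 + (ε * Real.cos τ) • e2 with hB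
    set γf : unitInterval → WC := fun t => j (A ((1 - (t : ℝ)) * θ)) + I • j (B ((1 - (t : ℝ)) * θ))
      with hγf
    have hcont : Continuous γf := by
      have hfact : γf = fun t : unitInterval =>
          Real.cos ((1 - (t : ℝ)) * θ) • j e1 + Real.sin ((1 - (t : ℝ)) * θ) • j e2
            + I • ((-(ε * Real.sin ((1 - (t : ℝ)) * θ))) • j e1
              + (ε * Real.cos ((1 - (t : ℝ)) * θ)) • j e2) := by
        funext t
        simp [hγf, hA, hB, map_add, map_smul]
      rw [hfact]
      have hct : Continuous fun t : unitInterval => (1 - (t : ℝ)) * θ :=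
        (continuous_const.sub continuous_subtype_val).mul continuous_const
      have hcos' : Continuous fun t : unitInterval => Real.cos ((1 - (t : ℝ)) * θ) :=
        Real.continuous_cos.comp hct
      have hsin' : Continuous fun t : unitInterval => Real.sin ((1 - (t : ℝ)) * θ) :=
        Real.continuous_sin.comp hct
      exact ((hcos'.smul continuous_const).add (hsin'.smul continuous_const)).add
        (continuous_const.smul
          (((((continuous_const.mul hsin').neg)).smul continuous_const).add
            ((continuous_const.mul hcos').smul continuous_const)))
    have hsrc : γf 0 = j a + I • j b := by
      rw [hγf]
      simp only [Set.Icc.coe_zero, sub_zero, one_mul]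
      have hA0 : A θ = a := by
        rw [hA]
        show Real.cos θ • e1 + Real.sin θ • e2 = a
        rw [hcos, hsin]; exact ha.symm
      have hB0 : B θ = b := by
        rw [hB]
        show (-(ε * Real.sin θ)) • e1 + (ε * Real.cos θ) • e2 = b
        rw [hcos, hsin, hb, hby1, hby2]
        module
      rw [hA0, hB0]
    have htgt : γf 1 = j e1 + I • j (ε • e2) := by
      rw [hγf]
      simp only [Set.Icc.coe_one, sub_self, zero_mul]
      have hA0 : A 0 = e1 := by
        rw [hA]
        show Real.cos 0 • e1 + Real.sin 0 • e2 = e1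
        rw [Real.cos_zero, Real.sin_zero]; module
      have hB0 : B 0 = ε • e2 := by
        rw [hB]
        show (-(ε * Real.sin 0)) • e1 + (ε * Real.cos 0) • e2 = ε • e2
        rw [Real.cos_zero, Real.sin_zero]; module
      rw [hA0, hB0]
    have hmemt : ∀ t : unitInterval, γf t ∈ Sset := by
      intro t
      rw [hγf]
      simp only [hA, hB]
      exact hmem _
    exact ⟨⟨⟨γf, hcont⟩, hsrc, htgt⟩, hmemt⟩
  have claimJ : ∀ y : WC, y ∈ Sset → ∃ ε : ℝ, (ε = 1 ∨ ε = -1) ∧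
      JoinedIn Sset y (j e1 + I • j (ε • e2)) := by
    intro y hy
    obtain ⟨a, b, rfl⟩ := hspan y
    obtain ⟨hab, hob, hl⟩ := (memS a b).mp hy
    obtain ⟨hJ1, h1a, h1b, h1ab⟩ := path1 a b hab hob hl
    obtain ⟨a', b', ha'P, hb'P, h1, h2, h3, hJ2⟩ := path2 _ _ h1a h1b h1ab
    obtain ⟨ε, hεor, hJ3⟩ := path3 a' b' ha'P hb'P h1 h2 h3
    exact ⟨ε, hεor, (hJ1.trans hJ2).trans hJ3⟩
  -- final assembly
  have hz1mem : (j e1 + I • j ((1:ℝ) • e2)) ∈ Sset := by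
    rw [memS]
    refine ⟨?_, ?_, ?_⟩
    · simp only [map_smul, LinearMap.smul_apply, smul_eq_mul, h11, h22]; norm_num
    · simp only [map_smul, smul_eq_mul, h12]; norm_num
    · rw [h11]; norm_num
  have hz2mem : (j e1 + I • j ((-1:ℝ) • e2)) ∈ Sset := by
    rw [memS]
    refine ⟨?_, ?_, ?_⟩
    · simp only [map_smul, LinearMap.smul_apply, smul_eq_mul, h11, h22]; norm_num
    · simp only [map_smul, smul_eq_mul, h12]; norm_num
    · rw [h11]; norm_num
  have homz1 : om (j e1 + I • j ((1:ℝ) • e2)) = 1 := by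
    rw [omval]
    simp only [map_smul, smul_eq_mul, h11, h22, h12, h21]
    norm_num
  have homz2 : om (j e1 + I • j ((-1:ℝ) • e2)) = -1 := by
    rw [omval]
    simp only [map_smul, smul_eq_mul, h11, h22, h12, h21]
    norm_num
  set F : ↥Sset → Fin 2 := fun y => if 0 < om y.1 then 0 else 1 with hF
  have homne : ∀ y : ↥Sset, om y.1 ≠ 0 := by
    intro y
    obtain ⟨a, b, hab⟩ := hspan y.1
    have hmem : (j a + I • j b) ∈ Sset := hab ▸ y.2
    obtain ⟨ha1, ha2, ha3⟩ := (memS a b).mp hmem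
    rw [hab, omval]
    exact omne a b ha1 ha2 ha3
  have homc : Continuous fun y : ↥Sset => om y.1 := omcont.comp continuous_subtype_val
  have hUopen : IsOpen ((fun y : ↥Sset => om y.1) ⁻¹' Set.Ioi 0) := isOpen_Ioi.preimage homc
  have hVopen : IsOpen ((fun y : ↥Sset => om y.1) ⁻¹' Set.Iio 0) := isOpen_Iio.preimage homc
  have hconst : ∀ x z : ↥Sset, connectedComponent x = connectedComponent z → F x = F z := by
    intro x z h
    have hz : z ∈ connectedComponent x := h ▸ mem_connectedComponent
    have hcover : connectedComponent x ⊆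
        ((fun y : ↥Sset => om y.1) ⁻¹' Set.Ioi 0) ∪ ((fun y : ↥Sset => om y.1) ⁻¹' Set.Iio 0) := by
      intro w _
      rcases lt_trichotomy (om w.1) 0 with hw | hw | hw
      · exact Or.inr hw
      · exact absurd hw (homne w)
      · exact Or.inl hw
    have hdisj : Disjoint ((fun y : ↥Sset => om y.1) ⁻¹' Set.Ioi 0)
        ((fun y : ↥Sset => om y.1) ⁻¹' Set.Iio 0) := by
      rw [Set.disjoint_left]
      intro w hw1 hw2
      have hq1 : 0 < om w.1 := hw1
      have hq2 : om w.1 < 0 := hw2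
      linarith
    rcases isPreconnected_connectedComponent.subset_or_subset hUopen hVopen hdisj hcover
      with hsub | hsub
    · have hx : 0 < om x.1 := hsub mem_connectedComponent
      have hz' : 0 < om z.1 := hsub hz
      rw [hF]
      simp only [if_pos hx, if_pos hz']
    · have hx : om x.1 < 0 := hsub mem_connectedComponent
      have hz' : om z.1 < 0 := hsub hz
      rw [hF]
      simp only [if_neg (not_lt.mpr (le_of_lt hx)), if_neg (not_lt.mpr (le_of_lt hz'))]
  have hjoin : ∀ u v : ↥Sset, JoinedIn Sset u.1 v.1 →
      connectedComponent u = connectedComponent v := by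
    intro u v hJ
    have h2 := hJ.joined_subtype
    exact connectedComponent_eq (pathComponent_subset_component _ h2)
  set z1 : ↥Sset := ⟨j e1 + I • j ((1:ℝ) • e2), hz1mem⟩ with hz1
  set z2 : ↥Sset := ⟨j e1 + I • j ((-1:ℝ) • e2), hz2mem⟩ with hz2
  have hFz1 : F z1 = 0 := by
    rw [hF, hz1]
    show (if 0 < om (j e1 + I • j ((1:ℝ) • e2)) then (0 : Fin 2) else 1) = 0
    rw [homz1]
    norm_num
  have hFz2 : F z2 = 1 := by
    rw [hF, hz2]
    show (if 0 < om (j e1 + I • j ((-1:ℝ) • e2)) then (0 : Fin 2) else 1) = 1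
    rw [homz2]
    norm_num
  set Phi : ConnectedComponents ↥Sset → Fin 2 :=
    Quotient.lift F (fun u v h => hconst u v h) with hPhi
  have hPhimk : ∀ y : ↥Sset, Phi (ConnectedComponents.mk y) = F y := fun y => rfl
  set G2 : Fin 2 → ConnectedComponents ↥Sset :=
    fun i => if i = 0 then ConnectedComponents.mk z1 else ConnectedComponents.mk z2 with hG2
  have hmain : ∀ y : ↥Sset, G2 (F y) = ConnectedComponents.mk y := by
    intro y
    obtain ⟨ε, hεor, hJ⟩ := claimJ y.1 y.2
    have hcomp := hjoin y ⟨_, hJ.target_mem⟩ hJ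
    have hFy := hconst _ _ hcomp
    rcases hεor with rfl | rfl
    · have hzeq : (⟨j e1 + I • j ((1:ℝ) • e2), hJ.target_mem⟩ : ↥Sset) = z1 :=
        Subtype.ext rfl
      rw [hFy, hzeq, hFz1]
      simp only [hG2, if_true]
      rw [ConnectedComponents.coe_eq_coe]
      rw [← hzeq]
      exact hcomp.symm
    · have hzeq : (⟨j e1 + I • j ((-1:ℝ) • e2), hJ.target_mem⟩ : ↥Sset) = z2 :=
        Subtype.ext rfl
      rw [hFy, hzeq, hFz2]
      simp only [hG2]
      have h10 : (1 : Fin 2) ≠ 0 := by decide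
      rw [if_neg h10]
      rw [ConnectedComponents.coe_eq_coe]
      rw [← hzeq]
      exact hcomp.symm
  have heq : ConnectedComponents ↥Sset ≃ Fin 2 := by
    refine ⟨Phi, G2, ?_, ?_⟩
    · intro c
      obtain ⟨y, rfl⟩ := ConnectedComponents.surjective_coe c
      rw [hPhimk]
      exact hmain y
    · have h0 : Phi (G2 0) = 0 := by
        simp only [hG2, if_true]
        rw [hPhimk, hFz1]
      have h1 : Phi (G2 1) = 1 := by
        simp only [hG2]
        have h10 : (1 : Fin 2) ≠ 0 := by decide
        rw [if_neg h10]
        rw [hPhimk, hFz2]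
      intro i
      fin_cases i
      · exact h0
      · exact h1
  exact ⟨heq⟩
end

section
/- Let V be a finite-dimensional real vector space with a symmetric bilinear form q of signature (3, n−3), where n = dim V ≥ 4, and let ℓ ∈ V be a nonzero vector with q(ℓ,ℓ) = 0. Then the set {y ∈ ℂ ⊗ ℓ^⊥ : q(y,y) = 0 and q(y,ȳ) > 0} has exactly two connected components. -/
open Complex

section Aux

lemma two_components_of_clopen {X : Type*} [TopologicalSpace X] (U : Set X)
    (hcl : IsClopen U) (hU : IsPreconnected U) (hUc : IsPreconnected Uᶜ)
    (hne : U.Nonempty) (hnec : Uᶜ.Nonempty) :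
    Nonempty (ConnectedComponents X ≃ Fin 2) := by
  have hf : Continuous U.boolIndicator := (continuous_boolIndicator_iff_isClopen U).mpr hcl
  have key : ∀ x y : X, U.boolIndicator x = U.boolIndicator y →
      ConnectedComponents.mk x = ConnectedComponents.mk y := by
    intro x y hxy
    rw [ConnectedComponents.coe_eq_coe]
    by_cases hx : x ∈ U
    · have hy : y ∈ U := by
        by_contra hy
        rw [Set.mem_iff_boolIndicator _ x, hxy, ← Set.mem_iff_boolIndicator] at hx
        exact hy hx
      have h1 := hU.subset_connectedComponent hx
      exact (connectedComponent_eq (h1 hy))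
    · have hy : y ∉ U := by
        intro hy
        rw [Set.mem_iff_boolIndicator _ y] at hy
        rw [← hxy, ← Set.mem_iff_boolIndicator] at hy
        exact hx hy
      have h1 := hUc.subset_connectedComponent (s := Uᶜ) hx
      exact (connectedComponent_eq (h1 hy))
  have hbij : Function.Bijective hf.connectedComponentsLift := by
    constructor
    · intro c c'
      obtain ⟨x, rfl⟩ := ConnectedComponents.surjective_coe c
      obtain ⟨y, rfl⟩ := ConnectedComponents.surjective_coe c'
      simp only [Continuous.connectedComponentsLift_apply_coe]
      exact key x y
    · intro b
      cases b
      · obtain ⟨x, hx⟩ := hnec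
        refine ⟨ConnectedComponents.mk x, ?_⟩
        simp only [Continuous.connectedComponentsLift_apply_coe]
        exact (Set.notMem_iff_boolIndicator _ _).mp hx
      · obtain ⟨x, hx⟩ := hne
        refine ⟨ConnectedComponents.mk x, ?_⟩
        simp only [Continuous.connectedComponentsLift_apply_coe]
        exact (Set.mem_iff_boolIndicator _ _).mp hx
  exact ⟨(Equiv.ofBijective _ hbij).trans finTwoEquiv.symm⟩

open Module Submodule in
lemma exists_pair
    {V : Type*} [AddCommGroup V] [Module ℝ V] [FiniteDimensional ℝ V]
    (q : LinearMap.BilinForm ℝ V) (hsymm : ∀ x y : V, q x y = q y x)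
    (n : ℕ) (hn : Module.finrank ℝ V = n) (hn4 : 4 ≤ n)
    (hsig : HasSignature q 3 (n - 3))
    (ℓ : V) (hl0 : ℓ ≠ 0) (hll : q ℓ ℓ = 0) :
    ∃ e1 e2 : V, q ℓ e1 = 0 ∧ q ℓ e2 = 0 ∧ q e1 e1 = 1 ∧ q e2 e2 = 1 ∧
      q e1 e2 = 0 ∧ ∀ x : V, q ℓ x = 0 → q e1 x = 0 → q e2 x = 0 → q x x ≤ 0 := by
  obtain ⟨P, N, hcompl, horth, hP, hN, hPpos, hNneg⟩ := hsig
  have dim_le : ∀ W : Submodule ℝ V, finrank ℝ W ≤ n := fun W => hn ▸ Submodule.finrank_le W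
  have kerdim : ∀ w : V, n - 1 ≤ finrank ℝ (LinearMap.ker (q w)) := by
    intro w
    have h1 := LinearMap.finrank_range_add_finrank_ker (q w)
    have h2 : finrank ℝ (LinearMap.range (q w)) ≤ 1 := by
      simpa using Submodule.finrank_le (LinearMap.range (q w))
    omega
  have exnz : ∀ (W : Submodule ℝ V), 1 ≤ finrank ℝ W → ∃ v ∈ W, v ≠ 0 := by
    intro W hW
    by_contra h
    push_neg at h
    have : W = ⊥ := by
      rw [eq_bot_iff]; intro v hv; simpa using h v hv
    rw [this] at hW; simp at hW
  have hK1 : 2 ≤ finrank ℝ (P ⊓ LinearMap.ker (q ℓ) : Submodule ℝ V) := by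
    have hsum := Submodule.finrank_sup_add_finrank_inf_eq P (LinearMap.ker (q ℓ))
    have h1 := dim_le (P ⊔ LinearMap.ker (q ℓ))
    have h2 := kerdim ℓ
    omega
  obtain ⟨v1, hv1K, hv1ne⟩ := exnz _ (by omega : 1 ≤ finrank ℝ (P ⊓ LinearMap.ker (q ℓ) : Submodule ℝ V))
  have hv1P : v1 ∈ P := hv1K.1
  have hv1l : q ℓ v1 = 0 := hv1K.2
  have hv1pos : 0 < q v1 v1 := hPpos v1 hv1P hv1ne
  have hK2 : 1 ≤ finrank ℝ ((P ⊓ LinearMap.ker (q ℓ)) ⊓ LinearMap.ker (q v1) : Submodule ℝ V) := by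
    have hsum := Submodule.finrank_sup_add_finrank_inf_eq (P ⊓ LinearMap.ker (q ℓ)) (LinearMap.ker (q v1))
    have h1 := dim_le ((P ⊓ LinearMap.ker (q ℓ)) ⊔ LinearMap.ker (q v1))
    have h2 := kerdim v1
    omega
  obtain ⟨v2, hv2K, hv2ne⟩ := exnz _ hK2
  have hv2P : v2 ∈ P := hv2K.1.1
  have hv2l : q ℓ v2 = 0 := hv2K.1.2
  have hv12 : q v1 v2 = 0 := hv2K.2
  have hv2pos : 0 < q v2 v2 := hPpos v2 hv2P hv2ne
  set e1 := (Real.sqrt (q v1 v1))⁻¹ • v1 with he1def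
  set e2 := (Real.sqrt (q v2 v2))⁻¹ • v2 with he2def
  have hs1 : Real.sqrt (q v1 v1) ≠ 0 := by positivity
  have hs2 : Real.sqrt (q v2 v2) ≠ 0 := by positivity
  have he11 : q e1 e1 = 1 := by
    simp only [he1def, map_smul, LinearMap.smul_apply, smul_eq_mul]
    rw [show (Real.sqrt (q v1 v1))⁻¹ * ((Real.sqrt (q v1 v1))⁻¹ * q v1 v1) =
      (q v1 v1) / (Real.sqrt (q v1 v1) * Real.sqrt (q v1 v1)) by ring]
    rw [Real.mul_self_sqrt hv1pos.le]
    field_simp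
  have he22 : q e2 e2 = 1 := by
    simp only [he2def, map_smul, LinearMap.smul_apply, smul_eq_mul]
    rw [show (Real.sqrt (q v2 v2))⁻¹ * ((Real.sqrt (q v2 v2))⁻¹ * q v2 v2) =
      (q v2 v2) / (Real.sqrt (q v2 v2) * Real.sqrt (q v2 v2)) by ring]
    rw [Real.mul_self_sqrt hv2pos.le]
    field_simp
  have hle1 : q ℓ e1 = 0 := by simp [he1def, map_smul, hv1l]
  have hle2 : q ℓ e2 = 0 := by simp [he2def, map_smul, hv2l]
  have he12 : q e1 e2 = 0 := by
    simp [he1def, he2def, map_smul, LinearMap.smul_apply, hv12]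
  refine ⟨e1, e2, hle1, hle2, he11, he22, he12, ?_⟩
  clear_value e1 e2
  clear he1def he2def hs1 hs2 hv1K hv2K hv1l hv2l hv12 hv1P hv2P hv1pos hv2pos hv1ne hv2ne hK1 hK2
  intro x hx hx1 hx2
  by_contra hc
  push_neg at hc
  have hxl : q x ℓ = 0 := by rw [hsymm]; exact hx
  have hxe1 : q x e1 = 0 := by rw [hsymm]; exact hx1
  have hxe2 : q x e2 = 0 := by rw [hsymm]; exact hx2
  have he21 : q e2 e1 = 0 := by rw [hsymm]; exact he12
  have he1l : q e1 ℓ = 0 := by rw [hsymm]; exact hle1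
  have he2l : q e2 ℓ = 0 := by rw [hsymm]; exact hle2
  set v : Fin 4 → V := ![e1, e2, x, ℓ] with hvdef
  have hli : LinearIndependent ℝ v := by
    rw [Fintype.linearIndependent_iff]
    intro g hg
    have happ : ∀ w : V, g 0 * q e1 w + g 1 * q e2 w + g 2 * q x w + g 3 * q ℓ w = 0 := by
      intro w
      have : q (∑ i : Fin 4, g i • v i) w = 0 := by rw [hg]; simp
      simpa [Fin.sum_univ_four, hvdef, map_add, map_smul, LinearMap.add_apply,
        LinearMap.smul_apply, smul_eq_mul] using this
    have h0 : g 0 = 0 := by have := happ e1; rw [he11, he21, hxe1, hle1] at this; linarith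
    have h1 : g 1 = 0 := by
      have := happ e2
      rw [he12, he22, hxe2, hle2] at this; linarith
    have h2 : g 2 = 0 := by
      have := happ x
      rw [hx1, hx2, hx] at this
      have hq : g 2 * q x x = 0 := by linarith
      rcases mul_eq_zero.mp hq with h | h
      · exact h
      · exact absurd h (ne_of_gt hc)
    have h3 : g 3 = 0 := by
      have : g 3 • ℓ = 0 := by
        have := hg
        rw [Fin.sum_univ_four] at this
        simp only [hvdef, Matrix.cons_val_zero, Matrix.cons_val_one, Matrix.head_cons,
          Matrix.cons_val_two, Matrix.tail_cons, Matrix.cons_val_three] at this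
        rw [h0, h1, h2] at this
        simpa using this
      rcases smul_eq_zero.mp this with h | h
      · exact h
      · exact absurd h hl0
    intro i
    fin_cases i <;> assumption
  set U' := Submodule.span ℝ (Set.range v) with hU'def
  have hU'dim : finrank ℝ U' = 4 := by
    rw [hU'def, finrank_span_eq_card hli]; simp
  have hdisj : U' ⊓ N = ⊥ := by
    rw [eq_bot_iff]
    intro w hw
    obtain ⟨hwU, hwN⟩ := Submodule.mem_inf.mp hw
    obtain ⟨c, hc'⟩ := (mem_span_range_iff_exists_fun ℝ).mp hwU
    have hq : 0 ≤ q w w := by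
      rw [← hc']
      simp only [Fin.sum_univ_four, hvdef, Matrix.cons_val_zero, Matrix.cons_val_one,
        Matrix.head_cons, Matrix.cons_val_two, Matrix.tail_cons, Matrix.cons_val_three]
      simp only [map_add, map_smul, LinearMap.add_apply, LinearMap.smul_apply, smul_eq_mul]
      rw [he11, he22, hll, he12, he21, he1l, he2l, hle1, hle2, hx, hxl, hx1, hxe1, hx2, hxe2]
      nlinarith [hc, sq_nonneg (c 0), sq_nonneg (c 1), sq_nonneg (c 2)]
    simp only [Submodule.mem_bot]
    by_contra hwne
    exact absurd hq (not_le.mpr (hNneg w hwN hwne))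
  have hsum := Submodule.finrank_sup_add_finrank_inf_eq U' N
  rw [hdisj] at hsum
  have h1 := dim_le (U' ⊔ N)
  simp only [finrank_bot] at hsum
  omega

end Aux

section Cx
variable {V : Type*} [AddCommGroup V] [Module ℝ V]
  {VC : Type*} [NormedAddCommGroup VC] [NormedSpace ℂ VC]
  {j : V →ₗ[ℝ] VC} {cj : VC →ₗ[ℝ] VC} {Q : LinearMap.BilinForm ℂ VC}

lemma csmul_expand (c : ℂ) (z : VC) : c • z = c.re • z + c.im • (I • z) := by
  have h1 : c = (c.re : ℂ) + (c.im : ℂ) * I := by simp [Complex.ext_iff]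
  calc c • z = ((c.re : ℂ) + (c.im : ℂ) * I) • z := by rw [← h1]
    _ = (c.re : ℂ) • z + (c.im : ℂ) • (I • z) := by rw [add_smul, mul_smul]
    _ = c.re • z + c.im • (I • z) := by rw [Complex.coe_smul, Complex.coe_smul]

lemma I_smul_rep (a b : V) : I • (j a + I • j b) = j (-b) + I • j a := by
  rw [smul_add, smul_smul, I_mul_I, map_neg, neg_one_smul]
  abel

lemma cj_j (hcj : ∀ a b : V, cj (j a + I • j b) = j a - I • j b) (a : V) : cj (j a) = j a := by
  have := hcj a 0
  simpa using this

lemma cj_I_smul (hcj : ∀ a b : V, cj (j a + I • j b) = j a - I • j b)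
    (a b : V) : cj (I • (j a + I • j b)) = -(I • (j a - I • j b)) := by
  rw [I_smul_rep, hcj]
  have : I • (j a - I • j b) = I • (j a + I • j (-b)) := by rw [map_neg]; module
  rw [this, I_smul_rep]
  simp only [map_neg, neg_neg]
  module

lemma cj_smul (hcj : ∀ a b : V, cj (j a + I • j b) = j a - I • j b)
    (hspan : ∀ z : VC, ∃ a b : V, z = j a + I • j b)
    (c : ℂ) (y : VC) :
    cj (c • y) = (starRingEnd ℂ c) • cj y := by
  obtain ⟨a, b, rfl⟩ := hspan y
  rw [csmul_expand, map_add, map_smul, map_smul, hcj, cj_I_smul hcj,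
    csmul_expand (starRingEnd ℂ c)]
  simp only [Complex.conj_re, Complex.conj_im]
  have : I • (j a - I • j b) = j b + I • j a := by
    have : I • (j a - I • j b) = I • (j a + I • j (-b)) := by rw [map_neg]; module
    rw [this, I_smul_rep]
    simp
  rw [this]
  module

lemma cj_cj (hcj : ∀ a b : V, cj (j a + I • j b) = j a - I • j b)
    (hspan : ∀ z : VC, ∃ a b : V, z = j a + I • j b) (y : VC) : cj (cj y) = y := by
  obtain ⟨a, b, rfl⟩ := hspan y
  have h2 : j a - I • j b = j a + I • j (-b) := by rw [map_neg]; module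
  rw [hcj, h2, hcj, map_neg]
  module

lemma Q_expand {q : LinearMap.BilinForm ℝ V} (hQ : ∀ a b : V, Q (j a) (j b) = (q a b : ℂ))
    (a b c d : V) :
    Q (j a + I • j b) (j c + I • j d) =
      (q a c - q b d : ℝ) + (q a d + q b c : ℝ) * I := by
  simp only [map_add, map_smul, LinearMap.add_apply, LinearMap.smul_apply, smul_eq_mul, hQ]
  push_cast
  ring_nf
  rw [I_sq]
  ring

lemma Q_symm {q : LinearMap.BilinForm ℝ V} (hsymm : ∀ x y : V, q x y = q y x)
    (hQ : ∀ a b : V, Q (j a) (j b) = (q a b : ℂ))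
    (hspan : ∀ z : VC, ∃ a b : V, z = j a + I • j b)
    (y z : VC) : Q y z = Q z y := by
  obtain ⟨a, b, rfl⟩ := hspan y
  obtain ⟨c, d, rfl⟩ := hspan z
  rw [Q_expand hQ, Q_expand hQ, hsymm a c, hsymm b d, hsymm a d, hsymm b c]
  ring_nf

lemma Q_conj {q : LinearMap.BilinForm ℝ V}
    (hcj : ∀ a b : V, cj (j a + I • j b) = j a - I • j b)
    (hQ : ∀ a b : V, Q (j a) (j b) = (q a b : ℂ))
    (hspan : ∀ z : VC, ∃ a b : V, z = j a + I • j b)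
    (y z : VC) : Q (cj y) (cj z) = starRingEnd ℂ (Q y z) := by
  obtain ⟨a, b, rfl⟩ := hspan y
  obtain ⟨c, d, rfl⟩ := hspan z
  have h2 : ∀ u w : V, j u - I • j w = j u + I • j (-w) := fun u w => by rw [map_neg]; module
  rw [hcj, hcj, h2, h2, Q_expand hQ, Q_expand hQ]
  simp [Complex.ext_iff]
  ring

end Cx

section CxNum

lemma cx1 (c1 c2 : ℂ) : 4 * ((starRingEnd ℂ) c1 * c2).im =
    Complex.normSq (c1 - I*c2) - Complex.normSq (c1 + I*c2) := by
  simp [Complex.normSq_apply, Complex.mul_im, Complex.mul_re, Complex.sub_re, Complex.sub_im,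
    Complex.add_re, Complex.add_im]
  ring

lemma cx2 (c1 c2 : ℂ) : 2 * (Complex.normSq c1 + Complex.normSq c2) =
    Complex.normSq (c1 - I*c2) + Complex.normSq (c1 + I*c2) := by
  simp [Complex.normSq_apply, Complex.mul_im, Complex.mul_re, Complex.sub_re, Complex.sub_im,
    Complex.add_re, Complex.add_im]
  ring

lemma cx3 (A B : ℂ) : ((A + B)/2)^2 + (I*(B - A)/2)^2 = A * B := by
  field_simp
  ring_nf
  rw [I_sq]
  ring

lemma cx4 (z : ℂ) (t : ℝ) : Complex.normSq ((t:ℂ)^2 * z) = (t^2)^2 * Complex.normSq z := by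
  rw [map_mul, ← Complex.ofReal_pow, Complex.normSq_ofReal]
  ring

lemma cx5 (x y : ℝ) : Complex.normSq ((x:ℂ) + (y:ℂ)*I) = x^2 + y^2 := by
  simp [Complex.normSq_apply]
  ring

lemma cx6 (c1 c2 : ℂ) : (c1 + I*c2) * (c1 - I*c2) = c1^2 + c2^2 := by
  ring_nf
  rw [I_sq]
  ring

lemma cx8 (A B : ℂ) : (A + B)/2 - I*(I*(B - A)/2) = B := by
  ring_nf
  rw [I_sq]
  ring

lemma cx9 (A B : ℂ) : (A + B)/2 + I*(I*(B - A)/2) = A := by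
  ring_nf
  rw [I_sq]
  ring

lemma cx10 (c1 c2 : ℂ) : (c1 * (starRingEnd ℂ c2)).im = -(((starRingEnd ℂ) c1) * c2).im := by
  simp [Complex.mul_im]
  ring

end CxNum

set_option maxHeartbeats 2000000 in
/-- for `q` of signature `(3, n-3)` on `V`, `n = dim V ≥ 4`, and `ℓ ≠ 0`
isotropic, the set `{y ∈ ℂ ⊗ ℓ^⊥ : q(y,y) = 0, q(y,ȳ) > 0}` has exactly two connected
components. Here `VC` is the complexification of `V` (real points `j`, conjugation `cj`,
`Q` the ℂ-bilinear extension of `q`), and `ℂ ⊗ ℓ^⊥` is realized inside `VC` as the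
subspace of `y` with `Q (j ℓ) y = 0`. -/
theorem two_connected_components_of_l_period_cone
    {V : Type*} [AddCommGroup V] [Module ℝ V] [FiniteDimensional ℝ V]
    (q : LinearMap.BilinForm ℝ V) (hsymm : ∀ x y : V, q x y = q y x)
    (n : ℕ) (hn : Module.finrank ℝ V = n) (hn4 : 4 ≤ n)
    (hsig : HasSignature q 3 (n - 3))
    (ℓ : V) (hl0 : ℓ ≠ 0) (hll : q ℓ ℓ = 0)
    {VC : Type*} [NormedAddCommGroup VC] [NormedSpace ℂ VC]
    (j : V →ₗ[ℝ] VC)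
    (hspan : ∀ z : VC, ∃ a b : V, z = j a + I • j b)
    (hindep : ∀ a b : V, j a + I • j b = 0 → a = 0 ∧ b = 0)
    (cj : VC →ₗ[ℝ] VC)
    (hcj : ∀ a b : V, cj (j a + I • j b) = j a - I • j b)
    (Q : LinearMap.BilinForm ℂ VC)
    (hQ : ∀ a b : V, Q (j a) (j b) = (q a b : ℂ)) :
    Nonempty (ConnectedComponents
      {y : VC // Q (j ℓ) y = 0 ∧ Q y y = 0 ∧
        0 < (Q y (cj y)).re ∧ (Q y (cj y)).im = 0} ≃ Fin 2) := by
  classical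
  -- finite dimensionality of VC
  haveI : Module.Finite ℝ VC := by
    refine Module.Finite.of_surjective
      (j.comp (LinearMap.fst ℝ V V) + (I • j).comp (LinearMap.snd ℝ V V)) ?_
    intro z
    obtain ⟨a, b, hz⟩ := hspan z
    exact ⟨(a, b), by simp [hz]⟩
  haveI : FiniteDimensional ℂ VC := Module.Finite.of_restrictScalars_finite ℝ ℂ VC
  obtain ⟨e1, e2, hle1, hle2, he11, he22, he12, hsd⟩ :=
    exists_pair q hsymm n hn hn4 hsig ℓ hl0 hll
  have Qsym : ∀ y z : VC, Q y z = Q z y := Q_symm hsymm hQ hspan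
  have Qcj : ∀ y z : VC, Q (cj y) (cj z) = starRingEnd ℂ (Q y z) := Q_conj hcj hQ hspan
  have cjj : ∀ a : V, cj (j a) = j a := cj_j hcj
  have cjs : ∀ (c : ℂ) (y : VC), cj (c • y) = starRingEnd ℂ c • cj y := cj_smul hcj hspan
  have cjcj : ∀ y : VC, cj (cj y) = y := cj_cj hcj hspan
  have Qe11 : Q (j e1) (j e1) = 1 := by rw [hQ, he11]; norm_num
  have Qe22 : Q (j e2) (j e2) = 1 := by rw [hQ, he22]; norm_num
  have Qe12 : Q (j e1) (j e2) = 0 := by rw [hQ, he12]; norm_num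
  have Qe21 : Q (j e2) (j e1) = 0 := by rw [hQ, hsymm, he12]; norm_num
  have Qle1 : Q (j ℓ) (j e1) = 0 := by rw [hQ, hle1]; norm_num
  have Qle2 : Q (j ℓ) (j e2) = 0 := by rw [hQ, hle2]; norm_num
  -- properties of vectors in the complexified orthogonal complement
  have hwp : ∀ w : VC, Q (j ℓ) w = 0 → Q w (j e1) = 0 → Q w (j e2) = 0 →
      ∃ rr : ℝ, Q w (cj w) = (rr : ℂ) ∧ rr ≤ 0 ∧ Complex.normSq (Q w w) ≤ rr^2 := by
    intro w hwl hw1 hw2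
    obtain ⟨a, b, rfl⟩ := hspan w
    have expand2 : ∀ u : V, Q (j u) (j a + I • j b) = (q u a : ℂ) + (q u b : ℂ) * I := by
      intro u
      simp only [map_add, map_smul, smul_eq_mul, hQ]
      ring
    have expand1 : ∀ u : V, Q (j a + I • j b) (j u) = (q a u : ℂ) + (q b u : ℂ) * I := by
      intro u
      simp only [map_add, map_smul, LinearMap.add_apply, LinearMap.smul_apply, smul_eq_mul, hQ]
      ring
    have hla : q ℓ a = 0 := by
      have h := hwl; rw [expand2 ℓ] at h
      simpa using congrArg Complex.re h
    have hlb : q ℓ b = 0 := by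
      have h := hwl; rw [expand2 ℓ] at h
      simpa using congrArg Complex.im h
    have h1a : q e1 a = 0 := by
      have h := hw1; rw [expand1 e1] at h
      rw [hsymm]; simpa using congrArg Complex.re h
    have h1b : q e1 b = 0 := by
      have h := hw1; rw [expand1 e1] at h
      rw [hsymm]; simpa using congrArg Complex.im h
    have h2a : q e2 a = 0 := by
      have h := hw2; rw [expand1 e2] at h
      rw [hsymm]; simpa using congrArg Complex.re h
    have h2b : q e2 b = 0 := by
      have h := hw2; rw [expand1 e2] at h
      rw [hsymm]; simpa using congrArg Complex.im h
    have hqa : q a a ≤ 0 := hsd a hla h1a h2a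
    have hqb : q b b ≤ 0 := hsd b hlb h1b h2b
    refine ⟨q a a + q b b, ?_, by linarith, ?_⟩
    · rw [hcj a b, show j a - I • j b = j a + I • j (-b) by rw [map_neg]; module,
        Q_expand hQ]
      simp only [map_neg, hsymm b a]
      push_cast
      ring
    · have hcs : q a b ^ 2 ≤ q a a * q b b := by
        have key : ∀ t : ℝ, 0 ≤ (-(q b b)) * (t*t) + (-(2 * q a b)) * t + (-(q a a)) := by
          intro t
          have hmem : q ℓ (a + t • b) = 0 := by
            rw [map_add, map_smul, hla, hlb]; simp
          have hmem1 : q e1 (a + t • b) = 0 := by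
            rw [map_add, map_smul, h1a, h1b]; simp
          have hmem2 : q e2 (a + t • b) = 0 := by
            rw [map_add, map_smul, h2a, h2b]; simp
          have hneg := hsd (a + t • b) hmem hmem1 hmem2
          have hexp : q (a + t • b) (a + t • b) = q a a + 2*t*(q a b) + (t*t) * q b b := by
            simp only [map_add, map_smul, LinearMap.add_apply, LinearMap.smul_apply, smul_eq_mul]
            rw [hsymm b a]
            ring
          rw [hexp] at hneg
          linarith
        have hd := discrim_le_zero key
        rw [discrim] at hd
        nlinarith
      rw [Q_expand hQ a b a b, hsymm b a, cx5]
      nlinarith [hcs, sq_nonneg (q a a - q b b), sq_nonneg (q a a + q b b)]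
  -- master computation
  have master : ∀ (c1 c2 : ℂ) (w : VC), Q (j ℓ) w = 0 → Q w (j e1) = 0 → Q w (j e2) = 0 →
      Q (j ℓ) (c1 • j e1 + c2 • j e2 + w) = 0 ∧
      Q (c1 • j e1 + c2 • j e2 + w) (j e1) = c1 ∧
      Q (c1 • j e1 + c2 • j e2 + w) (j e2) = c2 ∧
      Q (c1 • j e1 + c2 • j e2 + w) (c1 • j e1 + c2 • j e2 + w) = c1^2 + c2^2 + Q w w ∧
      Q (c1 • j e1 + c2 • j e2 + w) (cj (c1 • j e1 + c2 • j e2 + w))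
        = ((Complex.normSq c1 + Complex.normSq c2 : ℝ) : ℂ) + Q w (cj w) := by
    intro c1 c2 w hwl hw1 hw2
    have hw1' : Q (j e1) w = 0 := by rw [Qsym]; exact hw1
    have hw2' : Q (j e2) w = 0 := by rw [Qsym]; exact hw2
    have hcw1 : Q (j e1) (cj w) = 0 := by
      have h := Qcj (j e1) w
      rw [cjj] at h
      rw [h, hw1', map_zero]
    have hcw2 : Q (j e2) (cj w) = 0 := by
      have h := Qcj (j e2) w
      rw [cjj] at h
      rw [h, hw2', map_zero]
    have hcjY : cj (c1 • j e1 + c2 • j e2 + w) =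
        (starRingEnd ℂ c1) • j e1 + (starRingEnd ℂ c2) • j e2 + cj w := by
      rw [map_add, map_add, cjs, cjs, cjj, cjj]
    refine ⟨?_, ?_, ?_, ?_, ?_⟩
    · simp only [map_add, map_smul, smul_eq_mul, Qle1, Qle2, hwl]
      ring
    · simp only [map_add, map_smul, LinearMap.add_apply, LinearMap.smul_apply, smul_eq_mul,
        Qe11, Qe21, hw1]
      ring
    · simp only [map_add, map_smul, LinearMap.add_apply, LinearMap.smul_apply, smul_eq_mul,
        Qe12, Qe22, hw2]
      ring
    · simp only [map_add, map_smul, LinearMap.add_apply, LinearMap.smul_apply, smul_eq_mul,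
        Qe11, Qe12, Qe21, Qe22, hw1, hw2, hw1', hw2']
      ring
    · rw [hcjY]
      simp only [map_add, map_smul, LinearMap.add_apply, LinearMap.smul_apply, smul_eq_mul,
        Qe11, Qe12, Qe21, Qe22, hw1, hw2, hcw1, hcw2]
      push_cast
      linear_combination Complex.mul_conj c1 + Complex.mul_conj c2
  -- decomposition of any y orthogonal to ℓ
  have decomp : ∀ y : VC, ∃ c1 c2 : ℂ, ∃ w : VC,
      y = c1 • j e1 + c2 • j e2 + w ∧ (Q (j ℓ) y = 0 → Q (j ℓ) w = 0) ∧
      Q w (j e1) = 0 ∧ Q w (j e2) = 0 := by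
    intro y
    refine ⟨Q y (j e1), Q y (j e2), y - Q y (j e1) • j e1 - Q y (j e2) • j e2, by module,
      ?_, ?_, ?_⟩
    · intro hyl
      rw [map_sub, map_sub, map_smul, map_smul, Qle1, Qle2, hyl]
      simp
    · simp only [map_sub, map_smul, LinearMap.sub_apply, LinearMap.smul_apply, smul_eq_mul,
        Qe11, Qe21]
      ring
    · simp only [map_sub, map_smul, LinearMap.sub_apply, LinearMap.smul_apply, smul_eq_mul,
        Qe12, Qe22]
      ring
  -- the invariant
  set dd : VC → ℝ := fun y => ((starRingEnd ℂ) (Q y (j e1)) * Q y (j e2)).im with hdd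
  set S : Set VC := {y : VC | Q (j ℓ) y = 0 ∧ Q y y = 0 ∧
      0 < (Q y (cj y)).re ∧ (Q y (cj y)).im = 0} with hSdef
  -- dd never vanishes on S
  have hne0 : ∀ y ∈ S, dd y ≠ 0 := by
    intro y hy hd0
    obtain ⟨hyl, hyy, hypos, hyim⟩ := hy
    obtain ⟨c1, c2, w, hydec, hwl, hw1, hw2⟩ := decomp y
    have hwl' := hwl hyl
    obtain ⟨rr, hrr, hrrle, hcs⟩ := hwp w hwl' hw1 hw2
    obtain ⟨hYl, hYe1, hYe2, hYY, hYcY⟩ := master c1 c2 w hwl' hw1 hw2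
    rw [← hydec] at hYl hYe1 hYe2 hYY hYcY
    have hyy' : c1^2 + c2^2 + Q w w = 0 := by rw [← hYY]; exact hyy
    have hpos' : 0 < Complex.normSq c1 + Complex.normSq c2 + rr := by
      have h := hypos
      rw [hYcY, hrr] at h
      simpa using h
    have hddy : dd y = ((starRingEnd ℂ) c1 * c2).im := by
      simp only [hdd]; rw [hYe1, hYe2]
    rw [hddy] at hd0
    have h4 : Complex.normSq (c1 - I*c2) = Complex.normSq (c1 + I*c2) := by
      have := cx1 c1 c2
      rw [hd0] at this
      linarith
    have hprod : Complex.normSq (c1 + I*c2) * Complex.normSq (c1 - I*c2)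
        = Complex.normSq (Q w w) := by
      rw [← map_mul, cx6]
      have h5 : c1^2 + c2^2 = - Q w w := by linear_combination hyy'
      rw [h5, Complex.normSq_neg]
    have h6 := cx2 c1 c2
    nlinarith [Complex.normSq_nonneg (c1 + I*c2), Complex.normSq_nonneg (c1 - I*c2)]
  -- base points
  have hlam : ∀ lam : ℂ, lam ≠ 0 →
      lam • (j e1 + I • j e2) ∈ S ∧ 0 < dd (lam • (j e1 + I • j e2)) := by
    intro lam hne
    have hform : lam • (j e1 + I • j e2) = lam • j e1 + (lam * I) • j e2 + 0 := by module
    have h0l : Q (j ℓ) (0 : VC) = 0 := map_zero _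
    have h01 : Q (0 : VC) (j e1) = 0 := by simp
    have h02 : Q (0 : VC) (j e2) = 0 := by simp
    obtain ⟨hYl, hYe1, hYe2, hYY, hYcY⟩ := master lam (lam * I) 0 h0l h01 h02
    rw [← hform] at hYl hYe1 hYe2 hYY hYcY
    have hnpos : 0 < Complex.normSq lam := Complex.normSq_pos.mpr hne
    have hQ00 : Q (0 : VC) (cj 0) = 0 := by simp
    have hnsI : Complex.normSq (lam * I) = Complex.normSq lam := by
      rw [map_mul]; simp [Complex.normSq_I]
    have hQ000 : Q (0 : VC) (0 : VC) = 0 := by simp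
    refine ⟨⟨hYl, ?_, ?_, ?_⟩, ?_⟩
    · rw [hYY, hQ000]
      ring_nf
      rw [I_sq]
      ring
    · rw [hYcY, hQ00, hnsI]
      simp only [add_zero, Complex.ofReal_re]
      linarith
    · rw [hYcY, hQ00, hnsI]
      simp
    · have : dd (lam • (j e1 + I • j e2)) = ((starRingEnd ℂ) lam * (lam * I)).im := by
        simp only [hdd]; rw [hYe1, hYe2]
      rw [this]
      have : (starRingEnd ℂ) lam * (lam * I) = (Complex.normSq lam : ℂ) * I := by
        rw [← mul_assoc, mul_comm ((starRingEnd ℂ) lam) lam, Complex.mul_conj]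
      rw [this]
      simpa using hnpos
  -- conjugation symmetry
  have hcjS : ∀ y ∈ S, cj y ∈ S ∧ dd (cj y) = - dd y := by
    intro y hy
    obtain ⟨hyl, hyy, hypos, hyim⟩ := hy
    have hl' : Q (j ℓ) (cj y) = 0 := by
      have h := Qcj (j ℓ) y
      rw [cjj] at h
      rw [h, hyl, map_zero]
    have hyy' : Q (cj y) (cj y) = 0 := by rw [Qcj, hyy, map_zero]
    have hQc : Q (cj y) (cj (cj y)) = starRingEnd ℂ (Q y (cj y)) := Qcj y (cj y)
    have he1' : Q (cj y) (j e1) = starRingEnd ℂ (Q y (j e1)) := by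
      have h := Qcj y (j e1)
      rw [cjj] at h
      exact h
    have he2' : Q (cj y) (j e2) = starRingEnd ℂ (Q y (j e2)) := by
      have h := Qcj y (j e2)
      rw [cjj] at h
      exact h
    refine ⟨⟨hl', hyy', ?_, ?_⟩, ?_⟩
    · rw [hQc]; simpa using hypos
    · rw [hQc]; simp [hyim]
    · simp only [hdd]
      rw [he1', he2', Complex.conj_conj]
      exact cx10 _ _
  -- joining any point of S⁺ to the base point
  have hjoin : ∀ y, y ∈ S → 0 < dd y →
      JoinedIn (S ∩ {z | 0 < dd z}) y (j e1 + I • j e2) := by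
    intro y hyS hdy
    obtain ⟨hyl, hyy, hypos, hyim⟩ := hyS
    obtain ⟨c1, c2, w, hydec, hwl, hw1, hw2⟩ := decomp y
    have hwl' := hwl hyl
    obtain ⟨rr, hrr, hrrle, -⟩ := hwp w hwl' hw1 hw2
    obtain ⟨hYl, hYe1, hYe2, hYY, hYcY⟩ := master c1 c2 w hwl' hw1 hw2
    rw [← hydec] at hYl hYe1 hYe2 hYY hYcY
    have hyy' : c1^2 + c2^2 + Q w w = 0 := by rw [← hYY]; exact hyy
    have hpos' : 0 < Complex.normSq c1 + Complex.normSq c2 + rr := by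
      have h := hypos; rw [hYcY, hrr] at h; simpa using h
    have hddy : dd y = ((starRingEnd ℂ) c1 * c2).im := by
      simp only [hdd]; rw [hYe1, hYe2]
    set al := c1 + I*c2 with hal
    set be := c1 - I*c2 with hbe
    have hd4 : 4 * dd y = Complex.normSq be - Complex.normSq al := by
      rw [hddy, hal, hbe]; exact cx1 c1 c2
    have hnal : 0 ≤ Complex.normSq al := Complex.normSq_nonneg al
    have hbal : Complex.normSq al < Complex.normSq be := by nlinarith
    have hposal : 0 < Complex.normSq al + Complex.normSq be + 2*rr := by
      have h := cx2 c1 c2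
      rw [← hal, ← hbe] at h
      nlinarith
    have hbe0 : be ≠ 0 := by
      intro h
      rw [h] at hbal
      simp only [Complex.normSq_zero] at hbal
      nlinarith
    set σ : ℝ → VC := fun t =>
      (((t:ℂ)^2 * al + be)/2) • j e1 + (I * (be - (t:ℂ)^2 * al)/2) • j e2 + (t:ℂ) • w with hσ
    have hσmem : ∀ t : ℝ, 0 ≤ t → t ≤ 1 → σ t ∈ S ∩ {z | 0 < dd z} := by
      intro t ht0 ht1
      have hwlt : Q (j ℓ) ((t:ℂ) • w) = 0 := by rw [map_smul, hwl', smul_zero]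
      have hw1t : Q ((t:ℂ) • w) (j e1) = 0 := by
        rw [map_smul, LinearMap.smul_apply, hw1, smul_zero]
      have hw2t : Q ((t:ℂ) • w) (j e2) = 0 := by
        rw [map_smul, LinearMap.smul_apply, hw2, smul_zero]
      obtain ⟨gYl, gYe1, gYe2, gYY, gYcY⟩ :=
        master (((t:ℂ)^2 * al + be)/2) (I * (be - (t:ℂ)^2 * al)/2) ((t:ℂ) • w) hwlt hw1t hw2t
      have hQwwt : Q ((t:ℂ) • w) ((t:ℂ) • w) = (t:ℂ)^2 * Q w w := by
        simp only [map_smul, LinearMap.smul_apply, smul_eq_mul]; ring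
      have hQwct : Q ((t:ℂ) • w) (cj ((t:ℂ) • w)) = ((t^2 * rr : ℝ) : ℂ) := by
        rw [cjs]
        simp only [map_smul, LinearMap.smul_apply, smul_eq_mul, Complex.conj_ofReal, hrr]
        push_cast
        ring
      have hσt : σ t = (((t:ℂ)^2 * al + be)/2) • j e1 + (I * (be - (t:ℂ)^2 * al)/2) • j e2
          + (t:ℂ) • w := rfl
      have hA : (((t:ℂ)^2 * al + be)/2) + I * (I * (be - (t:ℂ)^2 * al)/2) = (t:ℂ)^2*al :=
        cx9 _ _
      have hB : (((t:ℂ)^2 * al + be)/2) - I * (I * (be - (t:ℂ)^2 * al)/2) = be :=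
        cx8 _ _
      have h2 := cx2 (((t:ℂ)^2 * al + be)/2) (I * (be - (t:ℂ)^2 * al)/2)
      rw [hA, hB, cx4] at h2
      have ht2 : t^2 ≤ 1 := by nlinarith
      constructor
      · refine ⟨by rw [hσt]; exact gYl, ?_, ?_, ?_⟩
        · rw [hσt, gYY, hQwwt, cx3 ((t:ℂ)^2*al) be]
          have halbe : al * be = c1^2 + c2^2 := by rw [hal, hbe]; exact cx6 c1 c2
          linear_combination ((t:ℂ))^2 * hyy' + ((t:ℂ))^2 * halbe
        · rw [hσt, gYcY, hQwct]
          simp only [← Complex.ofReal_add, Complex.ofReal_re]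
          by_cases htz : t = 0
          · subst htz
            simp only [ne_eq, OfNat.ofNat_ne_zero, not_false_eq_true, zero_pow, zero_mul,
              mul_zero, add_zero]
            nlinarith
          · have htp : 0 < t^2 := by positivity
            have hterm1 : 0 ≤ (1 - t^2) * (Complex.normSq be - t^2 * Complex.normSq al) := by
              apply mul_nonneg
              · linarith
              · nlinarith
            have hterm2 : 0 < t^2 * (Complex.normSq al + Complex.normSq be + 2*rr) :=
              mul_pos htp hposal
            nlinarith
        · rw [hσt, gYcY, hQwct]
          simp only [← Complex.ofReal_add, Complex.ofReal_im]
      · simp only [Set.mem_setOf_eq, hdd]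
        rw [hσt, gYe1, gYe2]
        have hcx := cx1 (((t:ℂ)^2 * al + be)/2) (I * (be - (t:ℂ)^2 * al)/2)
        rw [hA, hB, cx4] at hcx
        have ht4 : (t^2)^2 ≤ 1 := by nlinarith
        nlinarith [mul_nonneg hnal (sub_nonneg.mpr ht4)]
    have hσcont : Continuous σ := by
      rw [hσ]
      apply Continuous.add
      apply Continuous.add
      · exact (((((Complex.continuous_ofReal.pow 2).mul continuous_const).add
          continuous_const).div_const 2).smul continuous_const)
      · exact ((continuous_const.mul (continuous_const.sub
          ((Complex.continuous_ofReal.pow 2).mul continuous_const))).div_const 2).smul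
          continuous_const
      · exact Complex.continuous_ofReal.smul continuous_const
    have hσ1 : σ 1 = y := by
      have e1eq : ((((1:ℝ):ℂ))^2 * al + be)/2 = c1 := by
        rw [hal, hbe]; push_cast; ring
      have e2eq : I*(be - (((1:ℝ):ℂ))^2*al)/2 = c2 := by
        rw [hal, hbe]; push_cast
        linear_combination (-c2) * I_sq
      have e3eq : (((1:ℝ):ℂ)) • w = w := by norm_num
      rw [hσ]
      simp only []
      rw [e1eq, e2eq, e3eq, ← hydec]
    have hjp : JoinedIn (S ∩ {z | 0 < dd z}) (σ 0) y := by
      refine ⟨⟨⟨fun s => σ s, hσcont.comp continuous_subtype_val⟩, by simp, ?_⟩, fun s => ?_⟩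
      · simpa using hσ1
      · exact hσmem s (unitInterval.nonneg s) (unitInterval.le_one s)
    have hσ0eq : σ 0 = (be/2) • (j e1 + I • j e2) := by
      rw [hσ]
      simp only []
      push_cast
      norm_num
      module
    have hb2 : be/2 ≠ 0 := div_ne_zero hbe0 two_ne_zero
    have hpc := isPathConnected_compl_singleton_of_one_lt_rank
      (E := ℂ) (by rw [Complex.rank_real_complex]; norm_num) (0:ℂ)
    have hj2 := hpc.joinedIn (be/2) (by simpa using hb2) 1 (by simp)
    obtain ⟨γ, hγ⟩ := hj2
    have hmap : JoinedIn (S ∩ {z | 0 < dd z}) ((be/2) • (j e1 + I • j e2))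
        ((1:ℂ) • (j e1 + I • j e2)) := by
      refine ⟨γ.map (continuous_id.smul continuous_const), fun s => ?_⟩
      simp only [Path.map_coe, Function.comp_apply]
      obtain ⟨hmem, hddp⟩ := hlam (γ s) (by simpa using hγ s)
      exact ⟨hmem, hddp⟩
    rw [one_smul] at hmap
    exact hjp.symm.trans (hσ0eq ▸ hmap)
  -- path connectedness of the two pieces
  obtain ⟨hmem1, hdd1⟩ := hlam 1 one_ne_zero
  rw [one_smul] at hmem1 hdd1
  have hSplus_pc : IsPathConnected (S ∩ {z | 0 < dd z}) :=
    ⟨j e1 + I • j e2, ⟨hmem1, hdd1⟩, fun {y} hy => ((hjoin y hy.1 hy.2).symm)⟩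
  have hcjcont : Continuous cj := cj.continuous_of_finiteDimensional
  have hSminus_pc : IsPathConnected (S ∩ {z | dd z < 0}) := by
    obtain ⟨hcmem, hcdd⟩ := hcjS _ hmem1
    refine ⟨cj (j e1 + I • j e2), ⟨hcmem, by simp only [Set.mem_setOf_eq]; rw [hcdd]; linarith⟩,
      ?_⟩
    intro y hy
    obtain ⟨hymem, hcddy⟩ := hcjS y hy.1
    have hy2 : dd y < 0 := hy.2
    have hyplus : cj y ∈ S ∩ {z | 0 < dd z} := by
      refine ⟨hymem, ?_⟩
      simp only [Set.mem_setOf_eq]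
      rw [hcddy]
      linarith
    obtain ⟨γ, hγ⟩ := hjoin (cj y) hyplus.1 hyplus.2
    refine JoinedIn.symm ⟨(γ.map hcjcont).cast (cjcj y).symm rfl, fun s => ?_⟩
    have hs := hγ s
    have h1 := (hcjS _ hs.1).1
    have h2 := (hcjS _ hs.1).2
    have hval : ((γ.map hcjcont).cast (cjcj y).symm rfl) s = cj (γ s) := rfl
    rw [hval]
    refine ⟨h1, ?_⟩
    simp only [Set.mem_setOf_eq]
    rw [h2]
    have := hs.2
    simp only [Set.mem_setOf_eq] at this
    linarith
  -- continuity of dd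
  have hQ1cont : Continuous fun y : VC => Q y (j e1) := by
    have : (fun y : VC => Q y (j e1)) = fun y => (LinearMap.flip Q (j e1)) y := by
      ext y; simp [LinearMap.flip_apply]
    rw [this]
    exact (LinearMap.flip Q (j e1)).continuous_of_finiteDimensional
  have hQ2cont : Continuous fun y : VC => Q y (j e2) := by
    have : (fun y : VC => Q y (j e2)) = fun y => (LinearMap.flip Q (j e2)) y := by
      ext y; simp [LinearMap.flip_apply]
    rw [this]
    exact (LinearMap.flip Q (j e2)).continuous_of_finiteDimensional
  have hddcont : Continuous dd := by
    rw [hdd]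
    exact Complex.continuous_im.comp ((Complex.continuous_conj.comp hQ1cont).mul hQ2cont)
  -- pass to the subtype
  have main : Nonempty (ConnectedComponents ↥S ≃ Fin 2) := by
    set U : Set ↥S := {x : ↥S | 0 < dd x.val} with hU
    have hfc : Continuous fun x : ↥S => dd x.val := hddcont.comp continuous_subtype_val
    have hUopen : IsOpen U := by
      have hUpre : U = (fun x : ↥S => dd x.val) ⁻¹' Set.Ioi 0 := rfl
      rw [hUpre]
      exact isOpen_Ioi.preimage hfc
    have hUcomp : Uᶜ = (fun x : ↥S => dd x.val) ⁻¹' Set.Iio 0 := by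
      ext x
      simp only [Set.mem_compl_iff, hU, Set.mem_setOf_eq, Set.mem_preimage, Set.mem_Iio]
      constructor
      · intro h
        rcases lt_trichotomy (dd x.val) 0 with h' | h' | h'
        · exact h'
        · exact absurd h' (hne0 x.val x.2)
        · exact absurd h' h
      · intro h h'
        linarith
    have hUclosed : IsClosed U := by
      rw [← isOpen_compl_iff, hUcomp]
      exact isOpen_Iio.preimage hfc
    have himgU : Subtype.val '' U = S ∩ {z | 0 < dd z} := by
      ext z
      constructor
      · rintro ⟨x, hx, rfl⟩
        exact ⟨x.2, hx⟩
      · rintro ⟨hzS, hzd⟩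
        exact ⟨⟨z, hzS⟩, hzd, rfl⟩
    have himgUc : Subtype.val '' Uᶜ = S ∩ {z | dd z < 0} := by
      ext z
      constructor
      · rintro ⟨x, hx, rfl⟩
        refine ⟨x.2, ?_⟩
        simp only [Set.mem_setOf_eq]
        have h2 : ¬ 0 < dd x.val := hx
        rcases lt_trichotomy (dd x.val) 0 with h | h | h
        · exact h
        · exact absurd h (hne0 x.val x.2)
        · exact absurd h h2
      · rintro ⟨hzS, hzd⟩
        simp only [Set.mem_setOf_eq] at hzd
        refine ⟨⟨z, hzS⟩, ?_, rfl⟩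
        simp only [Set.mem_compl_iff, hU, Set.mem_setOf_eq]
        intro h
        linarith
    have hUconn : IsPreconnected U := by
      have := hSplus_pc.isConnected.isPreconnected
      rw [← himgU] at this
      exact (Topology.IsInducing.isPreconnected_image Topology.IsInducing.subtypeVal).mp this
    have hUcconn : IsPreconnected Uᶜ := by
      have := hSminus_pc.isConnected.isPreconnected
      rw [← himgUc] at this
      exact (Topology.IsInducing.isPreconnected_image Topology.IsInducing.subtypeVal).mp this
    have hUne : U.Nonempty := ⟨⟨_, hmem1⟩, hdd1⟩
    obtain ⟨hcm, hcd⟩ := hcjS _ hmem1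
    have hUcne : Uᶜ.Nonempty := by
      refine ⟨⟨_, hcm⟩, ?_⟩
      simp only [Set.mem_compl_iff, hU, Set.mem_setOf_eq]
      intro h
      rw [hcd] at h
      linarith
    exact two_components_of_clopen U ⟨hUclosed, hUopen⟩ hUconn hUcconn hUne hUcne
  exact main
end

section
/- Let V be a finite-dimensional real vector space with a symmetric bilinear form q, let ℓ ∈ V be nonzero with q(ℓ,ℓ) = 0, and let p ∈ V_ℂ satisfy q(p,p) = 0, q(p,p̄) > 0 and q(p,ℓ) = 0. Then the vectors p, p̄, ℓ are ℂ-linearly independent in V_ℂ, and every x ∈ span_ℂ{p, p̄, ℓ} with q(x,x) = 0 and q(x,x̄) > 0 lies in span_ℂ{p, ℓ} or in span_ℂ{p̄, ℓ}. -/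
open Complex

/-- for a symmetric bilinear form `q` on a finite-dimensional real vector
space `V`, a nonzero isotropic `ℓ ∈ V`, and `p ∈ V_ℂ` with `q(p,p) = 0`, `q(p,p̄) > 0`,
`q(p,ℓ) = 0`: the vectors `p, p̄, ℓ` are ℂ-linearly independent, and every `x` in their
span with `q(x,x) = 0` and `q(x,x̄) > 0` lies in `span_ℂ{p, ℓ}` or in `span_ℂ{p̄, ℓ}`.
Here `VC` is the complexification of `V`, with real points `j`, conjugation `cj`, and
`Q` the ℂ-bilinear extension of `q`. -/
theorem period_domain_meets_plane_in_two_lines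
    {V : Type*} [AddCommGroup V] [Module ℝ V] [FiniteDimensional ℝ V]
    (q : LinearMap.BilinForm ℝ V) (hsymm : ∀ x y : V, q x y = q y x)
    {VC : Type*} [AddCommGroup VC] [Module ℂ VC]
    (j : V →ₗ[ℝ] VC)
    (hspan : ∀ z : VC, ∃ a b : V, z = j a + I • j b)
    (hindep : ∀ a b : V, j a + I • j b = 0 → a = 0 ∧ b = 0)
    (cj : VC →ₗ[ℝ] VC)
    (hcj : ∀ a b : V, cj (j a + I • j b) = j a - I • j b)
    (Q : LinearMap.BilinForm ℂ VC)
    (hQ : ∀ a b : V, Q (j a) (j b) = (q a b : ℂ))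
    (ℓ : V) (hl0 : ℓ ≠ 0) (hll : q ℓ ℓ = 0)
    (p : VC) (hpp : Q p p = 0)
    (hpos : 0 < (Q p (cj p)).re) (him : (Q p (cj p)).im = 0)
    (hpl : Q p (j ℓ) = 0) :
    LinearIndependent ℂ ![p, cj p, j ℓ] ∧
    ∀ x ∈ Submodule.span ℂ ({p, cj p, j ℓ} : Set VC),
      Q x x = 0 → 0 < (Q x (cj x)).re → (Q x (cj x)).im = 0 →
      x ∈ Submodule.span ℂ ({p, j ℓ} : Set VC) ∨
      x ∈ Submodule.span ℂ ({cj p, j ℓ} : Set VC) := by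
  obtain ⟨a, b, hp⟩ := hspan p
  -- expansion of Q on "coordinates"
  have key : ∀ a b c d : V, Q (j a + I • j b) (j c + I • j d)
      = ((q a c : ℂ) - (q b d : ℂ)) + ((q a d : ℂ) + (q b c : ℂ)) * I := by
    intro a b c d
    simp only [map_add, map_smul, LinearMap.add_apply, LinearMap.smul_apply, hQ,
      smul_eq_mul]
    ring_nf
    rw [Complex.I_sq]
    ring
  have key2 : ∀ a b c : V, Q (j a + I • j b) (j c)
      = (q a c : ℂ) + (q b c : ℂ) * I := by
    intro a b c
    simp only [map_add, LinearMap.add_apply, LinearMap.smul_apply, map_smul, hQ,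
      smul_eq_mul]
    ring
  have key3 : ∀ a b c : V, Q (j c) (j a + I • j b)
      = (q c a : ℂ) + (q c b : ℂ) * I := by
    intro a b c
    simp only [map_add, map_smul, hQ, smul_eq_mul]
    ring
  have hcjp : cj p = j a + I • j (-b) := by
    rw [hp, hcj, map_neg]
    simp [sub_eq_add_neg]
  -- real equations from hpp
  rw [hp, key] at hpp
  have him1 : q a b = 0 := by
    have h := congrArg Complex.im hpp
    simp at h
    have hba : q b a = q a b := hsymm b a
    rw [hba] at h
    linarith
  have hre1 : q a a = q b b := by
    have h := congrArg Complex.re hpp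
    simp at h
    linarith
  -- real equations from hpl
  rw [hp, key2] at hpl
  have hal : q a ℓ = 0 := by
    have h := congrArg Complex.re hpl
    simpa using h
  have hbl : q b ℓ = 0 := by
    have h := congrArg Complex.im hpl
    simpa using h
  have hne : ((q a a + q b b : ℝ) : ℂ) ≠ 0 := by
    rw [Complex.ofReal_ne_zero]
    intro h
    rw [hre1] at h
    have hb : q b b = 0 := by linarith
    have ha : q a a = 0 := by rw [hre1]; exact hb
    rw [hp] at hpos
    rw [hcj] at hpos
    have : Q (j a + I • j b) (j a - I • j b) = ((q a a + q b b : ℝ) : ℂ) := by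
      rw [sub_eq_add_neg, ← smul_neg, ← map_neg j, key]
      simp only [map_neg, LinearMap.neg_apply]
      rw [him1, hsymm b a, him1]
      push_cast
      ring
    rw [this, ha, hb] at hpos
    simp at hpos
  have v2 : Q p (cj p) = ((q a a + q b b : ℝ) : ℂ) := by
    rw [hcjp, hp, key]
    simp only [map_neg, LinearMap.neg_apply]
    rw [him1, hsymm b a, him1]
    push_cast
    ring
  have v2' : Q p (cj p) ≠ 0 := by rw [v2]; exact hne
  have v4 : Q (cj p) p = ((q a a + q b b : ℝ) : ℂ) := by
    rw [hcjp, hp, key]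
    simp only [map_neg, LinearMap.neg_apply]
    rw [him1, hsymm b a, him1]
    push_cast
    ring
  have v1 : Q p p = 0 := by
    rw [hp, key, hre1, him1, hsymm b a, him1]
    push_cast
    ring
  have v5 : Q (cj p) (cj p) = 0 := by
    rw [hcjp, key]
    simp only [map_neg, LinearMap.neg_apply]
    rw [hre1, him1, hsymm b a, him1]
    push_cast
    ring
  have v3 : Q p (j ℓ) = 0 := by
    rw [hp, key2, hal, hbl]
    simp
  have v6 : Q (cj p) (j ℓ) = 0 := by
    rw [hcjp, key2]
    simp only [map_neg, LinearMap.neg_apply]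
    rw [hal, hbl]
    simp
  have v7 : Q (j ℓ) p = 0 := by
    rw [hp, key3, hsymm ℓ a, hal, hsymm ℓ b, hbl]
    simp
  have v8 : Q (j ℓ) (cj p) = 0 := by
    rw [hcjp, key3]
    rw [hsymm ℓ a, hal, hsymm ℓ (-b)]
    simp only [map_neg, LinearMap.neg_apply]
    rw [hbl]
    simp
  have v9 : Q (j ℓ) (j ℓ) = 0 := by rw [hQ, hll]; simp
  have hl0' : j ℓ ≠ 0 := by
    intro h
    apply hl0
    have : j ℓ + I • j 0 = 0 := by simp [h]
    exact (hindep ℓ 0 this).1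
  constructor
  · rw [Fintype.linearIndependent_iff]
    intro g hg
    simp only [Fin.sum_univ_three, Matrix.cons_val_zero, Matrix.cons_val_one,
      Matrix.head_cons, Matrix.cons_val_two, Matrix.tail_cons] at hg
    have h0 : g 0 = 0 := by
      have h := congrArg (fun z => Q z (cj p)) hg
      simp only [map_add, map_smul, LinearMap.add_apply, LinearMap.smul_apply,
        v2, v5, v8, smul_eq_mul, map_zero, LinearMap.zero_apply, mul_zero,
        add_zero] at h
      rcases mul_eq_zero.mp h with h | h
      · exact h
      · exact absurd h hne
    have h1 : g 1 = 0 := by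
      have h := congrArg (fun z => Q z p) hg
      simp only [map_add, map_smul, LinearMap.add_apply, LinearMap.smul_apply,
        v1, v4, v7, smul_eq_mul, map_zero, LinearMap.zero_apply, mul_zero,
        zero_add, add_zero] at h
      rcases mul_eq_zero.mp h with h | h
      · exact h
      · exact absurd h hne
    rw [h0, h1] at hg
    simp only [zero_smul, zero_add] at hg
    have h2 : g 2 = 0 := by
      rcases smul_eq_zero.mp hg with h | h
      · exact h
      · exact absurd h hl0'
    intro i
    fin_cases i <;> assumption
  · intro x hx hxx _ _
    have : ({p, cj p, j ℓ} : Set VC) = insert p {cj p, j ℓ} := rfl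
    rw [this, Submodule.mem_span_insert] at hx
    obtain ⟨α, z, hz, hxeq⟩ := hx
    rw [Submodule.mem_span_pair] at hz
    obtain ⟨β, γ, hzeq⟩ := hz
    have hxrep : x = α • p + β • cj p + γ • j ℓ := by
      rw [hxeq, ← hzeq]; abel
    have hQxx : Q x x = (α * β + β * α) * Q p (cj p) := by
      rw [hxrep]
      simp only [map_add, map_smul, LinearMap.add_apply, LinearMap.smul_apply,
        v1, v3, v5, v6, v7, v8, v9, smul_eq_mul]
      rw [v2, v4]
      ring
    rw [hQxx] at hxx
    rcases mul_eq_zero.mp hxx with h | h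
    · have hab : α * β = 0 := by
        have : (2:ℂ) * (α * β) = 0 := by rw [← h]; ring
        simpa using this
      rcases mul_eq_zero.mp hab with h | h
      · right
        rw [Submodule.mem_span_pair]
        exact ⟨β, γ, by rw [hxrep, h]; simp⟩
      · left
        rw [Submodule.mem_span_pair]
        exact ⟨α, γ, by rw [hxrep, h]; simp⟩
    · exact absurd h v2'
end

section
/- Let V be a finite-dimensional ℚ-vector space with a nondegenerate symmetric bilinear form q, and let ℓ ∈ V be nonzero with q(ℓ,ℓ) = 0. Then for every x ∈ ℓ^⊥ that is not a rational multiple of ℓ, there exists γ ∈ ℓ^⊥ with q(γ,x) ≠ 0, and the orbit {x + q(γ,x)·ℓ : γ ∈ ℓ^⊥} of x under the maps T_γ(x) = x + q(γ,x)·ℓ is infinite. -/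
/-- for a nondegenerate symmetric bilinear form `q` on a finite-dimensional
ℚ-vector space `V` and `ℓ ≠ 0` isotropic: every `x ∈ ℓ^⊥` which is not a rational
multiple of `ℓ` admits `γ ∈ ℓ^⊥` with `q(γ,x) ≠ 0`, and the orbit
`{x + q(γ,x)·ℓ : γ ∈ ℓ^⊥}` of `x` under the maps `T_γ` is infinite. -/
theorem Tmap_orbit_infinite
    {V : Type*} [AddCommGroup V] [Module ℚ V] [FiniteDimensional ℚ V]
    (q : LinearMap.BilinForm ℚ V) (hsymm : ∀ x y : V, q x y = q y x)
    (hnd : ∀ x : V, (∀ y : V, q x y = 0) → x = 0)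
    (ℓ : V) (hl0 : ℓ ≠ 0) (hll : q ℓ ℓ = 0)
    (x : V) (hxl : q ℓ x = 0) (hx : ¬ ∃ c : ℚ, x = c • ℓ) :
    (∃ γ : V, q ℓ γ = 0 ∧ q γ x ≠ 0) ∧
    Set.Infinite {y : V | ∃ γ : V, q ℓ γ = 0 ∧ y = x + q γ x • ℓ} := by
  obtain ⟨z, hz⟩ : ∃ z, q ℓ z ≠ 0 := by
    by_contra h; push_neg at h; exact hl0 (hnd ℓ h)
  have hexists : ∃ γ : V, q ℓ γ = 0 ∧ q γ x ≠ 0 := by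
    by_contra h; push_neg at h
    apply hx
    refine ⟨q z x / q ℓ z, ?_⟩
    have key : ∀ y : V, q (x - (q z x / q ℓ z) • ℓ) y = 0 := by
      intro y
      have hk : q ℓ (y - (q ℓ y / q ℓ z) • z) = 0 := by
        simp only [map_sub, map_smul, smul_eq_mul]
        field_simp
        ring
      have h2 := h _ hk
      simp only [LinearMap.sub_apply, LinearMap.smul_apply, map_sub, map_smul,
        smul_eq_mul] at h2 ⊢
      have h3 : q y x = (q ℓ y / q ℓ z) * q z x := by linarith
      rw [hsymm x y, h3]
      field_simp
      ring
    exact sub_eq_zero.mp (hnd _ key)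
  refine ⟨hexists, ?_⟩
  obtain ⟨γ, hγ1, hγ2⟩ := hexists
  apply Set.infinite_of_injective_forall_mem
    (f := fun c : ℚ => x + (c * q γ x) • ℓ)
  · intro a b hab
    simp only [add_right_injective] at hab
    have h2 : (a * q γ x) • ℓ = (b * q γ x) • ℓ := by
      exact add_left_cancel hab
    have := smul_left_injective ℚ hl0 h2
    exact mul_right_cancel₀ hγ2 this
  · intro c
    refine ⟨c • γ, ?_, ?_⟩
    · simp [map_smul, hγ1]
    · simp [map_smul, smul_eq_mul]
end

section
/- Let V be a finite-dimensional real vector space with a symmetric bilinear form q of signature (3, n−3), where n = dim V ≥ 4. Let x ∈ V satisfy q(x,x) > 0 and let ℓ ∈ V be nonzero with q(ℓ,ℓ) = 0 and q(x,ℓ) = 0. Then there is no y ∈ V_ℂ with q(y,y) = 0, q(y,ȳ) > 0, q(y,x) = 0 and q(y,ℓ) = 0. -/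
open Complex

/-- for `q` of signature `(3, n-3)` on `V`, `n = dim V ≥ 4`, `x ∈ V` with
`q(x,x) > 0` and `ℓ ≠ 0` with `q(ℓ,ℓ) = 0`, `q(x,ℓ) = 0`: there is no `y ∈ V_ℂ` with
`q(y,y) = 0`, `q(y,ȳ) > 0`, `q(y,x) = 0` and `q(y,ℓ) = 0`. Here `VC` is the
complexification of `V`, with real points `j`, conjugation `cj`, and `Q` the ℂ-bilinear
extension of `q`. -/
theorem no_period_orthogonal_to_positive_and_null
    {V : Type*} [AddCommGroup V] [Module ℝ V] [FiniteDimensional ℝ V]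
    (q : LinearMap.BilinForm ℝ V) (hsymm : ∀ x y : V, q x y = q y x)
    (n : ℕ) (hn : Module.finrank ℝ V = n) (hn4 : 4 ≤ n)
    (hsig : HasSignature q 3 (n - 3))
    {VC : Type*} [AddCommGroup VC] [Module ℂ VC]
    (j : V →ₗ[ℝ] VC)
    (hspan : ∀ z : VC, ∃ a b : V, z = j a + I • j b)
    (hindep : ∀ a b : V, j a + I • j b = 0 → a = 0 ∧ b = 0)
    (cj : VC →ₗ[ℝ] VC)
    (hcj : ∀ a b : V, cj (j a + I • j b) = j a - I • j b)
    (Q : LinearMap.BilinForm ℂ VC)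
    (hQ : ∀ a b : V, Q (j a) (j b) = (q a b : ℂ))
    (x : V) (hx : 0 < q x x)
    (ℓ : V) (hl0 : ℓ ≠ 0) (hll : q ℓ ℓ = 0) (hxl : q x ℓ = 0) :
    ¬ ∃ y : VC, Q y y = 0 ∧ 0 < (Q y (cj y)).re ∧ (Q y (cj y)).im = 0 ∧
      Q y (j x) = 0 ∧ Q y (j ℓ) = 0 := by
  rintro ⟨y, hy1, hy2, -, hy4, hy5⟩
  obtain ⟨a, b, rfl⟩ := hspan y
  have key : ∀ c : V, Q (j a + I • j b) (j c) = ((q a c : ℝ) : ℂ) + ((q b c : ℝ) : ℂ) * I := by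
    intro c
    simp [map_add, LinearMap.map_smul, LinearMap.add_apply, LinearMap.smul_apply, hQ,
      smul_eq_mul, mul_comm]
  have extract : ∀ r s : ℝ, ((r : ℝ) : ℂ) + ((s : ℝ) : ℂ) * I = 0 → r = 0 ∧ s = 0 := by
    intro r s h
    simpa [Complex.ext_iff] using h
  have hax : q a x = 0 ∧ q b x = 0 := extract _ _ (by rw [← key]; exact hy4)
  have hal : q a ℓ = 0 ∧ q b ℓ = 0 := extract _ _ (by rw [← key]; exact hy5)
  -- Q y y = 0
  have h1 : Q (j a + I • j b) (j a + I • j b)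
      = Q (j a + I • j b) (j a) + I * Q (j a + I • j b) (j b) := by
    simp [map_add, LinearMap.map_smul, smul_eq_mul]
  rw [h1, key, key] at hy1
  rw [Complex.ext_iff] at hy1
  simp [Complex.ext_iff] at hy1
  obtain ⟨hyre, hyim⟩ := hy1
  have haabb : q a a = q b b := by linarith
  have hab : q a b = 0 := by
    have h2 := hsymm a b
    linarith
  have hba : q b a = 0 := by rw [hsymm]; exact hab
  -- Q y (cj y)
  have ecy : (Q (j a + I • j b) (cj (j a + I • j b))).re = q a a + q b b := by
    rw [hcj a b]
    have h1' : Q (j a + I • j b) (j a - I • j b)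
        = Q (j a + I • j b) (j a) - I * Q (j a + I • j b) (j b) := by
      simp [map_sub, LinearMap.map_smul, smul_eq_mul]
    rw [h1', key, key]
    simp [hab, hba]
  rw [ecy] at hy2
  have haa : 0 < q a a := by linarith
  have hbb : 0 < q b b := by linarith
  -- symmetric versions of orthogonality
  have hxa : q x a = 0 := by rw [hsymm]; exact hax.1
  have hxb : q x b = 0 := by rw [hsymm]; exact hax.2
  have hla : q ℓ a = 0 := by rw [hsymm]; exact hal.1
  have hlb : q ℓ b = 0 := by rw [hsymm]; exact hal.2
  have hlx : q ℓ x = 0 := by rw [hsymm]; exact hxl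
  -- set up the four vectors
  set vs : Fin 4 → V := ![x, a, b, ℓ] with hvs
  have hli : LinearIndependent ℝ vs := by
    rw [Fintype.linearIndependent_iff]
    intro c hc
    rw [Fin.sum_univ_four] at hc
    simp only [hvs, Matrix.cons_val_zero, Matrix.cons_val_one, Matrix.head_cons,
      Matrix.cons_val_two, Matrix.tail_cons, Matrix.cons_val_three] at hc
    have e0 : c 0 = 0 := by
      have h := congrArg (fun v => q x v) hc
      simp only [map_add, map_smul, smul_eq_mul, map_zero, hxa, hxb, hxl,
        mul_zero, add_zero] at h
      exact (mul_eq_zero.mp h).resolve_right (ne_of_gt hx)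
    have e1 : c 1 = 0 := by
      have h := congrArg (fun v => q a v) hc
      simp only [map_add, map_smul, smul_eq_mul, map_zero, hax.1, hab, hal.1,
        mul_zero, add_zero, zero_add] at h
      exact (mul_eq_zero.mp h).resolve_right (ne_of_gt haa)
    have e2 : c 2 = 0 := by
      have h := congrArg (fun v => q b v) hc
      simp only [map_add, map_smul, smul_eq_mul, map_zero, hax.2, hba, hal.2,
        mul_zero, add_zero, zero_add] at h
      exact (mul_eq_zero.mp h).resolve_right (ne_of_gt hbb)
    have e3 : c 3 = 0 := by
      rw [e0, e1, e2] at hc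
      simp at hc
      rcases hc with h | h
      · exact h
      · exact absurd h hl0
    intro i
    fin_cases i <;> assumption
  set U : Submodule ℝ V := Submodule.span ℝ (Set.range vs) with hU
  have hUpos : ∀ v ∈ U, 0 ≤ q v v := by
    intro v hv
    rw [hU, Submodule.mem_span_range_iff_exists_fun] at hv
    obtain ⟨c, rfl⟩ := hv
    rw [Fin.sum_univ_four]
    simp only [hvs, Matrix.cons_val_zero, Matrix.cons_val_one, Matrix.head_cons,
      Matrix.cons_val_two, Matrix.tail_cons, Matrix.cons_val_three]
    simp only [map_add, map_smul, smul_eq_mul, LinearMap.add_apply, LinearMap.smul_apply,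
      hxa, hxb, hxl, hax.1, hax.2, hab, hba, hal.1, hal.2, hla, hlb, hlx, hll,
      mul_zero, add_zero, zero_add]
    nlinarith [mul_self_nonneg (c 0), mul_self_nonneg (c 1), mul_self_nonneg (c 2),
      hx, haa, hbb]
  obtain ⟨P, N, hcompl, horth, hP, hN, hpos, hneg⟩ := hsig
  have hdisj : Disjoint U N := by
    rw [Submodule.disjoint_def]
    intro v hvU hvN
    by_contra h0
    exact absurd (hneg v hvN h0) (not_lt.mpr (hUpos v hvU))
  have h4 : Module.finrank ℝ ↥U = 4 := by
    rw [hU, finrank_span_eq_card hli]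
    simp
  have hsum := Submodule.finrank_sup_add_finrank_inf_eq U N
  rw [disjoint_iff.mp hdisj] at hsum
  have hle : Module.finrank ℝ ↥(U ⊔ N) ≤ n := hn ▸ Submodule.finrank_le _
  simp [h4, hN, finrank_bot] at hsum
  omega
end

section
/- Let V be a real vector space of dimension 4n (n ≥ 1) with complexification V_ℂ and conjugation v ↦ v̄, and let σ be an alternating ℂ-bilinear 2-form on V_ℂ, with conjugate form σ̄ defined by σ̄(v,w) = conj(σ(v̄, w̄)). Assume the pointwise C-symplectic conditions: σ^{n+1} = 0 and σ^n ∧ σ̄^n ≠ 0, the powers being wedge powers of 2-forms on V_ℂ. Let K = {v ∈ V_ℂ : σ(v,w) = 0 for all w ∈ V_ℂ}. Then dim_ℂ K = 2n, K ∩ K̄ = {0}, and V_ℂ = K ⊕ K̄, where K̄ is the image of K under conjugation. -/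
open Complex
open scoped TensorProduct

/-- Wedge product of two alternating forms (via `domCoprod`, i.e. the sum over shuffles). -/
noncomputable def altWedge {R : Type*} [CommRing R] {M : Type*} [AddCommGroup M] [Module R M]
    {a b : ℕ} (f : M [⋀^Fin a]→ₗ[R] R) (g : M [⋀^Fin b]→ₗ[R] R) :
    M [⋀^Fin (a + b)]→ₗ[R] R :=
  AlternatingMap.domDomCongr finSumFinEquiv
    ((TensorProduct.lid R R).toLinearMap.compAlternatingMap (f.domCoprod g))

/-- `k`-th wedge power of an alternating 2-form. -/
noncomputable def altPow {R : Type*} [CommRing R] {M : Type*} [AddCommGroup M] [Module R M]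
    (f : M [⋀^Fin 2]→ₗ[R] R) : (k : ℕ) → M [⋀^Fin (2 * k)]→ₗ[R] R
  | 0 => AlternatingMap.domDomCongr (finCongr (by norm_num))
      (AlternatingMap.constOfIsEmpty R M (Fin 0) 1)
  | (k + 1) => AlternatingMap.domDomCongr (finCongr (by ring)) (altWedge f (altPow f k))

section Aux
open Equiv

variable {R : Type*} [CommRing R] {M : Type*} [AddCommGroup M] [Module R M] {a b : ℕ}

lemma altWedge_apply (f : M [⋀^Fin a]→ₗ[R] R) (g : M [⋀^Fin b]→ₗ[R] R) (v : Fin (a+b) → M) :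
    altWedge f g v = ∑ c : Equiv.Perm.ModSumCongr (Fin a) (Fin b),
      TensorProduct.lid R R
        (AlternatingMap.domCoprod.summand f g c (fun s => v (finSumFinEquiv s))) := by
  simp only [altWedge, AlternatingMap.domDomCongr_apply, LinearMap.compAlternatingMap_apply]
  have h1 : ((f.domCoprod g : M [⋀^(Fin a ⊕ Fin b)]→ₗ[R] (R ⊗[R] R))
        : MultilinearMap R (fun _ : Fin a ⊕ Fin b => M) (R ⊗[R] R)) (v ∘ finSumFinEquiv)
      = (∑ c : Equiv.Perm.ModSumCongr (Fin a) (Fin b),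
          AlternatingMap.domCoprod.summand f g c) (v ∘ finSumFinEquiv) := by
    rw [AlternatingMap.domCoprod_coe]
  rw [show (f.domCoprod g) (v ∘ finSumFinEquiv)
      = ((f.domCoprod g : M [⋀^(Fin a ⊕ Fin b)]→ₗ[R] (R ⊗[R] R))
        : MultilinearMap R (fun _ : Fin a ⊕ Fin b => M) (R ⊗[R] R)) (v ∘ finSumFinEquiv) from rfl,
    h1, MultilinearMap.sum_apply, map_sum]
  rfl

lemma summand_apply (f : M [⋀^Fin a]→ₗ[R] R) (g : M [⋀^Fin b]→ₗ[R] R)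
    (π : Equiv.Perm (Fin a ⊕ Fin b)) (w : Fin a ⊕ Fin b → M) :
    TensorProduct.lid R R (AlternatingMap.domCoprod.summand f g (Quotient.mk'' π) w)
      = Equiv.Perm.sign π • (f (fun i => w (π (Sum.inl i))) * g (fun i => w (π (Sum.inr i)))) := by
  rw [AlternatingMap.domCoprod.summand_mk'']
  simp only [MultilinearMap.smul_apply, MultilinearMap.domDomCongr_apply,
    MultilinearMap.domCoprod_apply, AlternatingMap.coe_multilinearMap, Function.comp]
  rw [Units.smul_def, map_zsmul, TensorProduct.lid_tmul, smul_eq_mul, Units.smul_def]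

lemma altWedge_eq_zero {S T : Set M} (f : M [⋀^Fin a]→ₗ[R] R) (g : M [⋀^Fin b]→ₗ[R] R)
    (hf : ∀ v : Fin a → M, (∃ i, v i ∈ S) → f v = 0)
    (hg : ∀ v : Fin b → M, (∃ i, v i ∈ T) → g v = 0)
    (v : Fin (a+b) → M) (hv : ∃ i, v i ∈ S ∧ v i ∈ T) : altWedge f g v = 0 := by
  rw [altWedge_apply]
  refine Finset.sum_eq_zero fun c _ => ?_
  induction c using Quotient.inductionOn' with
  | h π =>
    rw [summand_apply]
    obtain ⟨i, hiS, hiT⟩ := hv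
    rcases h : π⁻¹ (finSumFinEquiv.symm i) with x | x
    · have hx : π (Sum.inl x) = finSumFinEquiv.symm i := by
        rw [← h]; exact π.apply_symm_apply _
      have : f (fun i2 => v (finSumFinEquiv (π (Sum.inl i2)))) = 0 := by
        refine hf _ ⟨x, ?_⟩
        rw [hx, Equiv.apply_symm_apply]; exact hiS
      rw [this, zero_mul, smul_zero]
    · have hx : π (Sum.inr x) = finSumFinEquiv.symm i := by
        rw [← h]; exact π.apply_symm_apply _
      have : g (fun i2 => v (finSumFinEquiv (π (Sum.inr i2)))) = 0 := by
        refine hg _ ⟨x, ?_⟩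
        rw [hx, Equiv.apply_symm_apply]; exact hiT
      rw [this, mul_zero, smul_zero]

lemma altPow_eq_zero {S : Set M} (f : M [⋀^Fin 2]→ₗ[R] R)
    (hf : ∀ v : Fin 2 → M, (∃ i, v i ∈ S) → f v = 0) :
    ∀ (k : ℕ), 1 ≤ k → ∀ (v : Fin (2*k) → M), (∃ i, v i ∈ S) → altPow f k v = 0 := by
  intro k
  induction k with
  | zero => omega
  | succ k IH =>
    intro _ v ⟨i, hi⟩
    show AlternatingMap.domDomCongr (finCongr (by ring)) (altWedge f (altPow f k)) v = 0
    rw [AlternatingMap.domDomCongr_apply]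
    refine altWedge_eq_zero (S := S) (T := S) f (altPow f k) hf ?_ _ ?_
    · intro w hw
      rcases Nat.eq_zero_or_pos k with h0 | h1
      · subst h0; obtain ⟨i0, _⟩ := hw; exact i0.elim0
      · exact IH h1 w hw
    · refine ⟨(finCongr (by ring : 2 + 2*k = 2*(k+1))).symm i, ?_, ?_⟩ <;>
        · simpa using hi

-- generic cycleRange value lemmas with explicit Fin.mk
lemma cycleRange_mk_lt {N : ℕ} (t j : ℕ) (ht : t < N) (hj : j < t) (hjN : j < N) (hj1 : j+1 < N) :
    (⟨t, ht⟩ : Fin N).cycleRange ⟨j, hjN⟩ = ⟨j+1, hj1⟩ := by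
  rcases N with _ | n
  · omega
  · rw [Fin.cycleRange_of_lt (by simp only [Fin.lt_def]; exact hj)]
    apply Fin.ext
    rw [Fin.val_add_one_of_lt (by simp only [Fin.lt_def, Fin.val_last]; omega)]

lemma cycleRange_mk_self {N : ℕ} (t : ℕ) (ht : t < N) (h0 : 0 < N) :
    (⟨t, ht⟩ : Fin N).cycleRange ⟨t, ht⟩ = ⟨0, h0⟩ := by
  rcases N with _ | n
  · omega
  · rw [Fin.cycleRange_self]; rfl

lemma cycleRange_mk_gt {N : ℕ} (t j : ℕ) (ht : t < N) (hj : t < j) (hjN : j < N) :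
    (⟨t, ht⟩ : Fin N).cycleRange ⟨j, hjN⟩ = ⟨j, hjN⟩ := by
  rcases N with _ | n
  · omega
  · exact Fin.cycleRange_of_gt (by simp only [Fin.lt_def]; exact hj)

section rho

/-- the square of the inverse cycle: sends 0 ↦ 2i, 1 ↦ 2i+1, 2+j ↦ j (j < 2i), 2+j ↦ 2+j (j ≥ 2i) -/
noncomputable def rhoP (m i : ℕ) (hi : i ≤ m) : Equiv.Perm (Fin (2+2*m)) :=
  ((⟨2*i+1, by omega⟩ : Fin (2+2*m)).cycleRange ^ 2)⁻¹

lemma rhoP_sign (m i : ℕ) (hi : i ≤ m) : Equiv.Perm.sign (rhoP m i hi) = 1 := by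
  rw [rhoP, map_inv, map_pow, Int.units_sq, inv_one]

lemma rhoP_eq_iff (m i : ℕ) (hi : i ≤ m) (x y : Fin (2+2*m)) :
    ((⟨2*i+1, by omega⟩ : Fin (2+2*m)).cycleRange ^ 2) y = x → rhoP m i hi x = y := by
  intro h; rw [rhoP, ← h, Equiv.Perm.inv_def, Equiv.symm_apply_apply]

lemma rhoP_zero (m i : ℕ) (hi : i ≤ m) : rhoP m i hi ⟨0, by omega⟩ = ⟨2*i, by omega⟩ := by
  apply rhoP_eq_iff
  rw [pow_two, Equiv.Perm.mul_apply,
    cycleRange_mk_lt (2*i+1) (2*i) (by omega) (by omega) (by omega) (by omega),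
    cycleRange_mk_self (2*i+1) (by omega) (by omega)]

lemma rhoP_one (m i : ℕ) (hi : i ≤ m) : rhoP m i hi ⟨1, by omega⟩ = ⟨2*i+1, by omega⟩ := by
  apply rhoP_eq_iff
  rw [pow_two, Equiv.Perm.mul_apply,
    cycleRange_mk_self (2*i+1) (by omega) (by omega),
    cycleRange_mk_lt (2*i+1) 0 (by omega) (by omega) (by omega) (by omega)]

lemma rhoP_low (m i : ℕ) (hi : i ≤ m) (j : ℕ) (hj : j < 2*i) : rhoP m i hi ⟨2+j, by omega⟩ = ⟨j, by omega⟩ := by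
  apply rhoP_eq_iff
  rw [pow_two, Equiv.Perm.mul_apply,
    cycleRange_mk_lt (2*i+1) j (by omega) (by omega) (by omega) (by omega),
    cycleRange_mk_lt (2*i+1) (j+1) (by omega) (by omega) (by omega) (by omega)]
  apply Fin.ext; simp; omega

lemma rhoP_high (m i : ℕ) (hi : i ≤ m) (j : ℕ) (hj : 2*i ≤ j) (hjm : j < 2*m) :
    rhoP m i hi ⟨2+j, by omega⟩ = ⟨2+j, by omega⟩ := by
  apply rhoP_eq_iff
  rw [pow_two, Equiv.Perm.mul_apply,
    cycleRange_mk_gt (2*i+1) (2+j) (by omega) (by omega) (by omega),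
    cycleRange_mk_gt (2*i+1) (2+j) (by omega) (by omega) (by omega)]

end rho

-- permutation of sum preserving the left component is in the range of sumCongrHom
lemma perm_sum_mem_range {α β : Type*} [Finite α] [Finite β] (ψ : Equiv.Perm (α ⊕ β))
    (h : ∀ x : α, ∃ y, ψ (Sum.inl x) = Sum.inl y) :
    ψ ∈ (Equiv.Perm.sumCongrHom α β).range := by
  classical
  choose f hf using h
  have hfinj : Function.Injective f := by
    intro x y hxy
    have h2 : ψ (Sum.inl x) = ψ (Sum.inl y) := by rw [hf x, hxy, ← hf y]
    exact Sum.inl_injective (ψ.injective h2)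
  have hfsurj : Function.Surjective f := Finite.surjective_of_injective hfinj
  have hg : ∀ z : β, ∃ w, ψ (Sum.inr z) = Sum.inr w := by
    intro z
    rcases hz : ψ (Sum.inr z) with y | w
    · obtain ⟨x, hx⟩ := hfsurj y
      exfalso
      have : ψ (Sum.inl x) = ψ (Sum.inr z) := by rw [hf x, hx, hz]
      simpa using ψ.injective this
    · exact ⟨w, rfl⟩
  choose g hgf using hg
  have hginj : Function.Injective g := by
    intro x y hxy
    have h2 : ψ (Sum.inr x) = ψ (Sum.inr y) := by rw [hgf x, hxy, ← hgf y]
    exact Sum.inr_injective (ψ.injective h2)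
  refine ⟨(Equiv.ofBijective f ⟨hfinj, hfsurj⟩,
    Equiv.ofBijective g ⟨hginj, Finite.surjective_of_injective hginj⟩), ?_⟩
  ext s
  cases s with
  | inl x => simp [Equiv.Perm.sumCongrHom, Equiv.ofBijective, ← hf x]
  | inr z => simp [Equiv.Perm.sumCongrHom, Equiv.ofBijective, ← hgf z]

section eval
variable {R : Type*} [CommRing R] {M : Type*} [AddCommGroup M] [Module R M]

/-- conjugation of rhoP on the sum type -/
noncomputable def piG (m i : ℕ) (hi : i ≤ m) : Equiv.Perm (Fin 2 ⊕ Fin (2*m)) :=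
  (finSumFinEquiv.symm : Fin (2+2*m) ≃ Fin 2 ⊕ Fin (2*m)).permCongr (rhoP m i hi)

lemma piG_e (m i : ℕ) (hi : i ≤ m) (s : Fin 2 ⊕ Fin (2*m)) :
    finSumFinEquiv (piG m i hi s) = rhoP m i hi (finSumFinEquiv s) := by
  simp [piG, Equiv.permCongr_apply]

lemma piG_sign (m i : ℕ) (hi : i ≤ m) : Equiv.Perm.sign (piG m i hi) = 1 := by
  rw [piG, Equiv.Perm.sign_permCongr, rhoP_sign]

lemma e_inl0 (m : ℕ) : (finSumFinEquiv (Sum.inl (0 : Fin 2)) : Fin (2+2*m)) = ⟨0, by omega⟩ := by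
  apply Fin.ext; simp

lemma e_inl1 (m : ℕ) : (finSumFinEquiv (Sum.inl (1 : Fin 2)) : Fin (2+2*m)) = ⟨1, by omega⟩ := by
  apply Fin.ext; simp

lemma e_inr (m : ℕ) (j : Fin (2*m)) :
    (finSumFinEquiv (Sum.inr j) : Fin (2+2*m)) = ⟨2+j.val, by omega⟩ := by
  apply Fin.ext; simp

lemma piG_inl0 (m i : ℕ) (hi : i ≤ m) :
    finSumFinEquiv (piG m i hi (Sum.inl 0)) = (⟨2*i, by omega⟩ : Fin (2+2*m)) := by
  rw [piG_e, e_inl0, rhoP_zero]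

lemma piG_inl1 (m i : ℕ) (hi : i ≤ m) :
    finSumFinEquiv (piG m i hi (Sum.inl 1)) = (⟨2*i+1, by omega⟩ : Fin (2+2*m)) := by
  rw [piG_e, e_inl1, rhoP_one]

lemma alt2_swap (f : M [⋀^Fin 2]→ₗ[R] R) (y z : M) : f ![y, z] = - f ![z, y] := by
  have h := f.map_swap (v := ![z, y]) (i := (0 : Fin 2)) (j := 1) (by decide)
  have harg : (![z, y] ∘ Equiv.swap (0 : Fin 2) 1) = ![y, z] := by
    funext i; fin_cases i <;> simp
  rw [harg] at h
  rw [h]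

lemma altPow_std (f : M [⋀^Fin 2]→ₗ[R] R) :
    ∀ (m : ℕ) (x : ℕ → M),
      (∀ p q : ℕ, p < q → q < 2*m → f ![x p, x q] = if q = p+1 ∧ p % 2 = 0 then 1 else 0) →
      ∀ v : Fin (2*m) → M, (∀ p, v p = x p.val) → altPow f m v = (m.factorial : R) := by
  intro m
  induction m with
  | zero =>
    intro x _ v _
    show AlternatingMap.domDomCongr (finCongr (by norm_num))
      (AlternatingMap.constOfIsEmpty R M (Fin 0) 1) v = _
    rw [AlternatingMap.domDomCongr_apply, AlternatingMap.constOfIsEmpty_apply]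
    simp
  | succ m IH =>
    intro x hx v hv
    classical
    show AlternatingMap.domDomCongr (finCongr (by ring))
      (altWedge f (altPow f m)) v = _
    rw [AlternatingMap.domDomCongr_apply, altWedge_apply]
    have hw : ∀ s : Fin 2 ⊕ Fin (2*m),
        (v ∘ finCongr (by ring : 2+2*m = 2*(m+1))) (finSumFinEquiv s)
          = x (finSumFinEquiv s : Fin (2+2*m)).val := by
      intro s
      rw [Function.comp_apply, hv]
      simp
    set G : Finset (Equiv.Perm.ModSumCongr (Fin 2) (Fin (2*m))) :=
      Finset.image (fun i : Fin (m+1) => Quotient.mk'' (piG m i.val (by omega))) Finset.univ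
      with hG
    have hvanish : ∀ c ∈ Finset.univ, c ∉ G →
        TensorProduct.lid R R (AlternatingMap.domCoprod.summand f (altPow f m) c
          (fun s => (v ∘ finCongr (by ring : 2+2*m = 2*(m+1))) (finSumFinEquiv s))) = 0 := by
      intro c _ hcG
      induction c using Quotient.inductionOn' with
      | h π =>
        by_contra hne
        rw [summand_apply] at hne
        have hAB : (f fun i2 => (v ∘ finCongr (by ring : 2+2*m = 2*(m+1)))
              (finSumFinEquiv (π (Sum.inl i2)))) *
            (altPow f m fun i2 => (v ∘ finCongr (by ring : 2+2*m = 2*(m+1)))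
              (finSumFinEquiv (π (Sum.inr i2)))) ≠ 0 := by
          rcases Int.units_eq_one_or (Equiv.Perm.sign π) with hs | hs <;> rw [hs] at hne
          · simpa using hne
          · intro h0; apply hne; rw [h0]; simp
        have hA := left_ne_zero_of_mul hAB
        set P := (finSumFinEquiv (π (Sum.inl 0)) : Fin (2+2*m)) with hP
        set Q := (finSumFinEquiv (π (Sum.inl 1)) : Fin (2+2*m)) with hQ
        have hfeq : (fun i2 => (v ∘ finCongr (by ring : 2+2*m = 2*(m+1)))
            (finSumFinEquiv (π (Sum.inl i2)))) = ![x P.val, x Q.val] := by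
          funext i2
          fin_cases i2 <;> rw [hw] <;> exact rfl
        rw [hfeq] at hA
        have hPQ : P ≠ Q := by
          intro h
          have := π.injective (finSumFinEquiv.injective h)
          simpa using this
        have hmain : ∃ iv : ℕ, iv ≤ m ∧
            ((P.val = 2*iv ∧ Q.val = 2*iv+1) ∨ (Q.val = 2*iv ∧ P.val = 2*iv+1)) := by
          rcases lt_trichotomy P.val Q.val with hlt | heq | hgt
          · have hval := hx P.val Q.val hlt (by omega)
            rw [hval] at hA
            by_cases hcond : Q.val = P.val + 1 ∧ P.val % 2 = 0
            · exact ⟨P.val / 2, by omega, Or.inl ⟨by omega, by omega⟩⟩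
            · rw [if_neg hcond] at hA; exact absurd rfl hA
          · exact absurd (Fin.ext heq) hPQ
          · rw [alt2_swap] at hA
            have hA' : f ![x Q.val, x P.val] ≠ 0 := fun h0 => hA (by rw [h0, neg_zero])
            have hval := hx Q.val P.val hgt (by omega)
            rw [hval] at hA'
            by_cases hcond : P.val = Q.val + 1 ∧ Q.val % 2 = 0
            · exact ⟨Q.val / 2, by omega, Or.inr ⟨by omega, by omega⟩⟩
            · rw [if_neg hcond] at hA'; exact absurd rfl hA'
        obtain ⟨iv, hivm, hcase⟩ := hmain
        apply hcG
        rw [hG, Finset.mem_image]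
        refine ⟨⟨iv, by omega⟩, Finset.mem_univ _, ?_⟩
        apply Quotient.sound'
        rw [QuotientGroup.leftRel_apply]
        apply perm_sum_mem_range
        have hp0 : π (Sum.inl 0) = piG m iv hivm (Sum.inl 0) ∨
            π (Sum.inl 0) = piG m iv hivm (Sum.inl 1) := by
          rcases hcase with ⟨h1, _⟩ | ⟨_, h1⟩
          · left
            apply finSumFinEquiv.injective
            rw [piG_inl0, ← hP]; exact Fin.ext h1
          · right
            apply finSumFinEquiv.injective
            rw [piG_inl1, ← hP]; exact Fin.ext h1
        have hp1 : π (Sum.inl 1) = piG m iv hivm (Sum.inl 0) ∨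
            π (Sum.inl 1) = piG m iv hivm (Sum.inl 1) := by
          rcases hcase with ⟨_, h1⟩ | ⟨h1, _⟩
          · right
            apply finSumFinEquiv.injective
            rw [piG_inl1, ← hQ]; exact Fin.ext h1
          · left
            apply finSumFinEquiv.injective
            rw [piG_inl0, ← hQ]; exact Fin.ext h1
        intro z
        have hzv := z.isLt
        have hz2 : z = 0 ∨ z = 1 := by
          rcases (show z.val = 0 ∨ z.val = 1 by omega) with h | h
          · left; exact Fin.ext h
          · right; exact Fin.ext h
        rcases hz2 with rfl | rfl
        · rcases hp0 with h | h
          · exact ⟨0, by rw [Equiv.Perm.mul_apply, h, Equiv.Perm.inv_def, Equiv.symm_apply_apply]⟩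
          · exact ⟨1, by rw [Equiv.Perm.mul_apply, h, Equiv.Perm.inv_def, Equiv.symm_apply_apply]⟩
        · rcases hp1 with h | h
          · exact ⟨0, by rw [Equiv.Perm.mul_apply, h, Equiv.Perm.inv_def, Equiv.symm_apply_apply]⟩
          · exact ⟨1, by rw [Equiv.Perm.mul_apply, h, Equiv.Perm.inv_def, Equiv.symm_apply_apply]⟩
    rw [← Finset.sum_subset (Finset.subset_univ G) hvanish, hG]
    have hinj : ∀ i ∈ (Finset.univ : Finset (Fin (m+1))), ∀ j ∈ Finset.univ,
        (Quotient.mk'' (piG m i.val (by omega)) : Equiv.Perm.ModSumCongr (Fin 2) (Fin (2*m)))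
          = Quotient.mk'' (piG m j.val (by omega)) → i = j := by
      intro i _ j _ hij
      obtain ⟨⟨sl, sr⟩, hco⟩ := QuotientGroup.leftRel_apply.mp (Quotient.exact' hij)
      have h0 := congrArg (fun ψ : Equiv.Perm (Fin 2 ⊕ Fin (2*m)) => ψ (Sum.inl 0)) hco
      simp only [Equiv.Perm.sumCongrHom_apply, Equiv.Perm.sumCongr_apply, Sum.map_inl,
        Equiv.Perm.mul_apply] at h0
      have h1 : piG m j.val (by omega : j.val ≤ m) (Sum.inl 0)
          = piG m i.val (by omega : i.val ≤ m) (Sum.inl (sl 0)) := by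
        have h2 := congrArg (piG m i.val (by omega : i.val ≤ m)) h0
        rw [Equiv.Perm.inv_def, Equiv.apply_symm_apply] at h2
        exact h2.symm
      have h2 := congrArg finSumFinEquiv h1
      have hslv := (sl 0).isLt
      have hsl : sl 0 = 0 ∨ sl 0 = 1 := by
        rcases (show (sl 0).val = 0 ∨ (sl 0).val = 1 by omega) with h | h
        · left; exact Fin.ext h
        · right; exact Fin.ext h
      rcases hsl with h | h
      · rw [h, piG_inl0, piG_inl0] at h2
        simp only [Fin.mk.injEq] at h2
        exact Fin.ext (by omega)
      · rw [h, piG_inl0, piG_inl1] at h2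
        simp only [Fin.mk.injEq] at h2
        omega
    refine Eq.trans (Finset.sum_image hinj) ?_
    have hterm : ∀ i : Fin (m+1),
        TensorProduct.lid R R (AlternatingMap.domCoprod.summand f (altPow f m)
          (Quotient.mk'' (piG m i.val (by omega)))
          (fun s => (v ∘ finCongr (by ring : 2+2*m = 2*(m+1))) (finSumFinEquiv s)))
          = (m.factorial : R) := by
      intro i
      have hi : i.val ≤ m := by omega
      rw [summand_apply, piG_sign, one_smul]
      have hfp : (fun i2 => (v ∘ finCongr (by ring : 2+2*m = 2*(m+1)))
          (finSumFinEquiv (piG m i.val hi (Sum.inl i2))))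
          = ![x (2*i.val), x (2*i.val+1)] := by
        funext i2
        fin_cases i2
        · rw [hw]
          show x (finSumFinEquiv ((piG m i.val hi) (Sum.inl 0)) : Fin (2+2*m)).val = x (2*i.val)
          rw [piG_inl0]
        · rw [hw]
          show x (finSumFinEquiv ((piG m i.val hi) (Sum.inl 1)) : Fin (2+2*m)).val = x (2*i.val+1)
          rw [piG_inl1]
      have hgp : ∀ j : Fin (2*m), (v ∘ finCongr (by ring : 2+2*m = 2*(m+1)))
          (finSumFinEquiv (piG m i.val hi (Sum.inr j)))
          = (fun l : ℕ => if l < 2*i.val then x l else x (2+l)) j.val := by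
        intro j
        rw [hw, piG_e, e_inr]
        by_cases hj : j.val < 2*i.val
        · rw [rhoP_low m i.val hi j.val hj]
          simp [hj]
        · rw [rhoP_high m i.val hi j.val (by omega) j.isLt]
          simp [hj]
      have hx' : ∀ p q : ℕ, p < q → q < 2*m →
          f ![(fun l : ℕ => if l < 2*i.val then x l else x (2+l)) p,
              (fun l : ℕ => if l < 2*i.val then x l else x (2+l)) q]
            = if q = p+1 ∧ p % 2 = 0 then 1 else 0 := by
        intro p q hpq hq
        by_cases h1 : q < 2*i.val
        · have h2 : p < 2*i.val := by omega
          simp only [if_pos h1, if_pos h2]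
          exact hx p q hpq (by omega)
        · by_cases h2 : p < 2*i.val
          · simp only [if_pos h2, if_neg h1]
            rw [hx p (2+q) (by omega) (by omega)]
            have hc1 : ¬(2+q = p+1 ∧ p % 2 = 0) := by omega
            have hc2 : ¬(q = p+1 ∧ p % 2 = 0) := by omega
            rw [if_neg hc1, if_neg hc2]
          · simp only [if_neg h1, if_neg h2]
            rw [hx (2+p) (2+q) (by omega) (by omega)]
            by_cases hc : q = p+1 ∧ p % 2 = 0
            · rw [if_pos (by omega : 2+q = (2+p)+1 ∧ (2+p) % 2 = 0), if_pos hc]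
            · rw [if_neg (by omega : ¬(2+q = (2+p)+1 ∧ (2+p) % 2 = 0)), if_neg hc]
      rw [hfp, IH (fun l : ℕ => if l < 2*i.val then x l else x (2+l)) hx' _ hgp]
      rw [hx (2*i.val) (2*i.val+1) (by omega) (by omega), if_pos ⟨rfl, by omega⟩, one_mul]
    refine Eq.trans (Finset.sum_congr rfl (fun i _ => hterm i)) ?_
    rw [Finset.sum_const, Finset.card_univ, Fintype.card_fin, nsmul_eq_mul]
    push_cast [Nat.factorial_succ]
    ring

end eval

section bform
variable {R : Type*} [CommRing R] {M : Type*} [AddCommGroup M] [Module R M]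

lemma update0 (z w : M) : ![z, w] = Function.update ![(0 : M), w] 0 z := by
  funext i; fin_cases i <;> simp

lemma update1 (z w : M) : ![z, w] = Function.update ![z, (0 : M)] 1 w := by
  funext i; fin_cases i <;> simp

/-- the bilinear form associated with an alternating 2-form -/
noncomputable def Bform (f : M [⋀^Fin 2]→ₗ[R] R) : M →ₗ[R] M →ₗ[R] R :=
  LinearMap.mk₂ R (fun v w => f ![v, w])
    (fun v v' w => by
      show f ![v + v', w] = f ![v, w] + f ![v', w]
      rw [update0 (v + v') w, update0 v w, update0 v' w, AlternatingMap.map_update_add])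
    (fun c v w => by
      show f ![c • v, w] = c • f ![v, w]
      rw [update0 (c • v) w, update0 v w, AlternatingMap.map_update_smul])
    (fun v w w' => by
      show f ![v, w + w'] = f ![v, w] + f ![v, w']
      rw [update1 v (w + w'), update1 v w, update1 v w', AlternatingMap.map_update_add])
    (fun c v w => by
      show f ![v, c • w] = c • f ![v, w]
      rw [update1 v (c • w), update1 v w, AlternatingMap.map_update_smul])

@[simp] lemma Bform_apply (f : M [⋀^Fin 2]→ₗ[R] R) (v w : M) :
    Bform f v w = f ![v, w] := rfl

end bform

section greedy
variable {K : Type*} [Field K] {M : Type*} [AddCommGroup M] [Module K M] [FiniteDimensional K M]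

lemma alt2_self {R : Type*} [CommRing R] {M' : Type*} [AddCommGroup M'] [Module R M']
    (f : M' [⋀^Fin 2]→ₗ[R] R) (u : M') : f ![u, u] = 0 :=
  AlternatingMap.map_eq_zero_of_eq f ![u, u] (i := 0) (j := 1) rfl (by decide)

lemma alt2_smul_right {R : Type*} [CommRing R] {M' : Type*} [AddCommGroup M'] [Module R M']
    (f : M' [⋀^Fin 2]→ₗ[R] R) (c : R) (u w : M') : f ![u, c • w] = c * f ![u, w] := by
  exact map_smul (Bform f u) c w

lemma alt2_smul_left {R : Type*} [CommRing R] {M' : Type*} [AddCommGroup M'] [Module R M']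
    (f : M' [⋀^Fin 2]→ₗ[R] R) (c : R) (u w : M') : f ![c • u, w] = c * f ![u, w] := by
  exact map_smul ((Bform f).flip w) c u

lemma exists_symp_pairs (f : M [⋀^Fin 2]→ₗ[K] K) (Krad : Submodule K M)
    (hrad : ∀ v : M, v ∈ Krad ↔ ∀ w, f ![v, w] = 0) :
    ∀ m : ℕ, Module.finrank K Krad + 2*m ≤ Module.finrank K M + 1 →
    ∃ E F : Fin m → M,
      (∀ i j : Fin m, f ![E i, F j] = if i = j then 1 else 0) ∧
      (∀ i j, f ![E i, E j] = 0) ∧ (∀ i j, f ![F i, F j] = 0) := by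
  intro m
  induction m with
  | zero =>
    exact fun _ => ⟨fun _ => 0, fun _ => 0,
      fun i => i.elim0, fun i => i.elim0, fun i => i.elim0⟩
  | succ m IH =>
    intro hm
    obtain ⟨E, F, hEF, hEE, hFF⟩ := IH (by omega)
    classical
    set φ : Fin m ⊕ Fin m → M →ₗ[K] K :=
      Sum.elim (fun j => (Bform f).flip (E j)) (fun j => (Bform f).flip (F j)) with hφ
    set W : Submodule K M := LinearMap.ker (LinearMap.pi φ) with hW
    have hWmem : ∀ v : M, v ∈ W ↔ (∀ j, f ![v, E j] = 0) ∧ (∀ j, f ![v, F j] = 0) := by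
      intro v
      rw [hW, LinearMap.mem_ker]
      constructor
      · intro h
        exact ⟨fun j => congrFun h (Sum.inl j), fun j => congrFun h (Sum.inr j)⟩
      · rintro ⟨h1, h2⟩
        funext s
        rcases s with j | j
        · exact h1 j
        · exact h2 j
    have hKW : Krad ≤ W := by
      intro v hv
      rw [hWmem]
      exact ⟨fun j => (hrad v).1 hv (E j), fun j => (hrad v).1 hv (F j)⟩
    have hdimW : Module.finrank K M ≤ Module.finrank K W + 2*m := by
      have h1 := LinearMap.finrank_range_add_finrank_ker (LinearMap.pi φ)
      have h2 : Module.finrank K (LinearMap.range (LinearMap.pi φ))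
          ≤ Module.finrank K ((Fin m ⊕ Fin m) → K) := Submodule.finrank_le _
      have h3 : Module.finrank K ((Fin m ⊕ Fin m) → K) = 2*m := by
        rw [Module.finrank_fintype_fun_eq_card]
        simp
        omega
      rw [← hW] at h1
      omega
    obtain ⟨v, hvW, hvK⟩ : ∃ v, v ∈ W ∧ v ∉ Krad := by
      by_contra h
      push_neg at h
      have hle : W ≤ Krad := fun u hu => h u hu
      have := Submodule.finrank_mono hle
      omega
    have hvWE := ((hWmem v).1 hvW).1
    have hvWF := ((hWmem v).1 hvW).2
    have hexw : ∃ w', w' ∈ W ∧ f ![v, w'] ≠ 0 := by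
      by_contra h
      push_neg at h
      apply hvK
      rw [hrad]
      intro z
      set z' := z - (∑ j, f ![z, F j] • E j) + (∑ j, f ![z, E j] • F j) with hz'
      have hz'W : z' ∈ W := by
        rw [hWmem]
        constructor
        · intro l
          show ((Bform f).flip (E l)) z' = 0
          rw [hz', map_add, map_sub, map_sum, map_sum]
          have hE0 : ∀ j, ((Bform f).flip (E l)) (f ![z, F j] • E j) = 0 := by
            intro j
            rw [map_smul]
            show f ![z, F j] • f ![E j, E l] = 0
            rw [hEE j l, smul_zero]
          have hF0 : ∀ j, ((Bform f).flip (E l)) (f ![z, E j] • F j)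
              = f ![z, E j] * -(if l = j then 1 else 0) := by
            intro j
            rw [map_smul]
            show f ![z, E j] • f ![F j, E l] = _
            rw [alt2_swap f (F j) (E l), hEF l j, smul_eq_mul]
          rw [Finset.sum_congr rfl (fun j _ => hE0 j), Finset.sum_congr rfl (fun j _ => hF0 j)]
          have hz0 : ((Bform f).flip (E l)) z = f ![z, E l] := rfl
          simp only [mul_neg, mul_ite, mul_one, mul_zero, Finset.sum_const_zero, sub_zero,
            Finset.sum_neg_distrib, Finset.sum_ite_eq, Finset.mem_univ, if_true, hz0]
          exact add_neg_cancel _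
        · intro l
          show ((Bform f).flip (F l)) z' = 0
          rw [hz', map_add, map_sub, map_sum, map_sum]
          have hE0 : ∀ j, ((Bform f).flip (F l)) (f ![z, F j] • E j)
              = f ![z, F j] * (if j = l then 1 else 0) := by
            intro j
            rw [map_smul]
            show f ![z, F j] • f ![E j, F l] = _
            rw [hEF j l, smul_eq_mul]
          have hF0 : ∀ j, ((Bform f).flip (F l)) (f ![z, E j] • F j) = 0 := by
            intro j
            rw [map_smul]
            show f ![z, E j] • f ![F j, F l] = 0
            rw [hFF j l, smul_zero]
          rw [Finset.sum_congr rfl (fun j _ => hE0 j), Finset.sum_congr rfl (fun j _ => hF0 j)]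
          have hz0 : ((Bform f).flip (F l)) z = f ![z, F l] := rfl
          simp only [mul_ite, mul_one, mul_zero, Finset.sum_const_zero, add_zero,
            Finset.sum_ite_eq', Finset.mem_univ, if_true, hz0]
          exact sub_self _
      have hdec : z = z' + (∑ j, f ![z, F j] • E j) - (∑ j, f ![z, E j] • F j) := by
        rw [hz']
        abel
      show (Bform f v) z = 0
      rw [hdec, map_sub, map_add, map_sum, map_sum]
      have h1 : (Bform f v) z' = 0 := h z' hz'W
      have h2 : ∀ j, (Bform f v) (f ![z, F j] • E j) = 0 := by
        intro j
        rw [map_smul]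
        show f ![z, F j] • f ![v, E j] = 0
        rw [hvWE j, smul_zero]
      have h3 : ∀ j, (Bform f v) (f ![z, E j] • F j) = 0 := by
        intro j
        rw [map_smul]
        show f ![z, E j] • f ![v, F j] = 0
        rw [hvWF j, smul_zero]
      rw [h1, Finset.sum_congr rfl (fun j _ => h2 j), Finset.sum_congr rfl (fun j _ => h3 j)]
      simp
    obtain ⟨w', hw'W, hc⟩ := hexw
    have hw'WE := ((hWmem w').1 hw'W).1
    have hw'WF := ((hWmem w').1 hw'W).2
    set c : K := f ![v, w'] with hcdef
    refine ⟨Fin.snoc E v, Fin.snoc F (c⁻¹ • w'), ?_, ?_, ?_⟩ <;> intro i j <;>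
      rcases Fin.eq_castSucc_or_eq_last i with ⟨i0, rfl⟩ | rfl <;>
      rcases Fin.eq_castSucc_or_eq_last j with ⟨j0, rfl⟩ | rfl <;>
      simp only [Fin.snoc_castSucc, Fin.snoc_last]
    · rw [hEF i0 j0]
      by_cases hij : i0 = j0
      · rw [if_pos hij, if_pos (by rw [hij])]
      · rw [if_neg hij, if_neg (by simpa [Fin.castSucc_inj] using hij)]
    · rw [alt2_smul_right, alt2_swap f (E i0) w', hw'WE i0,
        if_neg (Fin.ne_last_of_lt (Fin.castSucc_lt_last i0))]
      ring
    · rw [hvWF j0, if_neg (Ne.symm (Fin.ne_last_of_lt (Fin.castSucc_lt_last j0)))]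
    · rw [alt2_smul_right, ← hcdef, inv_mul_cancel₀ hc]
      simp
    · exact hEE i0 j0
    · rw [alt2_swap f (E i0) v, hvWE i0, neg_zero]
    · exact hvWE j0
    · exact alt2_self f v
    · exact hFF i0 j0
    · rw [alt2_smul_right, alt2_swap f (F i0) w', hw'WF i0]
      ring
    · rw [alt2_smul_left, hw'WF j0, mul_zero]
    · rw [alt2_smul_left, alt2_smul_right, alt2_self f w']
      ring

end greedy


end Aux

/-- let `V` be a real vector space of dimension `4n` with complexification
`VC` (real points `j`, conjugation `cj`), and let `σ` be an alternating ℂ-bilinear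
2-form on `VC` with conjugate form `σbar(v,w) = conj (σ (v̄, w̄))`, satisfying the
pointwise C-symplectic conditions `σ^{n+1} = 0` and `σ^n ∧ σ̄^n ≠ 0`. Then the kernel
`K = {v : σ(v,·) = 0}` satisfies `dim_ℂ K = 2n`, `K ∩ K̄ = {0}` and `VC = K ⊕ K̄`. -/
theorem c_symplectic_kernel_decomposition
    {V : Type*} [AddCommGroup V] [Module ℝ V] [FiniteDimensional ℝ V]
    (n : ℕ) (hn : 1 ≤ n) (hdim : Module.finrank ℝ V = 4 * n)
    {VC : Type*} [AddCommGroup VC] [Module ℂ VC]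
    (j : V →ₗ[ℝ] VC)
    (hspan : ∀ z : VC, ∃ a b : V, z = j a + I • j b)
    (hindep : ∀ a b : V, j a + I • j b = 0 → a = 0 ∧ b = 0)
    (cj : VC →ₗ[ℝ] VC)
    (hcj : ∀ a b : V, cj (j a + I • j b) = j a - I • j b)
    (σ : VC [⋀^Fin 2]→ₗ[ℂ] ℂ)
    (σbar : VC [⋀^Fin 2]→ₗ[ℂ] ℂ)
    (hσbar : ∀ v w : VC, σbar ![v, w] = (starRingEnd ℂ) (σ ![cj v, cj w]))
    (hpow : altPow σ (n + 1) = 0)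
    (hvol : altWedge (altPow σ n) (altPow σbar n) ≠ 0)
    (K : Submodule ℂ VC) (hK : ∀ v : VC, v ∈ K ↔ ∀ w : VC, σ ![v, w] = 0) :
    Module.finrank ℂ ↥K = 2 * n ∧
    ((K : Set VC) ∩ (cj '' (K : Set VC)) = {0}) ∧
    (∀ z : VC, ∃ a ∈ K, ∃ b ∈ (K : Set VC), z = a + cj b) := by

  classical
  -- the real-linear map (a, b) ↦ j a + I • j b and the dimension of VC
  set L : V × V →ₗ[ℝ] VC :=
    j.comp (LinearMap.fst ℝ V V) +
      ((LinearMap.lsmul ℂ VC I).restrictScalars ℝ).comp (j.comp (LinearMap.snd ℝ V V)) with hL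
  have hLapp : ∀ a b : V, L (a, b) = j a + I • j b := by
    intro a b
    simp [hL]
  have hLbij : Function.Bijective L := by
    constructor
    · rw [injective_iff_map_eq_zero]
      rintro ⟨a, b⟩ h
      rw [hLapp] at h
      obtain ⟨h1, h2⟩ := hindep a b h
      simp [h1, h2, Prod.ext_iff]
    · intro z
      obtain ⟨a, b, hz⟩ := hspan z
      exact ⟨(a, b), by rw [hLapp, hz]⟩
  haveI hfinR : FiniteDimensional ℝ VC :=
    Module.Finite.equiv (LinearEquiv.ofBijective L hLbij)
  haveI hfinC : FiniteDimensional ℂ VC := Module.Finite.of_restrictScalars_finite ℝ ℂ VC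
  have hdimR : Module.finrank ℝ VC = 8 * n := by
    have h1 := (LinearEquiv.ofBijective L hLbij).finrank_eq
    rw [Module.finrank_prod, hdim] at h1
    omega
  have hdimVC : Module.finrank ℂ VC = 4 * n := by
    have h2 : Module.finrank ℝ ℂ * Module.finrank ℂ VC = Module.finrank ℝ VC :=
      Module.finrank_mul_finrank ℝ ℂ VC
    rw [finrank_real_complex, hdimR] at h2
    omega
  -- conjugation facts
  have hcj_j : ∀ a : V, cj (j a) = j a := by
    intro a
    have := hcj a 0
    simpa using this
  have hcjI : ∀ z : VC, cj (I • z) = -(I • cj z) := by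
    intro z
    obtain ⟨a, b, rfl⟩ := hspan z
    have h1 : I • (j a + I • j b) = j (-b) + I • j a := by
      rw [smul_add, smul_smul, Complex.I_mul_I, neg_one_smul, map_neg]
      abel
    rw [h1, hcj, hcj a b]
    rw [map_neg, smul_sub, smul_smul, Complex.I_mul_I, neg_one_smul]
    abel
  have hcj_invol : ∀ z : VC, cj (cj z) = z := by
    intro z
    obtain ⟨a, b, rfl⟩ := hspan z
    rw [hcj a b]
    have h2 := hcj a (-b)
    rw [map_neg, smul_neg] at h2
    rw [sub_eq_add_neg, h2, sub_neg_eq_add]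
  have hcj_smul : ∀ (zc : ℂ) (z : VC), cj (zc • z) = (starRingEnd ℂ) zc • cj z := by
    intro zc z
    have hre : ∀ (r : ℝ) (w : VC), (r : ℂ) • w = r • w := by
      intro r w
      rw [← Complex.coe_algebraMap, algebraMap_smul]
    have h1 : zc • z = zc.re • z + zc.im • (I • z) := by
      conv_lhs => rw [← Complex.re_add_im zc]
      rw [add_smul, mul_smul, hre, hre]
    have h2 : (starRingEnd ℂ) zc • cj z = zc.re • cj z - zc.im • (I • cj z) := by
      conv_lhs => rw [← Complex.re_add_im zc]
      rw [map_add, map_mul, Complex.conj_ofReal, Complex.conj_ofReal, Complex.conj_I,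
        add_smul, mul_smul, neg_smul, smul_neg, hre, hre, ← sub_eq_add_neg]
    rw [h1, map_add, map_smul, map_smul, hcjI, h2, smul_neg]
    abel
  -- σ vanishes when an argument is in K
  have hσK : ∀ v2 : Fin 2 → VC, (∃ i, v2 i ∈ (K : Set VC)) → σ v2 = 0 := by
    rintro v2 ⟨i, hi⟩
    have hv2 : v2 = ![v2 0, v2 1] := by
      funext i2; fin_cases i2 <;> rfl
    have hi2 : i = 0 ∨ i = 1 := by
      have := i.isLt
      rcases (show i.val = 0 ∨ i.val = 1 by omega) with h | h
      · left; exact Fin.ext h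
      · right; exact Fin.ext h
    rcases hi2 with rfl | rfl
    · rw [hv2]
      exact (hK (v2 0)).1 hi (v2 1)
    · rw [hv2, alt2_swap, (hK (v2 1)).1 hi (v2 0), neg_zero]
  -- the conjugate submodule
  set Kbar : Submodule ℂ VC :=
    { carrier := cj '' (K : Set VC)
      add_mem' := by
        rintro a b ⟨a1, ha, rfl⟩ ⟨b1, hb, rfl⟩
        exact ⟨a1 + b1, K.add_mem ha hb, map_add cj a1 b1⟩
      zero_mem' := ⟨0, K.zero_mem, map_zero cj⟩
      smul_mem' := by
        rintro c x ⟨a1, ha, rfl⟩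
        exact ⟨(starRingEnd ℂ) c • a1, K.smul_mem _ ha,
          by rw [hcj_smul ((starRingEnd ℂ) c) a1, Complex.conj_conj]⟩ } with hKbar
  have hKbar_mem : ∀ z : VC, z ∈ Kbar ↔ cj z ∈ K := by
    intro z
    constructor
    · rintro ⟨k, hk, rfl⟩
      rw [hcj_invol]
      exact hk
    · intro h
      exact ⟨cj z, h, hcj_invol z⟩
  -- σbar vanishes when an argument is in Kbar
  have hσbarK : ∀ v2 : Fin 2 → VC, (∃ i, v2 i ∈ (Kbar : Set VC)) → σbar v2 = 0 := by
    rintro v2 ⟨i, hi⟩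
    have hv2 : v2 = ![v2 0, v2 1] := by
      funext i2; fin_cases i2 <;> rfl
    have hi2 : i = 0 ∨ i = 1 := by
      have := i.isLt
      rcases (show i.val = 0 ∨ i.val = 1 by omega) with h | h
      · left; exact Fin.ext h
      · right; exact Fin.ext h
    rcases hi2 with rfl | rfl
    · rw [hv2, hσbar (v2 0) (v2 1), (hK (cj (v2 0))).1 ((hKbar_mem (v2 0)).1 hi) (cj (v2 1)),
        map_zero]
    · rw [hv2, hσbar (v2 0) (v2 1), alt2_swap,
        (hK (cj (v2 1))).1 ((hKbar_mem (v2 1)).1 hi) (cj (v2 0)), neg_zero, map_zero]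
  -- any element of K ∩ Kbar is zero
  have hOmega : ∀ x : VC, x ∈ K → x ∈ Kbar → x = 0 := by
    intro x hxK hxKb
    by_contra hx0
    apply hvol
    have hli : LinearIndepOn ℂ id ({x} : Set VC) :=
      LinearIndepOn.singleton (v := id) hx0
    set b := Module.Basis.extend hli with hb
    apply Module.Basis.ext_alternating b
    intro vfun hinj
    rw [AlternatingMap.zero_apply]
    have hcard : Fintype.card (hli.extend (Set.subset_univ ({x} : Set VC)))
        = Fintype.card (Fin (2*n + 2*n)) := by
      rw [Fintype.card_fin, ← Module.finrank_eq_card_basis b, hdimVC]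
      omega
    have hsurj : Function.Surjective vfun := by
      have hbij := (Fintype.bijective_iff_injective_and_card vfun).2 ⟨hinj, hcard.symm⟩
      exact hbij.2
    have hxmem : x ∈ hli.extend (Set.subset_univ ({x} : Set VC)) :=
      hli.subset_extend _ rfl
    obtain ⟨i0, hi0⟩ := hsurj ⟨x, hxmem⟩
    refine altWedge_eq_zero (S := (K : Set VC)) (T := (Kbar : Set VC)) _ _
      (altPow_eq_zero σ hσK n hn) (altPow_eq_zero σbar hσbarK n hn) _ ⟨i0, ?_, ?_⟩ <;>
      rw [hi0, hb, Module.Basis.extend_apply_self]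
    · exact hxK
    · exact hxKb
  -- finrank of Kbar equals that of K
  have hKtoKbar : ∀ k : VC, k ∈ K → cj k ∈ Kbar := fun k hk => ⟨k, hk, rfl⟩
  have hdimKbar : Module.finrank ℂ ↥Kbar = Module.finrank ℂ ↥K := by
    let cjK : ↥K →ₗ[ℝ] ↥Kbar :=
      { toFun := fun k => ⟨cj k.1, hKtoKbar k.1 k.2⟩
        map_add' := by intro a b; apply Subtype.ext; simp
        map_smul' := by intro r a; apply Subtype.ext; simp }
    have hbij : Function.Bijective cjK := by
      constructor
      · intro a b hab
        have h1 : cj a.1 = cj b.1 := congrArg Subtype.val hab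
        have h2 := congrArg cj h1
        rw [hcj_invol, hcj_invol] at h2
        exact Subtype.ext h2
      · rintro ⟨z, hz⟩
        obtain ⟨k, hk, hkz⟩ := (show z ∈ cj '' (K : Set VC) from hz)
        exact ⟨⟨k, hk⟩, Subtype.ext hkz⟩
    have hR : Module.finrank ℝ ↥K = Module.finrank ℝ ↥Kbar :=
      (LinearEquiv.ofBijective cjK hbij).finrank_eq
    have hK2 : Module.finrank ℝ ℂ * Module.finrank ℂ ↥K = Module.finrank ℝ ↥K :=
      Module.finrank_mul_finrank ℝ ℂ ↥K
    have hKb2 : Module.finrank ℝ ℂ * Module.finrank ℂ ↥Kbar = Module.finrank ℝ ↥Kbar :=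
      Module.finrank_mul_finrank ℝ ℂ ↥Kbar
    rw [finrank_real_complex] at hK2 hKb2
    omega
  have hsupinf := Submodule.finrank_sup_add_finrank_inf_eq K Kbar
  have hinf : K ⊓ Kbar = ⊥ := by
    rw [Submodule.eq_bot_iff]
    intro x hx
    exact hOmega x hx.1 hx.2
  rw [hinf, finrank_bot] at hsupinf
  have hsuple : Module.finrank ℂ ↥(K ⊔ Kbar) ≤ 4*n := by
    rw [← hdimVC]
    exact Submodule.finrank_le _
  have hupper : Module.finrank ℂ ↥K ≤ 2*n := by omega
  have hlower : 2*n ≤ Module.finrank ℂ ↥K := by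
    by_contra hlt
    push_neg at hlt
    obtain ⟨E, F, hEF, hEE, hFF⟩ := exists_symp_pairs σ K hK (n+1) (by rw [hdimVC]; omega)
    set x : ℕ → VC := fun l =>
      if h : l < 2*(n+1) then (if l % 2 = 0 then E ⟨l/2, by omega⟩ else F ⟨l/2, by omega⟩)
      else 0 with hxdef
    have hgram : ∀ p q : ℕ, p < q → q < 2*(n+1) →
        σ ![x p, x q] = if q = p+1 ∧ p % 2 = 0 then 1 else 0 := by
      intro p q hpq hq
      have hp : p < 2*(n+1) := by omega
      rw [hxdef]
      simp only [dif_pos hp, dif_pos hq]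
      by_cases hp2 : p % 2 = 0 <;> by_cases hq2 : q % 2 = 0
      · rw [if_pos hp2, if_pos hq2, hEE, if_neg (show ¬(q = p+1 ∧ p % 2 = 0) by omega)]
      · rw [if_pos hp2, if_neg hq2, hEF]
        rcases eq_or_ne (⟨p/2, by omega⟩ : Fin (n+1)) ⟨q/2, by omega⟩ with he | he
        · have hv : p/2 = q/2 := congrArg Fin.val he
          rw [if_pos he, if_pos (show q = p+1 ∧ p % 2 = 0 from ⟨by omega, hp2⟩)]
        · have hv : ¬(q = p+1 ∧ p % 2 = 0) := by
            rintro ⟨h1, _⟩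
            exact he (Fin.ext (show p/2 = q/2 by omega))
          rw [if_neg he, if_neg hv]
      · rw [if_neg hp2, if_pos hq2, alt2_swap, hEF,
          if_neg (show (⟨q/2, by omega⟩ : Fin (n+1)) ≠ ⟨p/2, by omega⟩ from fun he => by
            have hv : q/2 = p/2 := congrArg Fin.val he
            omega),
          neg_zero, if_neg (show ¬(q = p+1 ∧ p % 2 = 0) by omega)]
      · rw [if_neg hp2, if_neg hq2, hFF, if_neg (show ¬(q = p+1 ∧ p % 2 = 0) by omega)]
    have heval := altPow_std σ (n+1) x hgram (fun p => x p.val) (fun p => rfl)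
    rw [hpow, AlternatingMap.zero_apply] at heval
    exact (Nat.cast_ne_zero (R := ℂ)).2 (Nat.factorial_ne_zero (n+1)) heval.symm
  have hdimK : Module.finrank ℂ ↥K = 2*n := le_antisymm hupper hlower
  have hsup_top : K ⊔ Kbar = ⊤ := by
    apply Submodule.eq_top_of_finrank_eq
    rw [hdimVC]
    omega
  refine ⟨hdimK, ?_, ?_⟩
  · apply Set.eq_singleton_iff_unique_mem.2
    constructor
    · exact ⟨K.zero_mem, ⟨0, K.zero_mem, map_zero cj⟩⟩
    · rintro z ⟨hz1, hz2⟩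
      exact hOmega z hz1 hz2
  · intro z
    have hz : z ∈ K ⊔ Kbar := by rw [hsup_top]; exact Submodule.mem_top
    obtain ⟨a, ha, b', hb', rfl⟩ := Submodule.mem_sup.1 hz
    obtain ⟨b, hb, hbz⟩ := (show b' ∈ cj '' (K : Set VC) from hb')
    exact ⟨a, ha, b, hb, by rw [hbz]⟩
end

section
/- Let f : Y → X be a continuous, open, surjective map of topological spaces, where X is nonempty and connected, and assume that the set {x ∈ X : f⁻¹({x}) has exactly one element} is dense in X. Then Y is connected. -/
/-- if `f : Y → X` is continuous, open and surjective, `X` is nonempty and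
connected, and the set of points of `X` with exactly one preimage is dense in `X`, then
`Y` is connected. -/
theorem connected_of_open_surjective_generically_injective
    {X Y : Type*} [TopologicalSpace X] [TopologicalSpace Y]
    (f : Y → X) (hcont : Continuous f) (hopen : IsOpenMap f)
    (hsurj : Function.Surjective f)
    (hne : Nonempty X) (hconn : ConnectedSpace X)
    (hdense : Dense {x : X | ∃! y : Y, f y = x}) :
    ConnectedSpace Y := by
  have hneY : Nonempty Y := by
    obtain ⟨y, _⟩ := hsurj hne.some
    exact ⟨y⟩
  have hpc : PreconnectedSpace Y := ⟨?_⟩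
  · exact { toPreconnectedSpace := hpc, toNonempty := hneY }
  rintro u v hu hv hcover ⟨yu, _, hyu⟩ ⟨yv, _, hyv⟩
  -- f '' u and f '' v are open and cover X
  have hcoverX : Set.univ ⊆ f '' u ∪ f '' v := by
    intro x _
    obtain ⟨y, hy⟩ := hsurj x
    rcases hcover (Set.mem_univ y) with h | h
    · exact Or.inl ⟨y, h, hy⟩
    · exact Or.inr ⟨y, h, hy⟩
  have := (PreconnectedSpace.isPreconnected_univ (α := X)) (f '' u) (f '' v)
    (hopen u hu) (hopen v hv) hcoverX
    ⟨f yu, Set.mem_univ _, ⟨yu, hyu, rfl⟩⟩ ⟨f yv, Set.mem_univ _, ⟨yv, hyv, rfl⟩⟩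
  obtain ⟨x, _, hxu, hxv⟩ := this
  -- the intersection is open, so contains a point with unique preimage
  have hopenI : IsOpen (f '' u ∩ f '' v) := (hopen u hu).inter (hopen v hv)
  obtain ⟨z, hzuv, hz⟩ := hdense.inter_open_nonempty _ hopenI ⟨x, hxu, hxv⟩
  obtain ⟨hzu, hzv⟩ := hzuv
  obtain ⟨w, _, hwuniq⟩ := hz
  obtain ⟨y1, hy1u, hy1⟩ := hzu
  obtain ⟨y2, hy2v, hy2⟩ := hzv
  have h1 : y1 = w := hwuniq y1 hy1
  have h2 : y2 = w := hwuniq y2 hy2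
  exact ⟨w, Set.mem_univ _, h1 ▸ hy1u, h2 ▸ hy2v⟩
end

section
/- Let V be a finite-dimensional real vector space with a symmetric bilinear form q of signature (3, n−3), where n = dim V ≥ 4; let ℓ ∈ V be nonzero with q(ℓ,ℓ) = 0, and let p ∈ V_ℂ satisfy q(p,p) = 0, q(p,p̄) > 0 and q(p,ℓ) = 0. Then: (i) for every x ∈ V with q(x,x) > 0, the set {t ∈ ℂ : q(p + t·ℓ, x) = 0} has at most one element; (ii) for every countable set S ⊆ V with q(x,x) > 0 for all x ∈ S, the set {t ∈ ℂ : q(p + t·ℓ, x) ≠ 0 for every x ∈ S} has countable complement in ℂ; in particular it is nonempty and dense. -/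
open Complex

private lemma key_contradiction {V : Type*} [AddCommGroup V] [Module ℝ V] [FiniteDimensional ℝ V]
    (q : LinearMap.BilinForm ℝ V) (hsymm : ∀ x y : V, q x y = q y x)
    {m : ℕ} (hsig : HasSignature q 3 m)
    (a b x ℓ : V) (haa : 0 < q a a) (hbb : 0 < q b b) (hxx : 0 < q x x)
    (hab : q a b = 0) (hax : q a x = 0) (hbx : q b x = 0)
    (hal : q a ℓ = 0) (hbl : q b ℓ = 0) (hxl : q x ℓ = 0)
    (hll : q ℓ ℓ = 0) (hl0 : ℓ ≠ 0) : False := by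
  obtain ⟨P, N, hcompl, -, hP, -, -, hneg⟩ := hsig
  set π := P.linearProjOfIsCompl N hcompl with hπ
  let g : (Fin 4 → ℝ) →ₗ[ℝ] V :=
    { toFun := fun c => c 0 • a + c 1 • b + c 2 • x + c 3 • ℓ
      map_add' := fun c d => by simp [add_smul]; abel
      map_smul' := fun r c => by simp [smul_smul, smul_add] }
  have hginj : Function.Injective (π.comp g) := by
    rw [← LinearMap.ker_eq_bot, LinearMap.ker_eq_bot']
    intro c hc
    have hmem : g c ∈ N := by
      have := Submodule.linearProjOfIsCompl_apply_eq_zero_iff (p := P) (q := N) hcompl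
        (x := g c)
      exact (this).1 hc
    have hq : q (g c) (g c) = c 0 ^ 2 * q a a + c 1 ^ 2 * q b b + c 2 ^ 2 * q x x := by
      have hba : q b a = 0 := by rw [hsymm]; exact hab
      have hxa : q x a = 0 := by rw [hsymm]; exact hax
      have hxb : q x b = 0 := by rw [hsymm]; exact hbx
      have hla : q ℓ a = 0 := by rw [hsymm]; exact hal
      have hlb : q ℓ b = 0 := by rw [hsymm]; exact hbl
      have hlx : q ℓ x = 0 := by rw [hsymm]; exact hxl
      simp only [g, LinearMap.coe_mk, AddHom.coe_mk, map_add, map_smul, LinearMap.add_apply,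
        LinearMap.smul_apply, smul_eq_mul, hab, hax, hbx, hal, hbl, hxl, hba, hxa, hxb,
        hla, hlb, hlx, hll]
      ring
    have hg0 : g c = 0 := by
      by_contra h0
      have := hneg _ hmem h0
      nlinarith [sq_nonneg (c 0), sq_nonneg (c 1), sq_nonneg (c 2), this, hq]
    have hqa : q a (g c) = c 0 * q a a := by
      simp only [g, LinearMap.coe_mk, AddHom.coe_mk, map_add, map_smul, smul_eq_mul,
        hab, hax, hal]
      ring
    have hqb : q b (g c) = c 1 * q b b := by
      have hba : q b a = 0 := by rw [hsymm]; exact hab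
      simp only [g, LinearMap.coe_mk, AddHom.coe_mk, map_add, map_smul, smul_eq_mul,
        hba, hbx, hbl]
      ring
    have hqx : q x (g c) = c 2 * q x x := by
      have hxa : q x a = 0 := by rw [hsymm]; exact hax
      have hxb : q x b = 0 := by rw [hsymm]; exact hbx
      simp only [g, LinearMap.coe_mk, AddHom.coe_mk, map_add, map_smul, smul_eq_mul,
        hxa, hxb, hxl]
      ring
    have hc0 : c 0 = 0 := by
      have : c 0 * q a a = 0 := by rw [← hqa, hg0, map_zero]
      exact (mul_eq_zero.1 this).resolve_right (ne_of_gt haa)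
    have hc1 : c 1 = 0 := by
      have : c 1 * q b b = 0 := by rw [← hqb, hg0, map_zero]
      exact (mul_eq_zero.1 this).resolve_right (ne_of_gt hbb)
    have hc2 : c 2 = 0 := by
      have : c 2 * q x x = 0 := by rw [← hqx, hg0, map_zero]
      exact (mul_eq_zero.1 this).resolve_right (ne_of_gt hxx)
    have hc3 : c 3 = 0 := by
      have : c 3 • ℓ = 0 := by
        have := hg0
        simp only [g, LinearMap.coe_mk, AddHom.coe_mk, hc0, hc1, hc2, zero_smul,
          zero_add] at this
        exact this
      rcases smul_eq_zero.1 this with h | h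
      · exact h
      · exact absurd h hl0
    funext i
    fin_cases i <;> assumption
  have h43 : (4 : ℕ) ≤ 3 := by
    have := LinearMap.finrank_le_finrank_of_injective hginj
    simpa [hP] using this
  omega

/-- for `q` of signature `(3, n-3)` on `V`, `n = dim V ≥ 4`, `ℓ ≠ 0`
isotropic, and `p ∈ V_ℂ` with `q(p,p) = 0`, `q(p,p̄) > 0`, `q(p,ℓ) = 0`:
(i) for every `x ∈ V` with `q(x,x) > 0` the set `{t ∈ ℂ : q(p + t·ℓ, x) = 0}` has at
most one element; (ii) for every countable `S ⊆ V` of `q`-positive vectors, the set of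
`t ∈ ℂ` with `q(p + t·ℓ, x) ≠ 0` for every `x ∈ S` has countable complement, and is
nonempty and dense. Here `VC` is the complexification of `V`, with real points `j`,
conjugation `cj`, and `Q` the ℂ-bilinear extension of `q`. -/
theorem very_general_point_on_twistor_line
    {V : Type*} [AddCommGroup V] [Module ℝ V] [FiniteDimensional ℝ V]
    (q : LinearMap.BilinForm ℝ V) (hsymm : ∀ x y : V, q x y = q y x)
    (n : ℕ) (hn : Module.finrank ℝ V = n) (hn4 : 4 ≤ n)
    (hsig : HasSignature q 3 (n - 3))
    {VC : Type*} [AddCommGroup VC] [Module ℂ VC]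
    (j : V →ₗ[ℝ] VC)
    (hspan : ∀ z : VC, ∃ a b : V, z = j a + I • j b)
    (hindep : ∀ a b : V, j a + I • j b = 0 → a = 0 ∧ b = 0)
    (cj : VC →ₗ[ℝ] VC)
    (hcj : ∀ a b : V, cj (j a + I • j b) = j a - I • j b)
    (Q : LinearMap.BilinForm ℂ VC)
    (hQ : ∀ a b : V, Q (j a) (j b) = (q a b : ℂ))
    (ℓ : V) (hl0 : ℓ ≠ 0) (hll : q ℓ ℓ = 0)
    (p : VC) (hpp : Q p p = 0)
    (hpos : 0 < (Q p (cj p)).re) (him : (Q p (cj p)).im = 0)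
    (hpl : Q p (j ℓ) = 0) :
    (∀ x : V, 0 < q x x →
      Set.Subsingleton {t : ℂ | Q (p + t • j ℓ) (j x) = 0}) ∧
    (∀ S : Set V, S.Countable → (∀ x ∈ S, 0 < q x x) →
      Set.Countable {t : ℂ | ∀ x ∈ S, Q (p + t • j ℓ) (j x) ≠ 0}ᶜ ∧
      Set.Nonempty {t : ℂ | ∀ x ∈ S, Q (p + t • j ℓ) (j x) ≠ 0} ∧
      Dense {t : ℂ | ∀ x ∈ S, Q (p + t • j ℓ) (j x) ≠ 0}) := by
  obtain ⟨a, b, hp⟩ := hspan p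
  -- basic expansions
  have hQsmul : ∀ (c : ℂ) (u v : VC), Q (c • u) v = c * Q u v := fun c u v => by
    simp [map_smul]
  have hQsmul' : ∀ (c : ℂ) (u v : VC), Q u (c • v) = c * Q u v := fun c u v => by
    simp [map_smul]
  -- q values between a and b
  have hQpp : Q p p = (q a a : ℂ) - (q b b : ℂ) + I * ((q a b : ℂ) + (q b a : ℂ)) := by
    rw [hp]
    simp only [map_add, map_smul, LinearMap.add_apply, LinearMap.smul_apply, smul_eq_mul, hQ]
    ring_nf
    rw [Complex.I_sq]
    ring
  have hba : q b a = q a b := hsymm b a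
  have hab0 : q a b = 0 := by
    have h := hpp
    rw [hQpp, hba] at h
    have him' := congrArg Complex.im h
    simp at him'
    linarith [him']
  have haabb : q a a = q b b := by
    have h := hpp
    rw [hQpp, hba, hab0] at h
    have hre := congrArg Complex.re h
    simp at hre
    linarith [hre]
  have hQpcj : Q p (cj p) = (q a a : ℂ) + (q b b : ℂ) + I * ((q b a : ℂ) - (q a b : ℂ)) := by
    rw [hp, hcj a b]
    simp only [map_add, map_sub, map_smul, LinearMap.add_apply, LinearMap.sub_apply,
      LinearMap.smul_apply, smul_eq_mul, hQ]
    ring_nf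
    rw [Complex.I_sq]
    ring
  have haa : 0 < q a a := by
    have h := hpos
    rw [hQpcj, hba, hab0] at h
    simp at h
    linarith [haabb, h]
  have hbb : 0 < q b b := haabb ▸ haa
  have hal : q a ℓ = 0 ∧ q b ℓ = 0 := by
    have h := hpl
    rw [hp] at h
    simp only [map_add, map_smul, LinearMap.add_apply, LinearMap.smul_apply, smul_eq_mul,
      hQ] at h
    constructor
    · have := congrArg Complex.re h; simpa using this
    · have := congrArg Complex.im h; simpa using this
  -- the affine expansion
  have hexp : ∀ (t : ℂ) (x : V),
      Q (p + t • j ℓ) (j x) = ((q a x : ℂ) + I * (q b x : ℂ)) + t * (q ℓ x : ℂ) := by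
    intro t x
    rw [hp]
    simp only [map_add, map_smul, LinearMap.add_apply, LinearMap.smul_apply, smul_eq_mul, hQ]
  -- part (i)
  have part1 : ∀ x : V, 0 < q x x →
      Set.Subsingleton {t : ℂ | Q (p + t • j ℓ) (j x) = 0} := by
    intro x hxx t1 ht1 t2 ht2
    simp only [Set.mem_setOf_eq, hexp] at ht1 ht2
    by_cases hlx : q ℓ x = 0
    · exfalso
      rw [hlx] at ht1
      simp only [Complex.ofReal_zero, mul_zero, add_zero] at ht1
      have hax : q a x = 0 := by
        have := congrArg Complex.re ht1; simpa using this
      have hbx : q b x = 0 := by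
        have := congrArg Complex.im ht1; simpa using this
      have hxl : q x ℓ = 0 := by rw [hsymm]; exact hlx
      exact key_contradiction q hsymm hsig a b x ℓ haa hbb hxx hab0 hax hbx
        hal.1 hal.2 hxl hll hl0
    · have hsub : (t1 - t2) * (q ℓ x : ℂ) = 0 := by linear_combination ht1 - ht2
      have hc : (q ℓ x : ℂ) ≠ 0 := by simpa using hlx
      exact sub_eq_zero.1 ((mul_eq_zero.1 hsub).resolve_right hc)
  refine ⟨part1, ?_⟩
  intro S hS hSpos
  have hcompl : {t : ℂ | ∀ x ∈ S, Q (p + t • j ℓ) (j x) ≠ 0}ᶜ =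
      ⋃ x ∈ S, {t : ℂ | Q (p + t • j ℓ) (j x) = 0} := by
    ext t
    simp [not_forall]
  have hcount : Set.Countable {t : ℂ | ∀ x ∈ S, Q (p + t • j ℓ) (j x) ≠ 0}ᶜ := by
    rw [hcompl]
    exact hS.biUnion fun x hx => (part1 x (hSpos x hx)).countable
  have hdense : Dense {t : ℂ | ∀ x ∈ S, Q (p + t • j ℓ) (j x) ≠ 0} := by
    have := hcount.dense_compl ℂ
    rwa [compl_compl] at this
  exact ⟨hcount, hdense.nonempty, hdense⟩
end

section
/- Let Λ be a free ℤ-module of finite rank equipped with a nondegenerate symmetric bilinear form q : Λ × Λ → ℤ, and let ℓ ∈ Λ be nonzero with q(ℓ,ℓ) = 0. Let O(Λ,q) denote the group of ℤ-linear automorphisms of Λ preserving q, and let Γ ≤ O(Λ,q) be a subgroup of finite index. Let S ⊆ Λ be a Γ-invariant subset such that every x ∈ S satisfies q(x,ℓ) = 0 and x is not a rational multiple of ℓ. Then S is either empty or infinite. -/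
/-- let `Λ` be a lattice (free ℤ-module of finite rank) with a
nondegenerate symmetric bilinear form `q`, `ℓ ≠ 0` isotropic, `O` the orthogonal group
of `(Λ, q)`, `Γ ≤ O` of finite index, and `S ⊆ Λ` a `Γ`-invariant set of vectors
orthogonal to `ℓ` and not rational multiples of `ℓ`. Then `S` is empty or infinite. -/
theorem invariant_set_empty_or_infinite
    {Λ : Type*} [AddCommGroup Λ] [Module ℤ Λ] [Module.Free ℤ Λ] [Module.Finite ℤ Λ]
    (q : LinearMap.BilinForm ℤ Λ) (hsymm : ∀ x y : Λ, q x y = q y x)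
    (hnd : ∀ x : Λ, (∀ y : Λ, q x y = 0) → x = 0)
    (ℓ : Λ) (hl0 : ℓ ≠ 0) (hll : q ℓ ℓ = 0)
    (O Γ : Subgroup (Λ ≃ₗ[ℤ] Λ))
    (hO : ∀ g : Λ ≃ₗ[ℤ] Λ, g ∈ O ↔ ∀ x y : Λ, q (g x) (g y) = q x y)
    (hle : Γ ≤ O) (hfin : Γ.relIndex O ≠ 0)
    (S : Set Λ) (hinv : ∀ g ∈ Γ, ∀ x ∈ S, g x ∈ S)
    (horth : ∀ x ∈ S, q ℓ x = 0)
    (hnm : ∀ x ∈ S, ¬ ∃ (a b : ℤ), b ≠ 0 ∧ b • x = a • ℓ) :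
    S = ∅ ∨ S.Infinite := by
  rcases S.eq_empty_or_nonempty with hS | ⟨x, hx⟩
  · exact Or.inl hS
  right
  have hbridge := Int.cast_smul_eq_zsmul (R := ℤ) (M := Λ)
  simp only [Int.cast_id] at hbridge
  have hqs : ∀ (n : ℤ) (u v : Λ), q (n • u) v = n * q u v := fun n u v => by
    rw [map_zsmul]; simp
  have hqs' : ∀ (n : ℤ) (u v : Λ), q u (n • v) = n * q u v := fun n u v => by
    rw [map_zsmul]; simp
  have hxl : q ℓ x = 0 := horth x hx
  -- there is z with q ℓ z ≠ 0 (nondegeneracy)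
  obtain ⟨z, hz⟩ : ∃ z, q ℓ z ≠ 0 := by
    by_contra hcon
    push_neg at hcon
    exact hl0 (hnd ℓ hcon)
  -- torsion-freeness substitute
  have htf : ∀ n : ℤ, n • ℓ = 0 → n = 0 := by
    intro n hn
    have h1 : q (n • ℓ) z = 0 := by rw [hn]; simp
    rw [hqs] at h1
    rcases mul_eq_zero.mp h1 with h | h
    · exact h
    · exact absurd h hz
  -- Step 1: find w orthogonal to ℓ but not to x
  obtain ⟨w, hlw, hxw⟩ : ∃ w : Λ, q ℓ w = 0 ∧ q x w ≠ 0 := by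
    by_contra hcon
    push_neg at hcon
    apply hnm x hx
    have hprin : (LinearMap.range (q ℓ)).IsPrincipal := inferInstance
    set d : ℤ := Submodule.IsPrincipal.generator (LinearMap.range (q ℓ)) with hdd
    obtain ⟨y₀, hy₀⟩ := Submodule.IsPrincipal.generator_mem (LinearMap.range (q ℓ))
    have hmem : ∀ y : Λ, ∃ m : ℤ, q ℓ y = m * d := by
      intro y
      have h1 : q ℓ y ∈ LinearMap.range (q ℓ) := ⟨y, rfl⟩
      rw [← Submodule.IsPrincipal.span_singleton_generator (LinearMap.range (q ℓ)),
        Submodule.mem_span_singleton] at h1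
      obtain ⟨m, hm⟩ := h1
      exact ⟨m, by rw [← hm]; simp [mul_comm, hdd]⟩
    have hd0 : d ≠ 0 := by
      intro h0
      apply hl0
      apply hnd
      intro y
      obtain ⟨m, hm⟩ := hmem y
      rw [hm, h0, mul_zero]
    refine ⟨q x y₀, d, hd0, ?_⟩
    have hkey : d • x - (q x y₀) • ℓ = 0 := by
      apply hnd
      intro y
      obtain ⟨m, hm⟩ := hmem y
      have h1 : q ℓ (y - m • y₀) = 0 := by
        rw [map_sub, map_zsmul, hy₀, hm]; simp [mul_comm, hdd]
      have h2 : q x (y - m • y₀) = 0 := hcon _ h1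
      rw [map_sub, map_zsmul, smul_eq_mul, sub_eq_zero] at h2
      rw [map_sub, LinearMap.sub_apply, hqs, hqs, hm, h2]
      ring
    rw [sub_eq_zero] at hkey
    exact hkey
  -- Step 2: the Eichler-type transvection
  obtain ⟨w2, hw2⟩ : ∃ v : Λ, v = (2 : ℤ) • w := ⟨_, rfl⟩
  obtain ⟨c, hc⟩ : ∃ c : ℤ, c = 2 * q w w := ⟨_, rfl⟩
  have hlw2 : q ℓ w2 = 0 := by rw [hw2, hqs', hlw, mul_zero]
  have hw2l : q w2 ℓ = 0 := (hsymm _ _).trans hlw2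
  have hw2w2 : q w2 w2 = 2 * c := by rw [hw2, hqs, hqs', hc]; try ring
  have hb0 : q w2 x ≠ 0 := by
    rw [hsymm, hw2, hqs']
    exact mul_ne_zero two_ne_zero hxw
  obtain ⟨T, hTO, hTact⟩ : ∃ T : Λ ≃ₗ[ℤ] Λ, T ∈ O ∧
      ∀ y, q ℓ y = 0 → T y = y - (q w2 y) • ℓ := by
    haveI := @IsScalarTower.left ℤ Λ _ ‹Module ℤ Λ›.toMulAction
    refine ⟨LinearEquiv.ofLinear
      (LinearMap.id + (q ℓ).smulRight w2 - ((q w2) + c • (q ℓ)).smulRight ℓ)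
      (LinearMap.id - (q ℓ).smulRight w2 - (((-(q w2))) + c • (q ℓ)).smulRight ℓ)
      ?_ ?_, ?_, ?_⟩
    · ext y
      simp only [LinearMap.coe_comp, Function.comp_apply, LinearMap.sub_apply,
        LinearMap.add_apply, LinearMap.id_coe, id_eq, LinearMap.smulRight_apply,
        LinearMap.smul_apply, LinearMap.neg_apply, map_add, map_sub, map_smul,
        smul_eq_mul, hll, hlw2, hw2l, hw2w2, LinearMap.id_apply]
      module
    · ext y
      simp only [LinearMap.coe_comp, Function.comp_apply, LinearMap.sub_apply,
        LinearMap.add_apply, LinearMap.id_coe, id_eq, LinearMap.smulRight_apply,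
        LinearMap.smul_apply, LinearMap.neg_apply, map_add, map_sub, map_smul,
        smul_eq_mul, hll, hlw2, hw2l, hw2w2, LinearMap.id_apply]
      module
    · rw [hO]
      intro u v
      simp only [LinearEquiv.ofLinear_apply, LinearMap.sub_apply, LinearMap.add_apply,
        LinearMap.id_apply, LinearMap.smulRight_apply, LinearMap.smul_apply,
        map_add, map_sub, map_smul, smul_eq_mul, hll, hlw2, hw2l, hw2w2]
      rw [hsymm u w2, hsymm u ℓ]
      ring
    · intro y hy
      simp only [LinearEquiv.ofLinear_apply, LinearMap.sub_apply, LinearMap.add_apply,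
        LinearMap.id_apply, LinearMap.smulRight_apply, LinearMap.smul_apply,
        smul_eq_mul, hy, hbridge]
      simp [hbridge]
  -- Step 3: a power of T lies in Γ
  have hfinQ : Finite (O ⧸ Γ.subgroupOf O) := Nat.finite_of_card_ne_zero hfin
  set Te : O := ⟨T, hTO⟩ with hTe
  obtain ⟨m, n, hlt, heq⟩ : ∃ m n : ℕ, m < n ∧
      (QuotientGroup.mk (Te ^ m) : O ⧸ Γ.subgroupOf O) = QuotientGroup.mk (Te ^ n) := by
    obtain ⟨m, n, hmn, heq⟩ := Finite.exists_ne_map_eq_of_infinite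
      (f := fun j : ℕ => (QuotientGroup.mk (Te ^ j) : O ⧸ Γ.subgroupOf O))
    rcases hmn.lt_or_gt with h | h
    · exact ⟨m, n, h, heq⟩
    · exact ⟨n, m, h, heq.symm⟩
  set k : ℕ := n - m with hkdef
  have hk0 : 0 < k := by omega
  have hkmem : Te ^ k ∈ Γ.subgroupOf O := by
    have h2 := QuotientGroup.eq.mp heq
    have h3 : (Te ^ m)⁻¹ * Te ^ n = Te ^ k := by
      have : Te ^ n = Te ^ m * Te ^ k := by
        rw [← pow_add]
        congr 1
        omega
      rw [this, inv_mul_cancel_left]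
    rwa [h3] at h2
  have hgΓ : (T ^ k : Λ ≃ₗ[ℤ] Λ) ∈ Γ := by
    have h4 := Subgroup.mem_subgroupOf.mp hkmem
    simpa [hTe] using h4
  -- Step 4: the orbit formula
  set b : ℤ := q w2 x with hbdef
  have key : ∀ j : ℕ, (T ^ j) x = x - ((j : ℤ) * b) • ℓ := by
    intro j
    induction j with
    | zero => simp
    | succ j ih =>
      have happ : (T ^ (j + 1)) x = T ((T ^ j) x) := by
        rw [pow_succ']
        rfl
      rw [happ, ih]
      have h0 : q ℓ (x - ((j : ℤ) * b) • ℓ) = 0 := by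
        rw [map_sub, hqs', hxl, hll]; ring
      rw [hTact _ h0]
      have h1 : q w2 (x - ((j : ℤ) * b) • ℓ) = b := by
        rw [map_sub, hqs', hw2l, ← hbdef]; ring
      rw [h1]
      have h2 : ((j + 1 : ℕ) : ℤ) * b = (j : ℤ) * b + b := by push_cast; ring
      rw [h2, add_zsmul, sub_sub]
  -- Step 5: conclusion
  have hmemS : ∀ j : ℕ, ((T ^ k) ^ j) x ∈ S := by
    intro j
    induction j with
    | zero => simpa using hx
    | succ j ih =>
      have happ : ((T ^ k) ^ (j + 1)) x = (T ^ k) (((T ^ k) ^ j) x) := by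
        rw [pow_succ']
        rfl
      rw [happ]
      exact hinv _ hgΓ _ ih
  have hform : ∀ j : ℕ, ((T ^ k) ^ j) x = x - (((k * j : ℕ) : ℤ) * b) • ℓ := by
    intro j
    rw [← pow_mul]
    exact key (k * j)
  apply Set.infinite_of_injective_forall_mem
    (f := fun j : ℕ => ((T ^ k) ^ j) x) ?_ hmemS
  · intro i j hij
    have hij' : ((T ^ k) ^ i) x = ((T ^ k) ^ j) x := hij
    rw [hform i, hform j, sub_right_inj] at hij'
    rename' hij' => hij
    have h5 : (((k * i : ℕ) : ℤ) * b - ((k * j : ℕ) : ℤ) * b) • ℓ = 0 := by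
      rw [sub_zsmul, hij]; simp
    have h6 := htf _ h5
    have h7 : ((k * i : ℕ) : ℤ) * b = ((k * j : ℕ) : ℤ) * b := by linarith [h6]
    have h8 := mul_right_cancel₀ hb0 h7
    have h9 : k * i = k * j := by exact_mod_cast h8
    exact Nat.eq_of_mul_eq_mul_left hk0 h9
end
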